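/- arXiv:2508.03916 — 9 statements merged into one kernel-verified Lean document; each statement's English description precedes it below -/
import Mathlib

section
/- Let L ⊇ k be a field extension with [L : k] = q, where q is a prime number. Let n = p·m be a positive integer, where p is a prime number with p ≠ q and m is a positive integer. Let θ ∈ L be an element such that θ^n ∈ k. Then θ^n is a p-th power in k, i.e., there exists β ∈ k with θ^n = β^p. -/
open Polynomial

/-- Let `L ⊇ k` be a field extension with `[L : k] = q`, where `q` is a prime number.
Let `n = p * m` be a positive integer, where `p` is a prime with `p ≠ q` and `m` a positive
integer. Let `θ ∈ L` with `θ^n ∈ k`. Then `θ^n` is a `p`-th power in `k`. -/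
theorem stmt_1 {k L : Type*} [Field k] [Field L] [Algebra k L]
    (q p m : ℕ) (hq : q.Prime) (hp : p.Prime) (hpq : p ≠ q) (hm : 0 < m)
    (hdeg : Module.finrank k L = q)
    (θ : L) (hθ : θ ^ (p * m) ∈ Set.range (algebraMap k L)) :
    ∃ β : k, θ ^ (p * m) = algebraMap k L (β ^ p) := by
  obtain ⟨α, hα⟩ := hθ
  have hfd : FiniteDimensional k L := by
    apply FiniteDimensional.of_finrank_pos
    rw [hdeg]; exact hq.pos
  set x : L := θ ^ m with hx
  have hxp : x ^ p = algebraMap k L α := by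
    rw [hx, ← pow_mul, mul_comm]; exact hα.symm
  have hint : IsIntegral k x := IsIntegral.of_finite k x
  have hdvd : (minpoly k x).natDegree ∣ q := hdeg ▸ minpoly.degree_dvd hint
  rcases (Nat.Prime.eq_one_or_self_of_dvd hq _ hdvd) with h1 | h1
  · -- x ∈ k
    obtain ⟨β, hβ⟩ := (minpoly.natDegree_eq_one_iff).mp h1
    exact ⟨β, by rw [mul_comm, pow_mul, ← hx, ← hβ, map_pow]⟩
  · -- minpoly degree = q; show α must be a p-th power
    by_contra hcon
    push_neg at hcon
    have ha : ∀ b : k, b ^ p ≠ α := by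
      intro b hb
      exact hcon b (by rw [hb, hα])
    have hirr := X_pow_sub_C_irreducible_of_prime hp ha
    have hroot : Polynomial.aeval x (X ^ p - C α : k[X]) = 0 := by
      simp [hxp]
    have := minpoly.eq_of_irreducible_of_monic hirr hroot (monic_X_pow_sub_C α hp.ne_zero)
    have : (minpoly k x).natDegree = p := by
      rw [← this, natDegree_X_pow_sub_C]
    omega
end

section
/- Let k ⊆ L be a finite Galois extension of fields with k ≠ L, and let t be a transcendental variable. Consider the induced extension of rational function fields k(t) ⊆ L(t). Then the element t is not in the image of the field norm Nm_{L(t)/k(t)} : L(t)* → k(t)*. In particular, the norm map Nm_{L(t)/k(t)} is not surjective. -/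
open scoped nonZeroDivisors

/-- The natural ring homomorphism `k(t) →+* L(t)` induced by a field extension `k ⊆ L`. -/
noncomputable def ratFuncMapRingHom (k L : Type*) [Field k] [Field L] [Algebra k L] :
    RatFunc k →+* RatFunc L :=
  RatFunc.mapRingHom (Polynomial.mapRingHom (algebraMap k L)) (by
    intro x hx
    simp only [Submonoid.mem_comap, Polynomial.coe_mapRingHom]
    rw [mem_nonZeroDivisors_iff_ne_zero] at hx ⊢
    simpa [Polynomial.map_eq_zero_iff (algebraMap k L).injective] using hx)

/-- The induced algebra structure of `L(t)` over `k(t)`. -/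
noncomputable instance ratFuncAlgebra (k L : Type*) [Field k] [Field L] [Algebra k L] :
    Algebra (RatFunc k) (RatFunc L) :=
  (ratFuncMapRingHom k L).toAlgebra

set_option maxHeartbeats 1000000
set_option synthInstance.maxHeartbeats 400000

namespace NormAux

open Polynomial

variable {K M N : Type*} [Field K] [Field M] [Field N]

theorem nzd (φ : K →+* M) : K[X]⁰ ≤ M[X]⁰.comap (Polynomial.mapRingHom φ) := by
  intro x hx
  simp only [Submonoid.mem_comap, Polynomial.coe_mapRingHom]
  rw [mem_nonZeroDivisors_iff_ne_zero] at hx ⊢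
  simpa [Polynomial.map_eq_zero_iff φ.injective] using hx

/-- map on rational function fields induced by a field hom -/
noncomputable def rmap (φ : K →+* M) : RatFunc K →+* RatFunc M :=
  RatFunc.mapRingHom (Polynomial.mapRingHom φ) (nzd φ)

theorem rmap_div (φ : K →+* M) (p q : K[X]) :
    rmap φ (algebraMap _ _ p / algebraMap _ _ q) =
      algebraMap _ _ (p.map φ) / algebraMap _ _ (q.map φ) := by
  have := RatFunc.map_apply_div (Polynomial.mapRingHom φ) (nzd φ) p q
  simp only [Polynomial.coe_mapRingHom] at this
  exact this

theorem rmap_poly (φ : K →+* M) (p : K[X]) :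
    rmap φ (algebraMap _ _ p) = algebraMap _ _ (p.map φ) := by
  simpa using rmap_div φ p 1

theorem rmap_C (φ : K →+* M) (a : K) : rmap φ (RatFunc.C a) = RatFunc.C (φ a) := by
  rw [← RatFunc.algebraMap_C, rmap_poly, Polynomial.map_C, RatFunc.algebraMap_C]

theorem rmap_X (φ : K →+* M) : rmap φ RatFunc.X = RatFunc.X := by
  rw [← RatFunc.algebraMap_X, rmap_poly, Polynomial.map_X, RatFunc.algebraMap_X]

theorem rmap_rmap (φ : K →+* M) (ψ : M →+* N) (f : RatFunc K) :
    rmap ψ (rmap φ f) = rmap (ψ.comp φ) f := by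
  conv_lhs => rw [← RatFunc.num_div_denom f]
  conv_rhs => rw [← RatFunc.num_div_denom f]
  rw [rmap_div, rmap_div, rmap_div, Polynomial.map_map, Polynomial.map_map]

theorem rmap_id (f : RatFunc K) : rmap (RingHom.id K) f = f := by
  conv_lhs => rw [← RatFunc.num_div_denom f]
  rw [rmap_div, Polynomial.map_id, Polynomial.map_id, RatFunc.num_div_denom]

theorem rmap_injective (φ : K →+* M) : Function.Injective (rmap φ) := by
  have : Function.Injective (Polynomial.mapRingHom φ) := by
    intro a b h
    exact Polynomial.map_injective φ φ.injective h
  exact RatFunc.map_injective _ (nzd φ) this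

theorem rmap_ne_zero (φ : K →+* M) {f : RatFunc K} (hf : f ≠ 0) : rmap φ f ≠ 0 := by
  intro h
  exact hf (rmap_injective φ (by rw [h, map_zero]))

theorem intDegree_div (p q : K[X]) (hp : p ≠ 0) (hq : q ≠ 0) :
    (algebraMap K[X] (RatFunc K) p / algebraMap _ _ q).intDegree =
      (p.natDegree : ℤ) - q.natDegree := by
  have hp' : algebraMap K[X] (RatFunc K) p ≠ 0 := by
    simpa using (RatFunc.algebraMap_ne_zero hp)
  have hq' : algebraMap K[X] (RatFunc K) q ≠ 0 := by
    simpa using (RatFunc.algebraMap_ne_zero hq)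
  have hx : algebraMap K[X] (RatFunc K) p / algebraMap _ _ q ≠ 0 := div_ne_zero hp' hq'
  have h := RatFunc.intDegree_mul hx hq'
  rw [div_mul_cancel₀ _ hq', RatFunc.intDegree_polynomial, RatFunc.intDegree_polynomial] at h
  omega

theorem rmap_intDegree (φ : K →+* M) (f : RatFunc K) :
    (rmap φ f).intDegree = f.intDegree := by
  by_cases hf : f = 0
  · simp [hf]
  · have h1 : f.num.map φ ≠ 0 := by
      simpa [Polynomial.map_eq_zero_iff φ.injective] using RatFunc.num_ne_zero hf
    have h2 : f.denom.map φ ≠ 0 := by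
      simpa [Polynomial.map_eq_zero_iff φ.injective] using f.denom_ne_zero
    conv_lhs => rw [← RatFunc.num_div_denom f, rmap_div]
    rw [intDegree_div _ _ h1 h2, Polynomial.natDegree_map_eq_of_injective φ.injective,
      Polynomial.natDegree_map_eq_of_injective φ.injective, RatFunc.intDegree]

end NormAux

namespace NormAux

open Polynomial

section Galois

variable {k L : Type*} [Field k] [Field L] [Algebra k L]

theorem algebraMap_eq : (algebraMap (RatFunc k) (RatFunc L)) = rmap (algebraMap k L) := rfl

/-- coercion of an algebra equivalence to a ring hom -/
def rh (σ : L ≃ₐ[k] L) : L →+* L := (σ : L →ₐ[k] L).toRingHom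

theorem rh_comp (σ τ : L ≃ₐ[k] L) : (rh σ).comp (rh τ) = rh (σ * τ) := rfl

theorem rmap_comp_inv (σ : L ≃ₐ[k] L) :
    (rmap (rh σ.symm)).comp (rmap (rh σ)) = RingHom.id (RatFunc L) := by
  ext f
  rw [RingHom.comp_apply, rmap_rmap]
  have h : (rh σ.symm).comp (rh σ) = RingHom.id L := RingHom.ext fun x => by simp [rh]
  rw [h, rmap_id, RingHom.id_apply]

/-- Lift of an automorphism of `L/k` to `L(t)/k(t)`. -/
noncomputable def liftAut (σ : L ≃ₐ[k] L) : RatFunc L ≃ₐ[RatFunc k] RatFunc L :=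
  AlgEquiv.ofRingEquiv (f := RingEquiv.ofRingHom (rmap (rh σ)) (rmap (rh σ.symm))
    (by simpa using rmap_comp_inv σ.symm) (rmap_comp_inv σ))
    (fun x => by
      show rmap (rh σ) (algebraMap _ _ x) = algebraMap _ _ x
      rw [algebraMap_eq, rmap_rmap]
      have h : (rh σ).comp (algebraMap k L) = algebraMap k L :=
        RingHom.ext fun a => σ.commutes a
      rw [h])

theorem liftAut_apply (σ : L ≃ₐ[k] L) (f : RatFunc L) : liftAut σ f = rmap (rh σ) f := rfl

theorem liftAut_injective : Function.Injective (liftAut : (L ≃ₐ[k] L) → _) := by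
  intro σ τ h
  ext c
  have h2 : liftAut σ (RatFunc.C c) = liftAut τ (RatFunc.C c) := by rw [h]
  rw [liftAut_apply, liftAut_apply, rmap_C, rmap_C] at h2
  exact RatFunc.C.injective h2

end Galois

end NormAux

namespace NormAux

open Polynomial Module

section Span

variable {k L : Type*} [Field k] [Field L] [Algebra k L]
  [FiniteDimensional k L] [IsGalois k L]

theorem exists_clear_denom (f : RatFunc L) :
    ∃ (p : L[X]) (q : k[X]), q ≠ 0 ∧
      f = (algebraMap k[X] (RatFunc k) q)⁻¹ • (algebraMap L[X] (RatFunc L) p) := by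
  classical
  set d := f.denom with hd
  set P : L[X] := ∏ σ : L ≃ₐ[k] L, d.map (rh σ) with hPdef
  have hP0 : P ≠ 0 := by
    apply Finset.prod_ne_zero_iff.mpr
    intro σ _
    simpa [Polynomial.map_eq_zero_iff (rh σ).injective] using f.denom_ne_zero
  have hdvd : d ∣ P := by
    have h1 := Finset.dvd_prod_of_mem (fun σ : L ≃ₐ[k] L => d.map (rh σ)) (Finset.mem_univ 1)
    have h2 : d.map (rh (1 : L ≃ₐ[k] L)) = d := by
      have : rh (1 : L ≃ₐ[k] L) = RingHom.id L := rfl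
      rw [this, Polynomial.map_id]
    have h3 : d.map (rh (1 : L ≃ₐ[k] L)) ∣ P := h1
    rwa [h2] at h3
  obtain ⟨R, hR⟩ := hdvd
  -- P is fixed by every automorphism
  have hfix : ∀ τ : L ≃ₐ[k] L, P.map (rh τ) = P := by
    intro τ
    rw [hPdef, ← Polynomial.coe_mapRingHom, map_prod]
    refine Fintype.prod_equiv (Equiv.mulLeft τ) _ _ fun σ => ?_
    simp only [Polynomial.coe_mapRingHom, Polynomial.map_map]
    congr 1
  have hcoeff : ∀ n, P.coeff n ∈ Set.range (algebraMap k L) := by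
    intro n
    have hfixc : ∀ τ : L ≃ₐ[k] L, τ (P.coeff n) = P.coeff n := by
      intro τ
      have := congrArg (fun g => g.coeff n) (hfix τ)
      simp [Polynomial.coeff_map] at this
      exact this
    have hbot : IntermediateField.fixedField (⊤ : Subgroup (L ≃ₐ[k] L)) = ⊥ :=
      ((IsGalois.tfae (F := k) (E := L)).out 0 1).mp (inferInstance : IsGalois k L)
    have hmem : P.coeff n ∈ IntermediateField.fixedField (⊤ : Subgroup (L ≃ₐ[k] L)) := by
      intro g
      exact hfixc g.1
    rw [hbot] at hmem
    exact IntermediateField.mem_bot.mp hmem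
  obtain ⟨q, hq⟩ : ∃ q : k[X], q.map (algebraMap k L) = P := by
    have := (Polynomial.lifts_iff_coeff_lifts P).mpr hcoeff
    exact (Polynomial.mem_lifts P).mp this
  have hq0 : q ≠ 0 := by
    rintro rfl
    rw [Polynomial.map_zero] at hq
    exact hP0 hq.symm
  refine ⟨f.num * R, q, hq0, ?_⟩
  have hmapq : (algebraMap (RatFunc k) (RatFunc L)) (algebraMap k[X] (RatFunc k) q) =
      algebraMap L[X] (RatFunc L) P := by
    rw [algebraMap_eq, rmap_poly, hq]
  have hR0 : R ≠ 0 := by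
    rintro rfl
    rw [mul_zero] at hR
    exact hP0 hR
  have hP' : algebraMap L[X] (RatFunc L) P ≠ 0 := RatFunc.algebraMap_ne_zero hP0
  have hd' : algebraMap L[X] (RatFunc L) d ≠ 0 := RatFunc.algebraMap_ne_zero f.denom_ne_zero
  have hR' : algebraMap L[X] (RatFunc L) R ≠ 0 := RatFunc.algebraMap_ne_zero hR0
  rw [Algebra.smul_def, map_inv₀, hmapq, hR, map_mul, map_mul]
  rw [mul_inv, eq_comm]
  rw [mul_comm, mul_assoc, ← mul_assoc (algebraMap L[X] (RatFunc L) R)]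
  rw [mul_comm (algebraMap L[X] (RatFunc L) R), mul_assoc, mul_inv_cancel₀ hR', mul_one]
  rw [← div_eq_mul_inv]
  exact RatFunc.num_div_denom f

theorem span_C_top :
    Submodule.span (RatFunc k) (Set.range (RatFunc.C : L → RatFunc L)) = ⊤ := by
  rw [eq_top_iff]
  rintro f -
  obtain ⟨p, q, hq0, rfl⟩ := exists_clear_denom (k := k) f
  apply Submodule.smul_mem
  induction p using Polynomial.induction_on' with
  | add p r hp hr =>
    rw [map_add]
    exact Submodule.add_mem _ hp hr
  | monomial n a =>
    rw [← Polynomial.C_mul_X_pow_eq_monomial, map_mul, map_pow, RatFunc.algebraMap_C,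
      RatFunc.algebraMap_X]
    have hX : (algebraMap (RatFunc k) (RatFunc L)) RatFunc.X = RatFunc.X := by
      rw [algebraMap_eq, rmap_X]
    have : RatFunc.C a * RatFunc.X ^ n = (RatFunc.X ^ n : RatFunc k) • RatFunc.C a := by
      rw [Algebra.smul_def, map_pow, hX, mul_comm]
    rw [this]
    exact Submodule.smul_mem _ _ (Submodule.subset_span ⟨a, rfl⟩)

end Span

end NormAux

namespace NormAux

open Polynomial Module

theorem intDegree_prod {M : Type*} [Field M] {ι : Type*} (s : Finset ι) (g : ι → RatFunc M)
    (h : ∀ i ∈ s, g i ≠ 0) :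
    (∏ i ∈ s, g i).intDegree = ∑ i ∈ s, (g i).intDegree := by
  classical
  induction s using Finset.induction_on with
  | empty => simp
  | insert _ _ hnot ih =>
    rename_i a s
    rw [Finset.prod_insert hnot, Finset.sum_insert hnot,
      RatFunc.intDegree_mul (h a (Finset.mem_insert_self a s))
        (Finset.prod_ne_zero_iff.mpr fun i hi => h i (Finset.mem_insert_of_mem hi)),
      ih fun i hi => h i (Finset.mem_insert_of_mem hi)]

section Main

variable {k L : Type*} [Field k] [Field L] [Algebra k L]
  [FiniteDimensional k L] [IsGalois k L]

theorem span_range_CB :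
    Submodule.span (RatFunc k)
      (Set.range fun i : Fin (finrank k L) => RatFunc.C (finBasis k L i)) = ⊤ := by
  apply le_antisymm le_top
  rw [← span_C_top (k := k) (L := L)]
  apply Submodule.span_le.mpr
  rintro _ ⟨c, rfl⟩
  have hc : c = ∑ i, (finBasis k L).repr c i • finBasis k L i := ((finBasis k L).sum_repr c).symm
  rw [hc, map_sum]
  apply Submodule.sum_mem
  intro i _
  have hterm : RatFunc.C ((finBasis k L).repr c i • finBasis k L i)
      = (RatFunc.C ((finBasis k L).repr c i) : RatFunc k) • RatFunc.C (finBasis k L i) := by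
    rw [Algebra.smul_def (A := L), map_mul, Algebra.smul_def]
    congr 1
    rw [algebraMap_eq, rmap_C]
  rw [hterm]
  exact Submodule.smul_mem _ _ (Submodule.subset_span ⟨i, rfl⟩)

theorem ratFunc_finiteDimensional : FiniteDimensional (RatFunc k) (RatFunc L) :=
  ⟨span_range_CB (k := k) (L := L) ▸ Submodule.fg_span (Set.finite_range _)⟩

theorem ratFunc_finrank_le : finrank (RatFunc k) (RatFunc L) ≤ finrank k L :=
  (finrank_le_of_span_eq_top span_range_CB).trans_eq (Fintype.card_fin _)

theorem ratFunc_card_aut :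
    haveI := ratFunc_finiteDimensional (k := k) (L := L)
    Fintype.card (RatFunc L ≃ₐ[RatFunc k] RatFunc L) = finrank (RatFunc k) (RatFunc L) ∧
      finrank (RatFunc k) (RatFunc L) = finrank k L := by
  haveI := ratFunc_finiteDimensional (k := k) (L := L)
  have h1 : finrank k L ≤ Fintype.card (RatFunc L ≃ₐ[RatFunc k] RatFunc L) := by
    rw [← IsGalois.card_aut_eq_finrank k L, Nat.card_eq_fintype_card]
    exact Fintype.card_le_of_injective (liftAut (k := k) (L := L)) liftAut_injective
  have h2 : Fintype.card (RatFunc L ≃ₐ[RatFunc k] RatFunc L)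
      ≤ finrank (RatFunc k) (RatFunc L) := by
    calc Fintype.card (RatFunc L ≃ₐ[RatFunc k] RatFunc L)
        = Fintype.card (RatFunc L →ₐ[RatFunc k] RatFunc L) :=
          Fintype.card_congr (algEquivEquivAlgHom (RatFunc k) (RatFunc L)).toEquiv
      _ ≤ finrank (RatFunc L) (RatFunc L →ₗ[RatFunc k] RatFunc L) := finrank_algHom _ _
      _ = finrank (RatFunc k) (RatFunc L) := Module.finrank_linearMap_self _ _ _
  have h3 := ratFunc_finrank_le (k := k) (L := L)
  omega

theorem ratFunc_isGalois : IsGalois (RatFunc k) (RatFunc L) := by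
  haveI := ratFunc_finiteDimensional (k := k) (L := L)
  exact IsGalois.of_card_aut_eq_finrank (RatFunc k) (RatFunc L) (by rw [Nat.card_eq_fintype_card]; exact (ratFunc_card_aut (k := k) (L := L)).1)

theorem liftAut_surjective :
    Function.Surjective (liftAut : (L ≃ₐ[k] L) → (RatFunc L ≃ₐ[RatFunc k] RatFunc L)) := by
  haveI := ratFunc_finiteDimensional (k := k) (L := L)
  obtain ⟨hcard, hfr⟩ := ratFunc_card_aut (k := k) (L := L)
  have hc : Fintype.card (L ≃ₐ[k] L) = Fintype.card (RatFunc L ≃ₐ[RatFunc k] RatFunc L) := by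
    rw [hcard, hfr, ← Nat.card_eq_fintype_card, IsGalois.card_aut_eq_finrank k L]
  exact ((Fintype.bijective_iff_injective_and_card _).mpr ⟨liftAut_injective, hc⟩).2

end Main

end NormAux

open Module

/-- Let `k ⊆ L` be a finite Galois extension of fields with `k ≠ L`, and let `t` be a
transcendental variable. Then the element `t` is not in the image of the field norm
`Nm_{L(t)/k(t)} : L(t)* → k(t)*`. In particular, the norm map is not surjective. -/
theorem stmt_2 (k L : Type*) [Field k] [Field L] [Algebra k L]
    [FiniteDimensional k L] [IsGalois k L]
    (hne : ¬ Function.Surjective (algebraMap k L)) :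
    (RatFunc.X : RatFunc k) ∉
        Set.range (Algebra.norm (RatFunc k) : RatFunc L →* RatFunc k) ∧
      ¬ Function.Surjective (Algebra.norm (RatFunc k) : RatFunc L →* RatFunc k) := by
  haveI := NormAux.ratFunc_finiteDimensional (k := k) (L := L)
  haveI := NormAux.ratFunc_isGalois (k := k) (L := L)
  have hX : (RatFunc.X : RatFunc k) ∉
      Set.range (Algebra.norm (RatFunc k) : RatFunc L →* RatFunc k) := by
    rintro ⟨f, hf⟩
    have hXne : (RatFunc.X : RatFunc k) ≠ 0 := by
      intro h
      have := congrArg RatFunc.intDegree h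
      simp at this
    have hf0 : f ≠ 0 := by
      rintro rfl
      rw [Algebra.norm_zero] at hf
      exact hXne hf.symm
    have key := Algebra.norm_eq_prod_automorphisms (K := RatFunc k) f
    rw [hf] at key
    have hdeg1 : ((algebraMap (RatFunc k) (RatFunc L)) RatFunc.X).intDegree = 1 := by
      rw [NormAux.algebraMap_eq, NormAux.rmap_intDegree, RatFunc.intDegree_X]
    rw [key] at hdeg1
    have hne0 : ∀ σ : RatFunc L ≃ₐ[RatFunc k] RatFunc L, σ f ≠ 0 := fun σ h =>
      hf0 (σ.injective (by rw [h, map_zero]))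
    rw [NormAux.intDegree_prod _ _ (fun σ _ => hne0 σ)] at hdeg1
    have hconst : ∀ σ : RatFunc L ≃ₐ[RatFunc k] RatFunc L, (σ f).intDegree = f.intDegree := by
      intro σ
      obtain ⟨τ, rfl⟩ := NormAux.liftAut_surjective σ
      rw [NormAux.liftAut_apply, NormAux.rmap_intDegree]
    rw [Finset.sum_congr rfl (fun σ _ => hconst σ), Finset.sum_const, Finset.card_univ] at hdeg1
    have hcard : Fintype.card (RatFunc L ≃ₐ[RatFunc k] RatFunc L) = finrank k L := by
      obtain ⟨h1, h2⟩ := NormAux.ratFunc_card_aut (k := k) (L := L)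
      omega
    rw [hcard, nsmul_eq_mul] at hdeg1
    have h2 : 2 ≤ finrank k L := by
      by_contra hlt
      push_neg at hlt
      have hpos : 0 < finrank k L := finrank_pos
      have h1 : finrank k L = 1 := by omega
      have hbt := (Subalgebra.bot_eq_top_iff_finrank_eq_one (F := k) (E := L)).mpr h1
      apply hne
      intro x
      have hx : x ∈ (⊤ : Subalgebra k L) := trivial
      rw [← hbt] at hx
      exact Algebra.mem_bot.mp hx
    have hdvd : ((finrank k L : ℤ)) ∣ 1 := ⟨f.intDegree, hdeg1.symm⟩
    have hle := Int.le_of_dvd one_pos hdvd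
    omega
  exact ⟨hX, fun hs => hX (hs RatFunc.X)⟩
end

section
/- Let l be a prime number and let K be a field of characteristic l. Let L ⊇ K be a field extension with [L : K] = q, where q is a prime number. Let p be a prime number with p ≠ l and p ≠ q such that v_q(ord_p(l)) = 0, i.e., the multiplicative order of l modulo p is not divisible by q. Let θ ∈ L be an element such that θ^p ∈ K. Then θ ∈ K. -/
open Polynomial

lemma frob_fixed_mem_range {l : ℕ} [Fact l.Prime] {L : Type*} [Field L] [CharP L l]
    {c : L} (h : c ^ l = c) : c ∈ Set.range (ZMod.castHom (dvd_refl l) L) := by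
  classical
  set f : ZMod l →+* L := ZMod.castHom (dvd_refl l) L with hf
  have hl2 : 1 < l := (Fact.out : l.Prime).one_lt
  set P : L[X] := X ^ l - X with hPdef
  have hPdeg : P.natDegree = l := by
    have h1 : (X : L[X]).natDegree < (X ^ l : L[X]).natDegree := by
      simpa [natDegree_X_pow] using hl2
    rw [hPdef, natDegree_sub_eq_left_of_natDegree_lt h1, natDegree_X_pow]
  have hP0 : P ≠ 0 := fun h0 => by simp [h0] at hPdeg; omega
  have himg : Finset.image f Finset.univ ⊆ P.roots.toFinset := by
    intro x hx
    simp only [Finset.mem_image] at hx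
    obtain ⟨z, _, rfl⟩ := hx
    rw [Multiset.mem_toFinset, mem_roots hP0]
    have : f z ^ l = f z := by rw [← map_pow, ZMod.pow_card]
    simp [hPdef, IsRoot, this]
  have hcard : (Finset.image f Finset.univ).card = l := by
    rw [Finset.card_image_of_injective _ f.injective, Finset.card_univ, ZMod.card]
  have hle : P.roots.toFinset.card ≤ l := by
    refine le_trans (Multiset.toFinset_card_le _) ?_
    simpa [hPdeg] using P.card_roots'
  have heq : Finset.image f Finset.univ = P.roots.toFinset :=
    Finset.eq_of_subset_of_card_le himg (by omega)
  have hc : c ∈ P.roots.toFinset := by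
    rw [Multiset.mem_toFinset, mem_roots hP0]
    simp [hPdef, IsRoot, h]
  rw [← heq] at hc
  simp only [Finset.mem_image] at hc
  obtain ⟨z, _, rfl⟩ := hc
  exact ⟨z, rfl⟩

/-- Key lemma: a `p`-th root of unity in `L` lies in `K`. -/
lemma root_of_unity_mem_range {K L : Type*} [Field K] [Field L] [Algebra K L]
    (l q p : ℕ) (hl : l.Prime) [CharP K l]
    (hq : q.Prime) (hp : p.Prime) (hpl : p ≠ l) (hpq : p ≠ q)
    (hdeg : Module.finrank K L = q)
    (hord : padicValNat q (orderOf ((l : ZMod p))) = 0)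
    (ζ : L) (hζp : ζ ^ p = 1) : ζ ∈ Set.range (algebraMap K L) := by
  haveI : Fact l.Prime := ⟨hl⟩
  haveI : Fact p.Prime := ⟨hp⟩
  haveI : NeZero p := ⟨hp.ne_zero⟩
  haveI hLl : CharP L l := charP_of_injective_algebraMap (algebraMap K L).injective l
  haveI : FiniteDimensional K L :=
    FiniteDimensional.of_finrank_pos (by rw [hdeg]; exact hq.pos)
  by_contra hζK
  -- ζ ≠ 1
  have hζ1 : ζ ≠ 1 := fun h => hζK ⟨1, by simp [h]⟩
  have hord_ζ : orderOf ζ = p := orderOf_eq_prime hζp hζ1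
  have hζ : IsPrimitiveRoot ζ p := hord_ζ ▸ IsPrimitiveRoot.orderOf ζ
  -- d and basic facts about it
  set d := orderOf ((l : ZMod p)) with hd_def
  have hlp_cop : Nat.Coprime l p := (Nat.coprime_primes hl hp).mpr (fun h => hpl h.symm)
  set u : (ZMod p)ˣ := ZMod.unitOfCoprime l hlp_cop with hu_def
  have hu_coe : (u : ZMod p) = (l : ZMod p) := ZMod.coe_unitOfCoprime l hlp_cop
  have hdu : orderOf u = d := by rw [hd_def, ← hu_coe, orderOf_units]
  have hd_pos : 0 < d := by
    rw [← hdu]; exact orderOf_pos u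
  have hqd : ¬ q ∣ d := by
    intro hdvd
    rcases (padicValNat.eq_zero_iff).mp hord with h | h | h
    · exact hq.ne_one h
    · omega
    · exact h hdvd
  -- ζ ^ (l ^ d) = ζ
  have hlp1 : ((l : ZMod p)) ^ d = 1 := pow_orderOf_eq_one _
  have hmodld : l ^ d % p = 1 := by
    have : (((l ^ d : ℕ)) : ZMod p) = ((1 : ℕ) : ZMod p) := by push_cast [hlp1]; simp
    have h2 := (ZMod.natCast_eq_natCast_iff _ _ _).mp this
    have hp1 : 1 % p = 1 := Nat.mod_eq_of_lt hp.one_lt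
    unfold Nat.ModEq at h2
    omega
  have hζld : ζ ^ (l ^ d) = ζ := by
    conv_rhs => rw [← pow_one ζ]
    rw [← pow_mod_orderOf, hord_ζ, hmodld, pow_one]
  -- the polynomial P
  set P : L[X] := ∏ i ∈ Finset.range d, (X - C (ζ ^ l ^ i)) with hP_def
  have hPζ : P.eval ζ = 0 := by
    rw [hP_def, eval_prod]
    refine Finset.prod_eq_zero (Finset.mem_range.mpr hd_pos) ?_
    simp
  -- P is fixed by Frobenius
  have hfrob : P.map (frobenius L l) = P := by
    rw [hP_def, Polynomial.map_prod]
    have hterm : ∀ i, (X - C (ζ ^ l ^ i)).map (frobenius L l) = X - C (ζ ^ l ^ (i + 1)) := by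
      intro i
      rw [Polynomial.map_sub, map_X, map_C, frobenius_def, ← pow_mul, ← pow_succ]
    simp_rw [hterm]
    have h0 : ζ ^ l ^ d = ζ ^ l ^ 0 := by rw [hζld, pow_zero, pow_one]
    have e1 := Finset.prod_range_succ' (fun i => (X : L[X]) - C (ζ ^ l ^ i)) d
    have e2 := Finset.prod_range_succ (fun i => (X : L[X]) - C (ζ ^ l ^ i)) d
    simp only [h0] at e2
    have e3 : (∏ i ∈ Finset.range d, (X - C (ζ ^ l ^ (i + 1)))) * (X - C (ζ ^ l ^ 0))
        = (∏ i ∈ Finset.range d, (X - C (ζ ^ l ^ i))) * (X - C (ζ ^ l ^ 0)) := by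
      rw [← e1, e2]
    exact mul_right_cancel₀ (X_sub_C_ne_zero _) e3
  have hPfrob : ∀ n, (P.coeff n) ^ l = P.coeff n := by
    intro n
    have := congrArg (fun Q : L[X] => Q.coeff n) hfrob
    simpa [coeff_map, frobenius_def] using this
  -- P comes from ZMod l
  obtain ⟨Q, hQ⟩ : ∃ Q : (ZMod l)[X], Q.map (ZMod.castHom (dvd_refl l) L) = P := by
    rw [← mem_lifts, lifts_iff_coeff_lifts]
    intro n
    exact frob_fixed_mem_range (hPfrob n)
  -- minpoly K ζ divides Q mapped to K
  set QK : K[X] := Q.map (ZMod.castHom (dvd_refl l) K) with hQK_def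
  have hQKL : QK.map (algebraMap K L) = P := by
    rw [hQK_def, map_map, ← hQ]
    congr 1
    exact Subsingleton.elim _ _
  have hQKζ : aeval ζ QK = 0 := by
    rw [aeval_def, ← eval_map, hQKL, hPζ]
  have hfdvd : minpoly K ζ ∣ QK := minpoly.dvd K ζ hQKζ
  -- every K-automorphism sends ζ to ζ ^ (l ^ i)
  have hconj : ∀ σ : L ≃ₐ[K] L, ∃ i, i < d ∧ σ ζ = ζ ^ l ^ i := by
    intro σ
    have h1 : (aeval (σ ζ)) (minpoly K ζ) = 0 := by
      rw [show σ ζ = σ.toAlgHom ζ from rfl, aeval_algHom_apply, minpoly.aeval, map_zero]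
    obtain ⟨g, hg⟩ := hfdvd
    have h2 : (aeval (σ ζ)) QK = 0 := by rw [hg, map_mul, h1, zero_mul]
    have h3 : P.eval (σ ζ) = 0 := by
      have he : (aeval (σ ζ)) QK = P.eval (σ ζ) := by rw [aeval_def, ← eval_map, hQKL]
      rw [← he]; exact h2
    rw [hP_def, eval_prod, Finset.prod_eq_zero_iff] at h3
    obtain ⟨i, hi, hroot⟩ := h3
    refine ⟨i, Finset.mem_range.mp hi, ?_⟩
    simpa [sub_eq_zero] using hroot
  -- K⟮ζ⟯ = ⊤
  have hint : IsIntegral K ζ := IsIntegral.of_finite K ζ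
  have hadj : IntermediateField.adjoin K {ζ} = ⊤ := by
    have h1 : Module.finrank K (IntermediateField.adjoin K {ζ}) ∣ q := by
      rw [← hdeg]
      exact ⟨Module.finrank (IntermediateField.adjoin K {ζ}) L,
        (Module.finrank_mul_finrank K (IntermediateField.adjoin K {ζ}) L).symm⟩
    rcases (hq.eq_one_or_self_of_dvd _ h1) with h | h
    · exact absurd (IntermediateField.mem_bot.mp
        (IntermediateField.finrank_eq_one_iff.mp h ▸
          IntermediateField.mem_adjoin_simple_self K ζ)) hζK
    · exact IntermediateField.eq_of_le_of_finrank_eq le_top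
        (by rw [h, IntermediateField.finrank_top', hdeg])
  have hadjA : Algebra.adjoin K {ζ} = ⊤ := by
    rw [← IntermediateField.adjoin_simple_toSubalgebra_of_isAlgebraic hint.isAlgebraic, hadj,
      IntermediateField.top_toSubalgebra]
  -- L/K is Galois
  have hmonic : ((X : K[X]) ^ p - 1).Monic := by
    have := monic_X_pow_sub_C (1 : K) hp.ne_zero
    simpa using this
  haveI hsp : IsSplittingField K L ((X : K[X]) ^ p - 1) := by
    constructor
    · have hmap : ((X : K[X]) ^ p - 1).map (algebraMap K L) = (X : L[X]) ^ p - 1 := by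
        simp [Polynomial.map_sub]
      rw [hmap, splits_iff_card_roots]
      have hroots : ((X : L[X]) ^ p - 1).roots = nthRoots p (1 : L) := by
        simp [nthRoots]
      have hdegL : ((X : L[X]) ^ p - 1).natDegree = p := by
        have := natDegree_X_pow_sub_C (n := p) (r := (1 : L))
        simpa using this
      rw [hroots, hdegL, hζ.card_nthRoots]
      rw [if_pos (⟨ζ, hζp⟩ : ∃ α : L, α ^ p = 1)]
    · rw [eq_top_iff, ← hadjA]
      refine Algebra.adjoin_mono ?_
      rw [Set.singleton_subset_iff, mem_rootSet]
      exact ⟨hmonic.ne_zero, by simp [hζp]⟩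
  haveI : IsGalois K L := by
    have hpn0 : (p : K) ≠ 0 := by
      intro h0
      have : l ∣ p := (CharP.cast_eq_zero_iff K l p).mp h0
      exact hpl (((Nat.prime_dvd_prime_iff_eq hl hp).mp this).symm)
    have hsep : ((X : K[X]) ^ p - 1).Separable := by
      have := separable_X_pow_sub_C (1 : K) hpn0 one_ne_zero
      simpa using this
    exact IsGalois.of_separable_splitting_field hsep
  -- autToPow
  set φ := hζ.autToPow K with hφ_def
  have hfix : ∀ ρ : L ≃ₐ[K] L, ρ ζ = ζ → ∀ x, ρ x = x := by
    intro ρ hρ x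
    have hle : Algebra.adjoin K {ζ} ≤ AlgHom.equalizer ρ.toAlgHom (AlgHom.id K L) := by
      rw [Algebra.adjoin_le_iff, Set.singleton_subset_iff]
      exact hρ
    rw [hadjA] at hle
    exact hle Algebra.mem_top
  have hφinj : Function.Injective φ := by
    intro σ τ h
    have hσζ : σ ζ = τ ζ := by
      rw [← hζ.autToPow_spec K σ, ← hζ.autToPow_spec K τ, h]
    have hρ : (σ.trans τ.symm) ζ = ζ := by
      simp [AlgEquiv.trans_apply, hσζ]
    ext x
    have := hfix (σ.trans τ.symm) hρ x
    simp only [AlgEquiv.trans_apply] at this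
    calc σ x = τ (τ.symm (σ x)) := by rw [AlgEquiv.apply_symm_apply]
      _ = τ x := by rw [this]
  have hφrange : φ.range ≤ Subgroup.zpowers u := by
    rintro t ⟨σ, rfl⟩
    obtain ⟨i, hi, hσζ⟩ := hconj σ
    have hspec : ζ ^ ((φ σ : ZMod p)).val = ζ ^ l ^ i := by
      rw [hζ.autToPow_spec K σ, hσζ]
    have hmod : ((φ σ : ZMod p)).val % p = l ^ i % p := by
      have e1 : ζ ^ (((φ σ : ZMod p)).val % p) = ζ ^ ((φ σ : ZMod p)).val := by
        calc ζ ^ (((φ σ : ZMod p)).val % p) = ζ ^ (((φ σ : ZMod p)).val % orderOf ζ) := by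
              rw [hord_ζ]
          _ = ζ ^ ((φ σ : ZMod p)).val := pow_mod_orderOf _ _
      have e2 : ζ ^ (l ^ i % p) = ζ ^ l ^ i := by
        calc ζ ^ (l ^ i % p) = ζ ^ (l ^ i % orderOf ζ) := by rw [hord_ζ]
          _ = ζ ^ l ^ i := pow_mod_orderOf _ _
      have h1 : ζ ^ (((φ σ : ZMod p)).val % p) = ζ ^ (l ^ i % p) := by
        rw [e1, e2, hspec]
      exact hζ.pow_inj (Nat.mod_lt _ hp.pos) (Nat.mod_lt _ hp.pos) h1
    have hcast : ((φ σ : ZMod p)) = (l : ZMod p) ^ i := by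
      have h2 : ((((φ σ : ZMod p)).val : ℕ) : ZMod p) = ((l ^ i : ℕ) : ZMod p) :=
        (ZMod.natCast_eq_natCast_iff _ _ _).mpr hmod
      rw [ZMod.natCast_val, ZMod.cast_id] at h2
      rw [h2]; push_cast; ring
    have hui : φ σ = u ^ i := by
      ext
      rw [Units.val_pow_eq_pow_val, hu_coe]
      exact hcast
    exact hui ▸ Subgroup.npow_mem_zpowers u i
  -- counting
  have hcardGal : Nat.card (L ≃ₐ[K] L) = q := by
    have h1 := IsGalois.card_aut_eq_finrank K L
    rw [hdeg] at h1
    rw [Nat.card_eq_fintype_card]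
    convert h1
    exact Nat.card_eq_fintype_card.symm
  have hcardrange : Nat.card φ.range = q := by
    rw [← hcardGal]
    exact (Nat.card_congr (MonoidHom.ofInjective hφinj).toEquiv).symm
  have : q ∣ d := by
    rw [← hcardrange, ← hdu, ← Nat.card_zpowers]
    exact Subgroup.card_dvd_of_le hφrange
  exact hqd this

/-- Let `l` be a prime number and `K` a field of characteristic `l`. Let `L ⊇ K` be a field
extension with `[L : K] = q`, `q` prime. Let `p` be a prime with `p ≠ l`, `p ≠ q` such that
`v_q(ord_p(l)) = 0`. If `θ ∈ L` satisfies `θ^p ∈ K`, then `θ ∈ K`. -/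
theorem stmt_3 {K L : Type*} [Field K] [Field L] [Algebra K L]
    (l q p : ℕ) (hl : l.Prime) [CharP K l]
    (hq : q.Prime) (hp : p.Prime) (hpl : p ≠ l) (hpq : p ≠ q)
    (hdeg : Module.finrank K L = q)
    (hord : padicValNat q (orderOf ((l : ZMod p))) = 0)
    (θ : L) (hθ : θ ^ p ∈ Set.range (algebraMap K L)) :
    θ ∈ Set.range (algebraMap K L) := by
  haveI : FiniteDimensional K L :=
    FiniteDimensional.of_finrank_pos (by rw [hdeg]; exact hq.pos)
  obtain ⟨a, ha⟩ := hθ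
  by_cases ha0 : a = 0
  · have hθ0 : θ = 0 := by
      have h1 : θ ^ p = 0 := by rw [← ha, ha0, map_zero]
      exact (pow_eq_zero_iff hp.ne_zero).mp h1
    exact ⟨0, by rw [map_zero, hθ0]⟩
  have hθ0 : θ ≠ 0 := by
    intro h0
    apply ha0
    have h1 : algebraMap K L a = 0 := by rw [ha, h0, zero_pow hp.ne_zero]
    exact (_root_.map_eq_zero _).mp h1
  -- the norm trick: a is a p-th power in K
  set c := Algebra.norm K θ with hc_def
  have hcp : c ^ p = a ^ q := by
    rw [hc_def, ← map_pow, ← ha, Algebra.norm_algebraMap, hdeg]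
  have hc0 : c ≠ 0 := by
    intro h0
    rw [h0, zero_pow hp.ne_zero] at hcp
    exact ha0 ((pow_eq_zero_iff hq.ne_zero).mp hcp.symm)
  set A : Kˣ := Units.mk0 a ha0 with hA_def
  set C : Kˣ := Units.mk0 c hc0 with hC_def
  have hAC : C ^ p = A ^ q := by
    ext
    rw [Units.val_pow_eq_pow_val, Units.val_pow_eq_pow_val]
    exact hcp
  have hcop : IsCoprime (p : ℤ) (q : ℤ) := by
    rw [Int.isCoprime_iff_gcd_eq_one]
    exact_mod_cast (Nat.coprime_primes hp hq).mpr hpq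
  obtain ⟨α, β, hαβ⟩ := hcop
  set B : Kˣ := A ^ α * C ^ β with hB_def
  have hBp : B ^ (p : ℤ) = A := by
    calc B ^ (p : ℤ) = A ^ (α * (p : ℤ)) * C ^ (β * (p : ℤ)) := by
          rw [hB_def, mul_zpow, ← zpow_mul, ← zpow_mul]
      _ = A ^ (α * (p : ℤ)) * (C ^ (p : ℤ)) ^ β := by rw [← zpow_mul, mul_comm β]
      _ = A ^ (α * (p : ℤ)) * A ^ ((q : ℤ) * β) := by
          rw [zpow_natCast C p, hAC, ← zpow_natCast A q, ← zpow_mul]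
      _ = A ^ (α * (p : ℤ) + (q : ℤ) * β) := by rw [← zpow_add]
      _ = A ^ (1 : ℤ) := by
          congr 1
          linarith [hαβ]
      _ = A := zpow_one A
  have hbp : ((B : K)) ^ p = a := by
    have h1 := congrArg Units.val hBp
    rw [zpow_natCast, Units.val_pow_eq_pow_val] at h1
    exact h1
  set bL := algebraMap K L (B : K) with hbL_def
  have hbL0 : bL ≠ 0 := by
    rw [hbL_def, Ne, _root_.map_eq_zero]
    exact B.ne_zero
  set ζ := θ * bL⁻¹ with hζdef
  have hζp : ζ ^ p = 1 := by
    have hbLp : bL ^ p = θ ^ p := by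
      rw [hbL_def, ← map_pow, hbp, ha]
    rw [hζdef, mul_pow, inv_pow, hbLp]
    exact mul_inv_cancel₀ (pow_ne_zero p hθ0)
  obtain ⟨e, he⟩ := root_of_unity_mem_range l q p hl hq hp hpl hpq hdeg hord ζ hζp
  refine ⟨e * (B : K), ?_⟩
  rw [map_mul, he, ← hbL_def, hζdef, inv_mul_cancel_right₀ hbL0]
end

section
/- Let l be a prime number and let K be a field of characteristic l. Let L₁ ⊇ K and L₂ ⊇ K be two field extensions with [L₁ : K] = [L₂ : K] = q, where q is a prime number. Let p₁ ≠ p₂ be two different prime numbers, both distinct from l, and write ord_{p₁}(l) = q^{k₁}·m₁ and ord_{p₂}(l) = q^{k₂}·m₂ with m₁, m₂ not divisible by q. Assume k₁ ≠ k₂ and k₁, k₂ ≥ 1. Let n₁, n₂ be positive integers, and let θ₁ ∈ L₁ and θ₂ ∈ L₂ be elements such that θ₁^{n₁·p₁} ∈ K and θ₂^{n₂·p₂} ∈ K. Then θ₁^{n₁} ∈ K or θ₂^{n₂} ∈ K. -/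
open Polynomial IntermediateField

set_option maxHeartbeats 1000000
set_option synthInstance.maxHeartbeats 400000



/-- cast pow eq one iff dvd -/
lemma cast_pow_eq_one_iff_dvd {M : ℕ} (hM : 1 < M) (l s : ℕ) (hl : 1 ≤ l) :
    (l : ZMod M) ^ s = 1 ↔ M ∣ l ^ s - 1 := by
  haveI : NeZero M := ⟨by omega⟩
  have h1 : 1 ≤ l ^ s := Nat.one_le_pow _ _ hl
  have : ((l : ZMod M)) ^ s = ((l ^ s : ℕ) : ZMod M) := by push_cast; ring
  rw [this]
  have h2 : ((l ^ s : ℕ) : ZMod M) = ((l ^ s - 1 : ℕ) : ZMod M) + 1 := by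
    have : (l ^ s - 1) + 1 = l ^ s := by omega
    rw [← this]; push_cast; ring
  rw [h2]
  constructor
  · intro h
    have : ((l ^ s - 1 : ℕ) : ZMod M) = 0 := by
      have := congrArg (· - (1 : ZMod M)) h
      simpa using this
    exact (ZMod.natCast_eq_zero_iff _ _).mp this
  · intro h
    have : ((l ^ s - 1 : ℕ) : ZMod M) = 0 := (ZMod.natCast_eq_zero_iff _ _).mpr h
    rw [this, zero_add]

/-- `a ∣ b → l^a - 1 ∣ l^b - 1` -/
lemma pow_sub_one_dvd_of_dvd (l : ℕ) {a b : ℕ} (h : a ∣ b) : l ^ a - 1 ∣ l ^ b - 1 := by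
  obtain ⟨c, rfl⟩ := h
  rw [pow_mul]
  simpa using Nat.sub_dvd_pow_sub_pow (l ^ a) 1 c

/-- `l^a - 1 ∣ l^b - 1 → a ∣ b` for `l ≥ 2`. -/
lemma dvd_of_pow_sub_one_dvd {l a b : ℕ} (hl : 2 ≤ l) (h : l ^ a - 1 ∣ l ^ b - 1) : a ∣ b := by
  rcases Nat.eq_zero_or_pos a with rfl | ha
  · simp only [pow_zero, Nat.sub_self, zero_dvd_iff] at h
    have : l ^ b = 1 := by have := Nat.one_le_pow b l (by omega); omega
    have hb : b = 0 := by
      by_contra hb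
      have : l ^ 1 ≤ l ^ b := Nat.pow_le_pow_right (by omega) (by omega)
      simp at this; omega
    simp [hb]
  rcases eq_or_lt_of_le (show 1 ≤ a from ha) with ha1 | ha2
  · exact (ha1 ▸ one_dvd b)
  have hM : 1 < l ^ a - 1 := by
    have : l ^ 2 ≤ l ^ a := Nat.pow_le_pow_right (by omega) ha2
    have : 4 ≤ l ^ 2 := by nlinarith
    omega
  set M := l ^ a - 1 with hMdef
  have hla : (l : ZMod M) ^ a = 1 := (cast_pow_eq_one_iff_dvd hM l a (by omega)).mpr dvd_rfl
  have hlb : (l : ZMod M) ^ b = 1 := (cast_pow_eq_one_iff_dvd hM l b (by omega)).mpr h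
  have hfin : IsOfFinOrder (l : ZMod M) := isOfFinOrder_iff_pow_eq_one.mpr ⟨a, by omega, hla⟩
  set d := orderOf (l : ZMod M) with hd
  have hda : d ∣ a := orderOf_dvd_of_pow_eq_one hla
  have hdb : d ∣ b := orderOf_dvd_of_pow_eq_one hlb
  have hdpos : 0 < d := hfin.orderOf_pos
  have hld : (l : ZMod M) ^ d = 1 := pow_orderOf_eq_one _
  have hMd : M ∣ l ^ d - 1 := (cast_pow_eq_one_iff_dvd hM l d (by omega)).mp hld
  have hdl : 1 ≤ l ^ d - 1 := by
    have : l ^ 1 ≤ l ^ d := Nat.pow_le_pow_right (by omega) hdpos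
    simp at this; omega
  have : M ≤ l ^ d - 1 := Nat.le_of_dvd (by omega) hMd
  have had : a ≤ d := by
    have : l ^ a ≤ l ^ d := by omega
    exact (Nat.pow_le_pow_iff_right (by omega)).mp this
  have : d = a := le_antisymm (Nat.le_of_dvd ha hda) had
  exact this ▸ hdb

/-- In a field of characteristic `l`, two elements of finite multiplicative order lie in a
finite subfield of cardinality `l ^ s`; consequences for orders. -/
lemma torsion_lemma {K : Type*} [Field K] {l : ℕ} (hl : l.Prime) [CharP K l]
    (x y : K) (hx : IsOfFinOrder x) (hy : IsOfFinOrder y) :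
    ∃ s : ℕ, 0 < s ∧ orderOf x ∣ l ^ s - 1 ∧ orderOf y ∣ l ^ s - 1 ∧
      ∀ d : ℕ, d.Prime → d ∣ l ^ s - 1 → ∃ w : K, orderOf w = d := by
  haveI : Fact l.Prime := ⟨hl⟩
  letI : Algebra (ZMod l) K := ZMod.algebra K l
  have hint : ∀ z : K, IsOfFinOrder z → IsIntegral (ZMod l) z := by
    intro z hz
    refine ⟨X ^ (orderOf z) - C 1, monic_X_pow_sub_C 1 hz.orderOf_pos.ne', ?_⟩
    simp [pow_orderOf_eq_one]
  haveI : FiniteDimensional (ZMod l) (IntermediateField.adjoin (ZMod l) ({x, y} : Set K)) := by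
    apply IntermediateField.finiteDimensional_adjoin
    intro z hz
    rcases hz with rfl | hz
    · exact hint _ hx
    · rcases hz with rfl
      exact hint _ hy
  set F := IntermediateField.adjoin (ZMod l) ({x, y} : Set K) with hF
  haveI : Finite F := Module.finite_of_finite (ZMod l)
  haveI : Fintype F := Fintype.ofFinite F
  haveI : Fintype Fˣ := Fintype.ofFinite _
  set s := Module.finrank (ZMod l) F with hs
  have hcard : Fintype.card F = l ^ s := by
    rw [Module.card_eq_pow_finrank (K := ZMod l) (V := F), ZMod.card l]
  have hspos : 0 < s := by
    rcases Nat.eq_zero_or_pos s with h0 | h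
    · exfalso
      rw [h0, pow_zero] at hcard
      exact Fintype.one_lt_card.ne' hcard
    · exact h
  have hcardu : Nat.card Fˣ = l ^ s - 1 := by
    rw [Nat.card_units, Nat.card_eq_fintype_card, hcard]
  -- embed order-preserving
  have hmem : ∀ z : K, z ∈ ({x, y} : Set K) → z ∈ F := fun z hz =>
    IntermediateField.subset_adjoin _ _ hz
  have horder : ∀ z : F, orderOf (z : K) = orderOf z :=
    fun z => orderOf_injective (algebraMap F K : F →+* K).toMonoidHom
      (RingHom.injective _) z
  have hdvd : ∀ z : K, IsOfFinOrder z → z ∈ ({x, y} : Set K) → orderOf z ∣ l ^ s - 1 := by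
    intro z hz hzm
    set zF : F := ⟨z, hmem z hzm⟩ with hzF
    have h1 : orderOf z = orderOf zF := by
      rw [← horder zF]
    have hzF0 : zF ≠ 0 := by
      intro h0
      have hz0 : z = 0 := by simpa [hzF, Subtype.ext_iff] using h0
      obtain ⟨n, hn, h1⟩ := hz.exists_pow_eq_one
      rw [hz0, zero_pow hn.ne'] at h1
      exact zero_ne_one h1
    have h2 : orderOf zF = orderOf (Units.mk0 zF hzF0) := by
      rw [← orderOf_units]; rfl
    rw [h1, h2, ← hcardu]
    exact orderOf_dvd_natCard _
  refine ⟨s, hspos, hdvd x hx (by simp), hdvd y hy (by simp), ?_⟩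
  intro d hd hddvd
  haveI : Fact d.Prime := ⟨hd⟩
  obtain ⟨w, hw⟩ := exists_prime_orderOf_dvd_card (G := Fˣ) d (by rw [← Nat.card_eq_fintype_card, hcardu]; exact hddvd)
  refine ⟨((w : F) : K), ?_⟩
  rw [horder, orderOf_units, hw]

/-- Assembly: contradiction from the two side conclusions when `k₁ < k₂`. -/
lemma assembly {K : Type*} [Field K] {l q p₁ k₁ k₂ m₁ m₂ : ℕ} (hl : l.Prime) [CharP K l]
    (hq : q.Prime) (hp₁ : p₁.Prime)
    (hord₁ : orderOf ((l : ZMod p₁)) = q ^ k₁ * m₁) (hm₁ : ¬ q ∣ m₁) (hk₁ : 1 ≤ k₁)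
    (hm₁pos : 0 < m₁) (hm₂pos : 0 < m₂)
    (hkk : k₁ < k₂)
    (ha : ¬ ∃ x : K, orderOf x = p₁)
    (hb₁ : ∃ x : K, orderOf x = l ^ (q ^ (k₁ - 1) * m₁) - 1)
    (hb₂ : ∃ x : K, orderOf x = l ^ (q ^ (k₂ - 1) * m₂) - 1) : False := by
  obtain ⟨x, hx⟩ := hb₁
  obtain ⟨y, hy⟩ := hb₂
  have hl2 : 2 ≤ l := hl.two_le
  set a₁ := q ^ (k₁ - 1) * m₁ with ha₁
  set a₂ := q ^ (k₂ - 1) * m₂ with ha₂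
  have ha₁pos : 0 < a₁ := Nat.mul_pos (Nat.pow_pos hq.pos) hm₁pos
  have ha₂pos : 0 < a₂ := Nat.mul_pos (Nat.pow_pos hq.pos) hm₂pos
  have hN₁ : 0 < l ^ a₁ - 1 := by
    have : l ^ 1 ≤ l ^ a₁ := Nat.pow_le_pow_right (by omega) ha₁pos
    simp at this; omega
  have hN₂ : 0 < l ^ a₂ - 1 := by
    have : l ^ 1 ≤ l ^ a₂ := Nat.pow_le_pow_right (by omega) ha₂pos
    simp at this; omega
  have hxf : IsOfFinOrder x := by
    rw [← orderOf_pos_iff, hx]; exact hN₁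
  have hyf : IsOfFinOrder y := by
    rw [← orderOf_pos_iff, hy]; exact hN₂
  obtain ⟨s, hs, hxs, hys, hC⟩ := torsion_lemma hl x y hxf hyf
  rw [hx] at hxs
  rw [hy] at hys
  have has₁ : a₁ ∣ s := dvd_of_pow_sub_one_dvd hl2 hxs
  have has₂ : a₂ ∣ s := dvd_of_pow_sub_one_dvd hl2 hys
  -- e₁ = q ^ k₁ * m₁ divides s
  have hqk : (q ^ k₁ : ℕ) ∣ a₂ := Dvd.dvd.mul_right (pow_dvd_pow q (by omega)) m₂
  have hqs : (q ^ k₁ : ℕ) ∣ s := hqk.trans has₂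
  have hms : m₁ ∣ s := (Dvd.dvd.mul_left dvd_rfl _).trans has₁
  have hcop : Nat.Coprime (q ^ k₁) m₁ :=
    Nat.Coprime.pow_left _ (hq.coprime_iff_not_dvd.mpr hm₁)
  have he₁s : (q ^ k₁ * m₁ : ℕ) ∣ s := hcop.mul_dvd_of_dvd_of_dvd hqs hms
  -- p₁ ∣ l ^ s - 1
  have hp₁M : 1 < p₁ := hp₁.one_lt
  have hle : (l : ZMod p₁) ^ (q ^ k₁ * m₁) = 1 := by
    rw [← hord₁]; exact pow_orderOf_eq_one _
  have hp₁e : p₁ ∣ l ^ (q ^ k₁ * m₁) - 1 :=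
    (cast_pow_eq_one_iff_dvd hp₁M l _ (by omega)).mp hle
  have hp₁s : p₁ ∣ l ^ s - 1 :=
    hp₁e.trans (pow_sub_one_dvd_of_dvd l he₁s)
  obtain ⟨w, hw⟩ := hC p₁ hp₁ hp₁s
  exact ha ⟨w, hw⟩



/-- Step A2/A3: from the radical hypotheses produce a primitive `p`-th root of unity
outside of `K`. -/
lemma exists_root_of_unity {K L : Type*} [Field K] [Field L] [Algebra K L]
    (q p : ℕ) (hq : q.Prime) (hp : p.Prime) (hqp : q ≠ p)
    (hdeg : Module.finrank K L = q)
    (n : ℕ) (θ : L) (hθ : θ ^ (n * p) ∈ Set.range (algebraMap K L))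
    (hout : θ ^ n ∉ Set.range (algebraMap K L)) :
    ∃ ζ : L, orderOf ζ = p ∧ ζ ∉ Set.range (algebraMap K L) := by
  haveI : FiniteDimensional K L :=
    FiniteDimensional.of_finrank_pos (by rw [hdeg]; exact hq.pos)
  obtain ⟨c, hc⟩ := hθ
  set α := θ ^ n with hα
  have hαp : α ^ p = algebraMap K L c := by rw [hα, ← pow_mul, ← hc]
  by_cases hex : ∃ b : K, b ^ p = c
  · obtain ⟨b, hb⟩ := hex
    have hb0 : b ≠ 0 := by
      rintro rfl
      rw [zero_pow hp.ne_zero] at hb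
      rw [← hb, map_zero, pow_eq_zero_iff hp.ne_zero] at hαp
      exact hout (hαp ▸ ⟨0, (map_zero _)⟩)
    set β := algebraMap K L b with hβ
    have hβ0 : β ≠ 0 := by
      simpa only [hβ, ne_eq, _root_.map_eq_zero] using hb0
    haveI : Fact p.Prime := ⟨hp⟩
    refine ⟨α * β⁻¹, ?_, ?_⟩
    · apply orderOf_eq_prime
      · have hc0 : algebraMap K L c ≠ 0 := by
          rw [← hαp]; intro h
          rw [pow_eq_zero_iff hp.ne_zero] at h
          exact hout (h ▸ ⟨0, map_zero _⟩)
        rw [mul_pow, hαp, inv_pow, ← map_pow, hb, mul_inv_cancel₀ hc0]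
      · intro h1
        rw [mul_inv_eq_one₀ hβ0] at h1
        exact hout (h1 ▸ ⟨b, rfl⟩)
    · rintro ⟨z, hz⟩
      apply hout
      refine ⟨z * b, ?_⟩
      rw [map_mul, hz, mul_assoc, inv_mul_cancel₀ hβ0, mul_one]
  · push_neg at hex
    exfalso
    have hirr := X_pow_sub_C_irreducible_of_prime hp hex
    have hroot : (aeval α) (X ^ p - C c : K[X]) = 0 := by
      simp [hαp]
    have hmono : (X ^ p - C c : K[X]).Monic := monic_X_pow_sub_C c hp.ne_zero
    have hint : IsIntegral K α := ⟨_, hmono, hroot⟩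
    have hmin : minpoly K α = X ^ p - C c :=
      (minpoly.eq_of_irreducible_of_monic hirr hroot hmono).symm
    have hfr : Module.finrank K K⟮α⟯ = p := by
      rw [adjoin.finrank hint, hmin, natDegree_X_pow_sub_C]
    have hdvd : p ∣ q := by
      rw [← hdeg, ← hfr]
      exact ⟨Module.finrank K⟮α⟯ L, (Module.finrank_mul_finrank K K⟮α⟯ L).symm⟩
    exact hqp ((Nat.prime_dvd_prime_iff_eq hp hq).mp hdvd).symm

/-- If `L` contains an element of order `p` not in `K`, then `K` has no element of order `p`. -/
lemma no_order_p {K L : Type*} [Field K] [Field L] [Algebra K L]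
    {p : ℕ} (hp : p.Prime) {ζ : L} (hζ : orderOf ζ = p)
    (hout : ζ ∉ Set.range (algebraMap K L)) :
    ¬ ∃ x : K, orderOf x = p := by
  rintro ⟨x, hx⟩
  haveI : NeZero p := ⟨hp.ne_zero⟩
  have hX : orderOf (algebraMap K L x) = p := by
    have := orderOf_injective (algebraMap K L).toMonoidHom (RingHom.injective _) x
    simpa [hx] using this
  have hprim : IsPrimitiveRoot (algebraMap K L x) p := hX ▸ IsPrimitiveRoot.orderOf _
  have hζp : ζ ^ p = 1 := by rw [← hζ]; exact pow_orderOf_eq_one ζ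
  obtain ⟨i, _, hi⟩ := hprim.eq_pow_of_pow_eq_one hζp
  exact hout ⟨x ^ i, by rw [map_pow, hi]⟩




lemma subfield_elt {K L : Type*} [Field K] [Field L] [Algebra K L]
    (l q p k m : ℕ) (hl : l.Prime) [CharP K l]
    (hq : q.Prime) (hp : p.Prime)
    (hdeg : Module.finrank K L = q)
    (hord : orderOf ((l : ZMod p)) = q ^ k * m) (hk : 1 ≤ k) (hm0 : 0 < m)
    {ζ : L} (hζ : orderOf ζ = p) (hout : ζ ∉ Set.range (algebraMap K L)) :
    ∃ x : K, orderOf x = l ^ (q ^ (k - 1) * m) - 1 := by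
  haveI : Fact p.Prime := ⟨hp⟩
  haveI : Fact l.Prime := ⟨hl⟩
  haveI : NeZero p := ⟨hp.ne_zero⟩
  haveI : FiniteDimensional K L :=
    FiniteDimensional.of_finrank_pos (by rw [hdeg]; exact hq.pos)
  haveI : CharP L l := charP_of_injective_algebraMap (algebraMap K L).injective l
  letI : Algebra (ZMod l) L := ZMod.algebra L l
  set e := q ^ k * m with he
  have hepos : 0 < e := Nat.mul_pos (Nat.pow_pos hq.pos) hm0
  have hl2 : 2 ≤ l := hl.two_le
  have hle2 : 2 ≤ l ^ e := by
    calc 2 = 2 ^ 1 := rfl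
    _ ≤ l ^ e := Nat.pow_le_pow_left hl2 1 |>.trans (Nat.pow_le_pow_right (by omega) hepos)
  have hζp : ζ ^ p = 1 := by rw [← hζ]; exact pow_orderOf_eq_one ζ
  have hprim : IsPrimitiveRoot ζ p := hζ ▸ IsPrimitiveRoot.orderOf ζ
  have hintζ : IsIntegral (ZMod l) ζ :=
    ⟨X ^ p - C 1, monic_X_pow_sub_C 1 hp.ne_zero, by simp [hζp]⟩
  have hintζK : IsIntegral K ζ :=
    ⟨X ^ p - C 1, monic_X_pow_sub_C 1 hp.ne_zero, by simp [hζp]⟩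
  -- the finite field F = 𝔽_l(ζ)
  set F := IntermediateField.adjoin (ZMod l) ({ζ} : Set L) with hF
  have hζF : ζ ∈ F := IntermediateField.subset_adjoin _ _ (Set.mem_singleton ζ)
  haveI : FiniteDimensional (ZMod l) F := by
    apply IntermediateField.finiteDimensional_adjoin
    intro z hz; rcases hz with rfl; exact hintζ
  haveI : Finite F := Module.finite_of_finite (ZMod l)
  haveI : Fintype F := Fintype.ofFinite F
  set s := Module.finrank (ZMod l) F with hs
  have hcardF : Fintype.card F = l ^ s := by
    rw [Module.card_eq_pow_finrank (K := ZMod l) (V := F), ZMod.card l]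
  -- p divides l ^ e - 1
  have hple : p ∣ l ^ e - 1 := by
    rw [← cast_pow_eq_one_iff_dvd hp.one_lt l e (by omega), ← hord]
    exact pow_orderOf_eq_one _
  -- every element of F satisfies x ^ l ^ e = x
  have hfrob : ∀ (x : L), x ∈ F → x ^ (l ^ e) = x := by
    intro x hx
    induction hx using IntermediateField.adjoin_induction with
    | mem x hx =>
      rcases hx with rfl
      obtain ⟨t, ht⟩ := hple
      have hlet : l ^ e = p * t + 1 := by omega
      rw [hlet, pow_add, pow_mul, hζp, one_pow, pow_one, one_mul]
    | algebraMap r =>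
      rw [← map_pow]
      congr 1
      exact ZMod.pow_card_pow r
    | add x y hx hy ihx ihy => rw [add_pow_char_pow, ihx, ihy]
    | inv x hx ihx => rw [inv_pow, ihx]
    | mul x y hx hy ihx ihy => rw [mul_pow, ihx, ihy]
  -- hence card F ≤ l ^ e
  have hcardle : Fintype.card F ≤ l ^ e := by
    classical
    set P : Polynomial F := X ^ (l ^ e) - X with hP
    have hdeglt : (X : Polynomial F).degree < ((X : Polynomial F) ^ (l ^ e)).degree := by
      rw [degree_X, degree_X_pow]
      exact_mod_cast by omega
    have hPdeg : P.degree = (l ^ e : ℕ) := by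
      rw [hP, degree_sub_eq_left_of_degree_lt hdeglt, degree_X_pow]
    have hP0 : P ≠ 0 := by
      intro h
      rw [h, degree_zero] at hPdeg
      exact WithBot.bot_ne_coe hPdeg
    have hroots : ∀ a : F, a ∈ P.roots := by
      intro a
      rw [mem_roots hP0]
      have : (a : L) ^ (l ^ e) = a := hfrob _ a.2
      have ha : a ^ (l ^ e) = a := by
        apply Subtype.ext
        push_cast
        exact this
      simp [hP, IsRoot, ha]
    have hsub : Finset.univ ⊆ P.roots.toFinset := fun a _ => by
      simpa using hroots a
    calc Fintype.card F = Finset.univ.card := rfl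
      _ ≤ P.roots.toFinset.card := Finset.card_le_card hsub
      _ ≤ Multiset.card P.roots := Multiset.toFinset_card_le _
      _ ≤ P.natDegree := P.card_roots' 
      _ = l ^ e := natDegree_eq_of_degree_eq_some hPdeg
  -- and p ∣ l ^ s - 1, so e ∣ s, so s = e
  have horderζF : ∀ (z : L) (hz : z ∈ F), orderOf (⟨z, hz⟩ : F) = orderOf z := by
    intro z hz
    exact (orderOf_injective (algebraMap F L).toMonoidHom (RingHom.injective _) _).symm
  have hps : p ∣ l ^ s - 1 := by
    haveI : Fintype Fˣ := Fintype.ofFinite _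
    set ζF : F := ⟨ζ, hζF⟩ with hζFdef
    have hofin : orderOf ζF = p := by rw [horderζF ζ hζF, hζ]
    have hζF0 : ζF ≠ 0 := by
      intro h0
      have : ζ = 0 := by simpa [hζFdef, Subtype.ext_iff] using h0
      rw [this, zero_pow hp.ne_zero] at hζp
      exact zero_ne_one hζp
    have h2 : orderOf (Units.mk0 ζF hζF0) = p := by
      rw [← orderOf_units]; exact hofin
    have := orderOf_dvd_natCard (Units.mk0 ζF hζF0)
    rw [h2, Nat.card_units, Nat.card_eq_fintype_card, hcardF] at this
    exact this
  have hes : e ∣ s := by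
    rw [← hord]
    apply orderOf_dvd_of_pow_eq_one
    rw [cast_pow_eq_one_iff_dvd hp.one_lt l s (by omega)]
    exact hps
  have hse : s = e := by
    have h1 : l ^ s ≤ l ^ e := hcardF ▸ hcardle
    have hsle : s ≤ e := (Nat.pow_le_pow_iff_right (by omega)).mp h1
    have hspos : 0 < s := by
      rcases Nat.eq_zero_or_pos s with h0 | h
      · exfalso
        rw [h0, pow_zero] at hcardF
        exact Fintype.one_lt_card.ne' hcardF
      · exact h
    have := Nat.le_of_dvd hspos hes
    omega
  -- the subfield S = F ∩ K
  set K' : Subfield L := (algebraMap K L).fieldRange with hK'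
  set S : Subfield F := Subfield.comap (algebraMap F L) K' with hSdef
  -- minpoly K ζ has degree q
  have hfrk : Module.finrank K K⟮ζ⟯ = q := by
    have hdvd : Module.finrank K K⟮ζ⟯ ∣ q := by
      rw [← hdeg]
      exact ⟨Module.finrank K⟮ζ⟯ L, (Module.finrank_mul_finrank K K⟮ζ⟯ L).symm⟩
    rcases (Nat.Prime.eq_one_or_self_of_dvd hq _ hdvd) with h1 | h
    · exfalso
      rw [IntermediateField.finrank_eq_one_iff] at h1
      have : ζ ∈ (⊥ : IntermediateField K L) :=
        h1 ▸ IntermediateField.mem_adjoin_simple_self K ζ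
      exact hout (IntermediateField.mem_bot.mp this)
    · exact h
  set g := minpoly K ζ with hg
  have hgdeg : g.natDegree = q := (adjoin.finrank hintζK).symm.trans hfrk
  set G := g.map (algebraMap K L) with hG
  have hGmonic : G.Monic := (minpoly.monic hintζK).map _
  have hQmonic : ((X : L[X]) ^ p - 1).Monic := by
    have := monic_X_pow_sub_C (1 : L) hp.ne_zero
    simpa using this
  have hGdvd : G ∣ (X ^ p - 1 : L[X]) := by
    have h1 : minpoly K ζ ∣ ((X : K[X]) ^ p - 1) := minpoly.dvd K ζ (by simp [hζp])
    have h2 := Polynomial.map_dvd (algebraMap K L) h1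
    simpa using h2
  have hQsplits : ((X : L[X]) ^ p - 1).Splits := by
    rw [X_pow_sub_one_eq_prod hp.pos hprim]
    exact Splits.prod (fun μ _ => Splits.X_sub_C _)
  have hGsplits : G.Splits :=
    hQsplits.of_dvd hQmonic.ne_zero hGdvd
  have hGprod : G = (G.roots.map fun a => X - C a).prod :=
    hGsplits.eq_prod_roots_of_monic hGmonic
  have hrootsF : ∀ r ∈ G.roots, r ∈ F := by
    intro r hr
    have hrQ : r ^ p = 1 := by
      obtain ⟨u, hu⟩ := hGdvd
      have h0 : eval r G = 0 := (mem_roots hGmonic.ne_zero).mp hr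
      have h3 : eval r ((X : L[X]) ^ p - 1) = 0 := by rw [hu, eval_mul, h0, zero_mul]
      simpa [sub_eq_zero] using h3
    obtain ⟨i, _, hi⟩ := hprim.eq_pow_of_pow_eq_one hrQ
    exact hi ▸ pow_mem hζF i
  have hlin : ∀ (a : L), a ∈ F → ∀ i, ((X : L[X]) - C a).coeff i ∈ F := by
    intro a ha i
    rw [coeff_sub, coeff_X, coeff_C]
    split_ifs with h1 h2 h2
    · exact absurd (h1 ▸ h2) one_ne_zero
    · simpa using one_mem F
    · simpa using neg_mem ha
    · simpa using zero_mem F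
  have hcoeffF : ∀ j, G.coeff j ∈ F := by
    have key : ∀ (t : Multiset L), (∀ r ∈ t, r ∈ F) →
        ∀ j, ((t.map fun a => X - C a).prod).coeff j ∈ F := by
      intro t
      induction t using Multiset.induction with
      | empty =>
        intro _ j
        rw [Multiset.map_zero, Multiset.prod_zero, coeff_one]
        split_ifs
        · exact one_mem F
        · exact zero_mem F
      | cons a t ih =>
        intro hmem j
        rw [Multiset.map_cons, Multiset.prod_cons, coeff_mul]
        apply sum_mem
        rintro ⟨i1, i2⟩ _
        exact mul_mem (hlin a (hmem a (Multiset.mem_cons_self a t)) i1)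
          (ih (fun r hr => hmem r (Multiset.mem_cons_of_mem hr)) i2)
    intro j
    have hkey := key G.roots hrootsF j
    rwa [← hGprod] at hkey
  -- lift G to a polynomial over S
  set f' : S →+* L := ((algebraMap F L : F →+* L).comp (algebraMap S F : S →+* F)) with hf'
  have hrange : ∀ j, G.coeff j ∈ Set.range f' := by
    intro j
    have h1 : G.coeff j ∈ F := hcoeffF j
    have h2 : G.coeff j ∈ K' := by
      rw [hG, coeff_map]
      exact ⟨g.coeff j, rfl⟩
    have h3 : (⟨G.coeff j, h1⟩ : F) ∈ S := by
      rw [hSdef, Subfield.mem_comap]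
      exact h2
    exact ⟨⟨⟨G.coeff j, h1⟩, h3⟩, rfl⟩
  have hGlift : G ∈ lifts f' := (lifts_iff_coeff_lifts G).mpr hrange
  obtain ⟨g₀, hg₀map, hg₀deg, hg₀monic⟩ := lifts_and_degree_eq_and_monic hGlift hGmonic
  set ζF : F := ⟨ζ, hζF⟩ with hζFdef
  have hGeval : eval ζ G = 0 := by
    rw [hG, eval_map, ← aeval_def, hg, minpoly.aeval]
  have hmapsplit : g₀.map f' = (g₀.map (algebraMap S F)).map (algebraMap F L : F →+* L) := by
    rw [Polynomial.map_map]
  have hevalg₁ : eval ζF (g₀.map (algebraMap S F)) = 0 := by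
    apply (algebraMap F L).injective
    rw [map_zero]
    have h2 : eval ζ ((g₀.map (algebraMap S F)).map (algebraMap F L : F →+* L)) =
        algebraMap F L (eval ζF (g₀.map (algebraMap S F))) := by
      rw [eval_map]
      have hζeq : algebraMap F L ζF = ζ := rfl
      rw [← hζeq, eval₂_at_apply]
    rw [← h2, ← hmapsplit, hg₀map, hGeval]
  have hζFint : IsIntegral S ζF := by
    refine ⟨g₀, hg₀monic, ?_⟩
    rw [← eval_map]
    exact hevalg₁
  -- F = S(ζF)
  have hStop : IntermediateField.adjoin S ({ζF} : Set F) = ⊤ := by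
    rw [eq_top_iff]
    rintro ⟨x1, hx1⟩ -
    induction hx1 using IntermediateField.adjoin_induction with
    | mem x hx =>
      rcases hx with rfl
      exact IntermediateField.subset_adjoin _ _ (Set.mem_singleton_iff.mpr rfl)
    | algebraMap r =>
      have h1 : ∀ (hh : algebraMap (ZMod l) L r ∈ F),
          (⟨algebraMap (ZMod l) L r, hh⟩ : F) = ((r.val : ℕ) : F) := by
        intro hh
        apply Subtype.ext
        show algebraMap (ZMod l) L r = ((((r.val : ℕ) : F) : L))
        have h3 : ((((r.val : ℕ) : F) : L)) = ((r.val : ℕ) : L) :=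
          map_natCast (algebraMap F L) _
        rw [h3]
        conv_lhs => rw [← ZMod.natCast_rightInverse r]
        rw [map_natCast]
      rw [h1]
      exact IntermediateField.natCast_mem _ _
    | add x y hx hy ihx ihy => exact add_mem ihx ihy
    | inv x hx ihx => exact inv_mem ihx
    | mul x y hx hy ihx ihy => exact mul_mem ihx ihy
  -- finrank S F = q
  have hdegG : G.natDegree = q := by rw [hG, natDegree_map]; exact hgdeg
  have hdegGq : G.degree = (q : ℕ) := by
    rw [degree_eq_natDegree hGmonic.ne_zero, hdegG]
  have hdegg₀ : g₀.natDegree = q :=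
    natDegree_eq_of_degree_eq_some (hg₀deg.trans hdegGq)
  have hfrS : Module.finrank S F = (minpoly S ζF).natDegree := by
    have h1 := adjoin.finrank hζFint
    rw [hStop] at h1
    rw [← h1, IntermediateField.finrank_top']
  have hminle : (minpoly S ζF).natDegree ≤ q := by
    have h1 := minpoly.min (A := S) (x := ζF) hg₀monic (by rw [aeval_def, ← eval_map]; exact hevalg₁)
    have h2 := natDegree_le_natDegree h1
    exact le_trans h2 (le_of_eq hdegg₀)
  -- lower bound : q ≤ natDegree (minpoly S ζF)
  set h₀ := minpoly S ζF with hh₀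
  have hh₀monic : h₀.Monic := minpoly.monic hζFint
  have hHlift : h₀.map f' ∈ lifts (algebraMap K L) := by
    rw [lifts_iff_coeff_lifts]
    intro j
    rw [coeff_map]
    have hmem2 : (algebraMap F L) ((h₀.coeff j : S) : F) ∈ K' := (h₀.coeff j).2
    obtain ⟨w, hw⟩ := hmem2
    exact ⟨w, hw⟩
  obtain ⟨h₂, hh₂map, hh₂deg, hh₂monic⟩ :=
    lifts_and_degree_eq_and_monic hHlift (hh₀monic.map f')
  have haeval₂ : (aeval ζ) h₂ = 0 := by
    rw [aeval_def, ← eval_map, hh₂map]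
    have hsplit : h₀.map f' = (h₀.map (algebraMap S F)).map (algebraMap F L : F →+* L) := by
      rw [Polynomial.map_map]
    rw [hsplit, eval_map]
    have hζeq : algebraMap F L ζF = ζ := rfl
    rw [← hζeq, eval₂_at_apply]
    have h9 : eval ζF (h₀.map (algebraMap S F)) = 0 := by
      rw [eval_map, ← aeval_def, hh₀, minpoly.aeval]
    simp [h9]
  have hq_le : q ≤ h₀.natDegree := by
    have h1 : g.degree ≤ h₂.degree := minpoly.min K ζ hh₂monic haeval₂
    have h2 : h₂.degree = h₀.degree := by
      rw [hh₂deg]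
      exact degree_map_eq_of_injective (RingHom.injective f') h₀
    have h3 : g.degree ≤ h₀.degree := h2 ▸ h1
    have h4 := natDegree_le_natDegree h3
    omega
  have hrq : Module.finrank S F = q := by
    rw [hfrS]
    omega
  -- cardinality of S
  haveI : Finite S := Subtype.finite
  haveI : Fintype S := Fintype.ofFinite S
  haveI : CharP F l := charP_of_injective_ringHom (algebraMap (ZMod l) F).injective l
  haveI : CharP S l := ⟨fun n => by
    have h1 : ((n : ℕ) : S) = 0 ↔ (algebraMap S F) ((n : ℕ) : S) = 0 :=
      ⟨fun h => by rw [h, map_zero], fun h => (RingHom.injective (algebraMap S F))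
        (by rw [h, map_zero])⟩
    rw [h1, map_natCast, CharP.cast_eq_zero_iff F l n]⟩
  obtain ⟨t', hlprime, hcardS⟩ := FiniteField.card S l
  set t := (t' : ℕ) with ht'
  have hcardFS : Fintype.card F = Fintype.card S ^ (Module.finrank S F) :=
    Module.card_eq_pow_finrank (K := S) (V := F)
  have hpows : l ^ e = l ^ (t * q) := by
    rw [← hse, ← hcardF, hcardFS, hcardS, hrq, ← pow_mul]
  have het : e = t * q := Nat.pow_right_injective hl2 hpows
  have htval : t = q ^ (k - 1) * m := by
    have hqk : q ^ k = q ^ (k - 1) * q := by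
      rw [← pow_succ]
      congr 1
      omega
    apply Nat.eq_of_mul_eq_mul_right hq.pos
    calc t * q = e := het.symm
      _ = q ^ k * m := he
      _ = q ^ (k - 1) * q * m := by rw [hqk]
      _ = q ^ (k - 1) * m * q := by ring
  -- a generator of Sˣ
  haveI : Fintype Sˣ := Fintype.ofFinite _
  obtain ⟨gen, hgen⟩ := IsCyclic.exists_generator (α := Sˣ)
  have hgenord : orderOf gen = l ^ t - 1 := by
    rw [orderOf_eq_card_of_forall_mem_zpowers hgen]
    rw [Nat.card_units, Nat.card_eq_fintype_card, hcardS]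
  -- push the generator down to K
  have hwK : (algebraMap F L) ((gen : S) : F) ∈ K' := (gen : S).2
  obtain ⟨x, hx⟩ := hwK
  refine ⟨x, ?_⟩
  have ho1 : orderOf x = orderOf ((algebraMap K L) x) :=
    (orderOf_injective (algebraMap K L).toMonoidHom (RingHom.injective _) x).symm
  have ho2 : orderOf ((algebraMap F L) ((gen : S) : F)) = orderOf ((gen : S) : F) :=
    orderOf_injective (algebraMap F L).toMonoidHom (RingHom.injective _) _
  have ho3 : orderOf ((gen : S) : F) = orderOf (gen : S) :=
    orderOf_injective (algebraMap S F).toMonoidHom (RingHom.injective _) _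
  have ho4 : orderOf ((gen : Sˣ) : S) = orderOf gen := orderOf_units
  rw [ho1, hx, ho2, ho3, ho4, hgenord, htval]

lemma ord_facts {l q p k m : ℕ} (hl : l.Prime) (hq : q.Prime) (hp : p.Prime) (hpl : p ≠ l)
    (hord : orderOf ((l : ZMod p)) = q ^ k * m) (hk : 1 ≤ k) : q ≠ p ∧ 0 < m := by
  haveI : Fact p.Prime := ⟨hp⟩
  have h0 : (l : ZMod p) ≠ 0 := by
    rw [Ne, ZMod.natCast_eq_zero_iff]
    intro hdvd
    exact hpl ((Nat.prime_dvd_prime_iff_eq hp hl).mp hdvd)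
  have hu : orderOf (Units.mk0 (l : ZMod p) h0) = q ^ k * m := by
    rw [← orderOf_units]
    exact hord
  have hm0 : 0 < m := by
    have hpos : 0 < orderOf (Units.mk0 (l : ZMod p) h0) := orderOf_pos _
    rw [hu] at hpos
    rcases Nat.eq_zero_or_pos m with rfl | h
    · simp at hpos
    · exact h
  have hdvdcard : orderOf (Units.mk0 (l : ZMod p) h0) ∣ Fintype.card (ZMod p)ˣ :=
    orderOf_dvd_card
  rw [hu, ZMod.card_units_eq_totient, Nat.totient_prime hp] at hdvdcard
  have hqq : q ∣ q ^ k * m := Dvd.dvd.mul_right (dvd_pow_self q (by omega)) m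
  have hqp1 : q ∣ p - 1 := hqq.trans hdvdcard
  have hp2 : 2 ≤ p := hp.two_le
  have : q ≤ p - 1 := Nat.le_of_dvd (by omega) hqp1
  exact ⟨by omega, hm0⟩

/-- Let `l` be a prime and `K` a field of characteristic `l`. Let `L₁ ⊇ K` and `L₂ ⊇ K` be
two field extensions of prime degree `q`. Let `p₁ ≠ p₂` be primes distinct from `l`, with
`ord_{p₁}(l) = q^{k₁}·m₁`, `ord_{p₂}(l) = q^{k₂}·m₂`, `q ∤ m₁, m₂`, `k₁ ≠ k₂`, `k₁, k₂ ≥ 1`.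
If `θ₁^{n₁·p₁} ∈ K` and `θ₂^{n₂·p₂} ∈ K`, then `θ₁^{n₁} ∈ K` or `θ₂^{n₂} ∈ K`. -/
theorem stmt_5 {K L₁ L₂ : Type*} [Field K] [Field L₁] [Field L₂]
    [Algebra K L₁] [Algebra K L₂]
    (l q p₁ p₂ k₁ k₂ m₁ m₂ n₁ n₂ : ℕ) (hl : l.Prime) [CharP K l]
    (hq : q.Prime) (hp₁ : p₁.Prime) (hp₂ : p₂.Prime) (hpp : p₁ ≠ p₂)
    (hp₁l : p₁ ≠ l) (hp₂l : p₂ ≠ l)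
    (hdeg₁ : Module.finrank K L₁ = q) (hdeg₂ : Module.finrank K L₂ = q)
    (hord₁ : orderOf ((l : ZMod p₁)) = q ^ k₁ * m₁) (hm₁ : ¬ q ∣ m₁)
    (hord₂ : orderOf ((l : ZMod p₂)) = q ^ k₂ * m₂) (hm₂ : ¬ q ∣ m₂)
    (hk : k₁ ≠ k₂) (hk₁ : 1 ≤ k₁) (hk₂ : 1 ≤ k₂)
    (hn₁ : 0 < n₁) (hn₂ : 0 < n₂)
    (θ₁ : L₁) (θ₂ : L₂)
    (hθ₁ : θ₁ ^ (n₁ * p₁) ∈ Set.range (algebraMap K L₁))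
    (hθ₂ : θ₂ ^ (n₂ * p₂) ∈ Set.range (algebraMap K L₂)) :
    θ₁ ^ n₁ ∈ Set.range (algebraMap K L₁) ∨ θ₂ ^ n₂ ∈ Set.range (algebraMap K L₂) := by
  by_contra hcon
  push_neg at hcon
  obtain ⟨h1, h2⟩ := hcon
  obtain ⟨hqp₁, hm₁0⟩ := ord_facts hl hq hp₁ hp₁l hord₁ hk₁
  obtain ⟨hqp₂, hm₂0⟩ := ord_facts hl hq hp₂ hp₂l hord₂ hk₂
  obtain ⟨ζ₁, hζ₁ord, hζ₁out⟩ :=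
    exists_root_of_unity q p₁ hq hp₁ hqp₁ hdeg₁ n₁ θ₁ hθ₁ h1
  obtain ⟨ζ₂, hζ₂ord, hζ₂out⟩ :=
    exists_root_of_unity q p₂ hq hp₂ hqp₂ hdeg₂ n₂ θ₂ hθ₂ h2
  have ha₁ := no_order_p (K := K) hp₁ hζ₁ord hζ₁out
  have ha₂ := no_order_p (K := K) hp₂ hζ₂ord hζ₂out
  have hb₁ := subfield_elt l q p₁ k₁ m₁ hl hq hp₁ hdeg₁ hord₁ hk₁ hm₁0 hζ₁ord hζ₁out
  have hb₂ := subfield_elt l q p₂ k₂ m₂ hl hq hp₂ hdeg₂ hord₂ hk₂ hm₂0 hζ₂ord hζ₂out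
  rcases lt_or_gt_of_ne hk with hlt | hgt
  · exact assembly hl hq hp₁ hord₁ hm₁ hk₁ hm₁0 hm₂0 hlt ha₁ hb₁ hb₂
  · exact assembly hl hq hp₂ hord₂ hm₂ hk₂ hm₂0 hm₁0 hgt ha₂ hb₂ hb₁
end

section
/- Let l be a prime number and let K be a field of characteristic l. Let L ⊇ K be a field extension with [L : K] = q, where q is a prime number. Let p₁ ≠ p₂ be two different prime numbers, both distinct from l and from q, such that v_q(ord_{p₁}(l)) ≠ v_q(ord_{p₂}(l)). Let θ ∈ L be an element such that θ^{p₁·p₂} ∈ K. Then θ^{p₁} ∈ K or θ^{p₂} ∈ K. -/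
set_option linter.unusedSectionVars false
set_option maxHeartbeats 1000000
set_option synthInstance.maxHeartbeats 1000000

open Polynomial IntermediateField

namespace Stmt6Aux

variable {L : Type*} [Field L]

lemma pow_pow_stable {l : ℕ} {x : L} {m : ℕ} (h : x ^ l ^ m = x) (k : ℕ) :
    x ^ l ^ (m * k) = x := by
  induction k with
  | zero => simp
  | succ k ih =>
    have : l ^ (m * (k+1)) = l ^ (m * k) * l ^ m := by ring
    rw [this, pow_mul, ih, h]

lemma pow_pow_dvd {l : ℕ} {x : L} {m n : ℕ} (hmn : m ∣ n) (h : x ^ l ^ m = x) :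
    x ^ l ^ n = x := by
  obtain ⟨k, rfl⟩ := hmn
  exact pow_pow_stable h k

lemma pow_pow_gcd {l : ℕ} {x : L} {a b : ℕ} (ha : x ^ l ^ a = x) (hb : x ^ l ^ b = x) :
    x ^ l ^ (Nat.gcd a b) = x := by
  induction a using Nat.strong_induction_on generalizing b with
  | _ a ih =>
  rcases Nat.eq_zero_or_pos a with rfl | hapos
  · simpa using hb
  · rw [Nat.gcd_rec a b]
    have hmod : x ^ l ^ (b % a) = x := by
      have h2 : x ^ l ^ (a * (b / a) + b % a) = x := by rw [Nat.div_add_mod]; exact hb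
      rw [pow_add, pow_mul] at h2
      rwa [pow_pow_stable ha (b / a)] at h2
    exact ih (b % a) (Nat.mod_lt b hapos) hmod ha

section Rsf

variable (L)
variable {l : ℕ} [ExpChar L l]

/-- fixed field of `m`-th iterate of Frobenius -/
def Rsf (l : ℕ) [ExpChar L l] (m : ℕ) : Subfield L :=
  RingHom.eqLocusField (iterateFrobenius L l m) (RingHom.id L)

variable {L}

lemma mem_Rsf {m : ℕ} {x : L} : x ∈ Rsf L l m ↔ x ^ l ^ m = x := by
  constructor
  · intro h
    have : iterateFrobenius L l m x = RingHom.id L x := h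
    rwa [iterateFrobenius_def, RingHom.id_apply] at this
  · intro h
    show iterateFrobenius L l m x = RingHom.id L x
    rwa [iterateFrobenius_def, RingHom.id_apply]

lemma Rsf_le_Rsf {m n : ℕ} (hmn : m ∣ n) : Rsf L l m ≤ Rsf L l n := by
  intro x hx
  rw [mem_Rsf] at hx ⊢
  exact pow_pow_dvd hmn hx

lemma natDegree_frobPoly (hl : 2 ≤ l) {m : ℕ} (hm : m ≠ 0) :
    ((X : L[X]) ^ l ^ m - X).natDegree = l ^ m := by
  have h2 : 2 ≤ l ^ m := le_trans hl (Nat.le_self_pow hm l)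
  have hdX : (X : L[X]).degree < (X ^ l ^ m : L[X]).degree := by
    rw [degree_X, degree_X_pow]
    exact_mod_cast h2.trans_lt' one_lt_two
  rw [natDegree_sub_eq_left_of_natDegree_lt]
  · simp
  · simp only [natDegree_X, natDegree_X_pow]
    omega

lemma frobPoly_ne_zero (hl : 2 ≤ l) {m : ℕ} (hm : m ≠ 0) :
    ((X : L[X]) ^ l ^ m - X) ≠ 0 := by
  intro h
  have h2 : 2 ≤ l ^ m := le_trans hl (Nat.le_self_pow hm l)
  have := natDegree_frobPoly (L := L) hl hm
  rw [h, natDegree_zero] at this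
  omega

lemma Rsf_subset_roots {m : ℕ} :
    (Rsf L l m : Set L) ⊆ {x | ((X : L[X]) ^ l ^ m - X).IsRoot x} := by
  intro x hx
  rw [SetLike.mem_coe, mem_Rsf] at hx
  simp [IsRoot, hx]

lemma Rsf_finite (hl : 2 ≤ l) {m : ℕ} (hm : m ≠ 0) : (Rsf L l m : Set L).Finite :=
  Set.Finite.subset (finite_setOf_isRoot (frobPoly_ne_zero hl hm)) Rsf_subset_roots

lemma Rsf_ncard_le (hl : 2 ≤ l) {m : ℕ} (hm : m ≠ 0) :
    (Rsf L l m : Set L).ncard ≤ l ^ m := by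
  classical
  have hne := frobPoly_ne_zero (L := L) hl hm
  have hset : {x : L | ((X : L[X]) ^ l ^ m - X).IsRoot x}
      = ↑(((X : L[X]) ^ l ^ m - X).roots.toFinset) := by
    ext x
    simp [mem_roots, hne]
  have h1 := Set.ncard_le_ncard (Rsf_subset_roots (L := L) (l := l) (m := m))
    (finite_setOf_isRoot hne)
  refine h1.trans ?_
  rw [hset, Set.ncard_coe_finset]
  calc (((X : L[X]) ^ l ^ m - X).roots.toFinset.card)
      ≤ Multiset.card ((X : L[X]) ^ l ^ m - X).roots := Multiset.toFinset_card_le _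
    _ ≤ ((X : L[X]) ^ l ^ m - X).natDegree := card_roots' _
    _ ≤ l ^ m := le_of_eq (natDegree_frobPoly hl hm)

lemma frobPoly_dvd (hl : 2 ≤ l) {m t : ℕ} (hm : m ≠ 0) (hmt : m ∣ t) :
    ((X : L[X]) ^ l ^ m - X) ∣ ((X : L[X]) ^ l ^ t - X) := by
  have h1 : (l ^ m - 1) ∣ (l ^ t - 1) := by
    obtain ⟨k, rfl⟩ := hmt
    have := Nat.sub_dvd_pow_sub_pow (l ^ m) 1 k
    simpa [← pow_mul] using this
  have h2 : ((X : L[X]) ^ (l ^ m - 1) - 1) ∣ ((X : L[X]) ^ (l ^ t - 1) - 1) := by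
    obtain ⟨c, hc⟩ := h1
    rw [hc, pow_mul]
    simpa using sub_dvd_pow_sub_pow ((X : L[X]) ^ (l ^ m - 1)) 1 c
  have key : ∀ n : ℕ, n ≠ 0 → ((X : L[X]) ^ l ^ n - X) = X * ((X : L[X]) ^ (l ^ n - 1) - 1) := by
    intro n hn
    have h3 : (X : L[X]) * X ^ (l ^ n - 1) = X ^ l ^ n := by
      rw [← pow_succ']
      congr 1
      have : 1 ≤ l ^ n := Nat.one_le_pow _ _ (by omega)
      omega
    rw [mul_sub, mul_one, h3]
  rcases Nat.eq_zero_or_pos t with rfl | ht0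
  · have : ((X : L[X]) ^ l ^ 0 - X) = 0 := by simp
    rw [this]
    exact dvd_zero _
  rw [key m hm, key t (by omega)]
  exact mul_dvd_mul_left _ h2

lemma Rsf_ncard_eq_of_dvd (hl : 2 ≤ l) {m t : ℕ} (hm : m ≠ 0) (ht : t ≠ 0) (hmt : m ∣ t)
    (hcard : (Rsf L l t : Set L).ncard = l ^ t) :
    (Rsf L l m : Set L).ncard = l ^ m := by
  classical
  set ft := ((X : L[X]) ^ l ^ t - X) with hft
  set fm := ((X : L[X]) ^ l ^ m - X) with hfm
  have hftne : ft ≠ 0 := frobPoly_ne_zero hl ht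
  have hfmne : fm ≠ 0 := frobPoly_ne_zero hl hm
  -- the root-finset of ft contains Rsf t
  have hsubt : (Rsf L l t : Set L) ⊆ ↑(ft.roots.toFinset) := by
    intro x hx
    have h6 := Rsf_subset_roots (L := L) (l := l) (m := t) hx
    simp only [Finset.coe_sort_coe, Multiset.mem_toFinset, Finset.mem_coe, mem_roots hftne]
    exact h6
  have hfin : (Rsf L l t : Set L).Finite := Rsf_finite hl ht
  have hge : l ^ t ≤ ft.roots.toFinset.card := by
    rw [← hcard, ← Set.ncard_coe_finset]
    exact Set.ncard_le_ncard hsubt (Set.toFinite _)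
  have hchain : ft.roots.toFinset.card ≤ Multiset.card ft.roots :=
    Multiset.toFinset_card_le _
  have hdeg : ft.natDegree = l ^ t := natDegree_frobPoly hl ht
  have hcards : Multiset.card ft.roots = ft.natDegree := by
    have := card_roots' ft
    omega
  have hnodup : ft.roots.Nodup := by
    rw [← Multiset.toFinset_card_eq_card_iff_nodup]
    omega
  have hsplits_t : Splits ft := splits_iff_card_roots.mpr hcards
  have hdvd : fm ∣ ft := frobPoly_dvd hl hm hmt
  have hsplits_m : Splits fm := hsplits_t.of_dvd hftne hdvd
  have hle : fm.roots ≤ ft.roots := roots.le_of_dvd hftne hdvd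
  have hnodup_m : fm.roots.Nodup := Multiset.nodup_of_le hle hnodup
  have hcards_m : Multiset.card fm.roots = l ^ m := by
    rw [splits_iff_card_roots.mp hsplits_m]
    exact natDegree_frobPoly hl hm
  -- roots of fm are in Rsf m
  have hsubm : ↑(fm.roots.toFinset) ⊆ (Rsf L l m : Set L) := by
    intro x hx
    simp only [Finset.coe_sort_coe, Multiset.mem_toFinset, Finset.mem_coe] at hx
    rw [mem_roots hfmne] at hx
    have hx2 := hx
    rw [SetLike.mem_coe, mem_Rsf]
    have h4 : x ^ l ^ m - x = 0 := by simpa [hfm, IsRoot] using hx2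
    have h5 := sub_eq_zero.mp h4
    exact h5
  have h1 : l ^ m ≤ (Rsf L l m : Set L).ncard := by
    have : fm.roots.toFinset.card = l ^ m := by
      rw [Multiset.toFinset_card_eq_card_iff_nodup.mpr hnodup_m]; exact hcards_m
    rw [← this, ← Set.ncard_coe_finset]
    exact Set.ncard_le_ncard hsubm (Rsf_finite hl hm)
  have h2 := Rsf_ncard_le (L := L) (l := l) hl hm
  omega

end Rsf

lemma coeff_prod_mem (S : Subfield L) (s : Multiset L) (hs : ∀ r ∈ s, r ∈ S) :
    ∀ i, ((s.map fun r => X - C r).prod).coeff i ∈ S := by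
  classical
  induction s using Multiset.induction_on with
  | empty =>
    intro i
    simp only [Multiset.map_zero, Multiset.prod_zero, coeff_one]
    split_ifs
    · exact S.one_mem
    · exact S.zero_mem
  | cons a s ih =>
    intro i
    have ha : a ∈ S := hs a (Multiset.mem_cons_self a s)
    have hs' : ∀ r ∈ s, r ∈ S := fun r hr => hs r (Multiset.mem_cons_of_mem hr)
    rw [Multiset.map_cons, Multiset.prod_cons, coeff_mul]
    refine S.sum_mem fun p hp => ?_
    refine S.mul_mem ?_ (ih hs' p.2)
    rw [coeff_sub, coeff_X, coeff_C]
    split_ifs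
    · exact S.sub_mem S.one_mem ha
    · exact S.sub_mem S.one_mem S.zero_mem
    · exact S.sub_mem S.zero_mem ha
    · exact S.sub_mem S.zero_mem S.zero_mem

lemma zmod_pow_one_iff {p l e : ℕ} [Fact p.Prime] (hl : 1 ≤ l) :
    ((l : ZMod p)) ^ e = 1 ↔ p ∣ l ^ e - 1 := by
  have h1 : 1 ≤ l ^ e := Nat.one_le_pow _ _ hl
  rw [← ZMod.natCast_eq_zero_iff]
  have hc : ((l ^ e - 1 : ℕ) : ZMod p) = (l : ZMod p) ^ e - 1 := by
    rw [Nat.cast_sub h1]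
    push_cast
    ring
  rw [hc, sub_eq_zero]


section Key

variable {K : Type*} [Field K] {Lf : Type*} [Field Lf] [Algebra K Lf]

set_option maxHeartbeats 1600000 in
lemma key {l q p : ℕ} (hl : l.Prime) [CharP Lf l] [ExpChar Lf l]
    (hq : q.Prime) (hp : p.Prime) (hpl : p ≠ l) (hpq : p ≠ q)
    (hdeg : Module.finrank K Lf = q) (ζ : Lf) (hζo : orderOf ζ = p)
    (hζ : ζ ∉ Set.range (algebraMap K Lf)) :
    ∃ t : ℕ, t ≠ 0 ∧ orderOf ((l : ZMod p)) = t * q ∧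
      (Rsf Lf l t : Set Lf) ⊆ Set.range (algebraMap K Lf) ∧
      (Rsf Lf l t : Set Lf).ncard = l ^ t ∧
      ((Rsf Lf l (orderOf ((l : ZMod p))) : Set Lf) ∩ Set.range (algebraMap K Lf)
        ⊆ (Rsf Lf l t : Set Lf)) := by
  classical
  haveI : Fact p.Prime := ⟨hp⟩
  haveI : Fact q.Prime := ⟨hq⟩
  have hlu : (l : ZMod p) ≠ 0 := by
    rw [Ne, ZMod.natCast_eq_zero_iff]
    intro hdvd
    exact hpl ((Nat.prime_dvd_prime_iff_eq hp hl).mp hdvd)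
  set d := orderOf ((l : ZMod p)) with hdd
  have hford : IsOfFinOrder (l : ZMod p) := isOfFinOrder_iff_pow_eq_one.mpr
    ⟨p - 1, by have := hp.two_le; omega, ZMod.pow_card_sub_one_eq_one hlu⟩
  have hd0 : d ≠ 0 := hford.orderOf_pos.ne'
  have hpow1 : ((l : ZMod p)) ^ d = 1 := pow_orderOf_eq_one _
  have hpd : p ∣ l ^ d - 1 := (zmod_pow_one_iff hl.one_le).mp hpow1
  have hζp : ζ ^ p = 1 := by rw [← hζo]; exact pow_orderOf_eq_one ζ
  have hroot_mem : ∀ r : Lf, r ^ p = 1 → r ∈ Rsf Lf l d := by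
    intro r hr
    rw [mem_Rsf]
    obtain ⟨c, hc⟩ := hpd
    have h1 : 1 ≤ l ^ d := Nat.one_le_pow _ _ hl.pos
    have h2 : l ^ d = p * c + 1 := by omega
    calc r ^ l ^ d = (r ^ p) ^ c * r := by rw [h2, pow_add, pow_mul, pow_one]
    _ = r := by rw [hr, one_pow, one_mul]
  have hζd : ζ ∈ Rsf Lf l d := hroot_mem ζ hζp
  haveI : FiniteDimensional K Lf := Module.finite_of_finrank_pos (by rw [hdeg]; exact hq.pos)
  have hint : IsIntegral K ζ := IsIntegral.of_finite K ζ
  have hfr : Module.finrank K K⟮ζ⟯ * Module.finrank K⟮ζ⟯ Lf = q := by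
    rw [Module.finrank_mul_finrank, hdeg]
  have hdvdq : Module.finrank K K⟮ζ⟯ ∣ q := Dvd.intro _ hfr
  have hfr1 : Module.finrank K ↥K⟮ζ⟯ ≠ 1 := by
    intro h
    have hbot := IntermediateField.finrank_eq_one_iff.mp h
    have : ζ ∈ (⊥ : IntermediateField K Lf) := by
      rw [← hbot]; exact IntermediateField.mem_adjoin_simple_self K ζ
    rw [IntermediateField.mem_bot] at this
    exact hζ this
  have hfrq : Module.finrank K ↥K⟮ζ⟯ = q :=
    (hq.eq_one_or_self_of_dvd _ hdvdq).resolve_left hfr1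
  have hgdeg : (minpoly K ζ).natDegree = q := by
    rw [← IntermediateField.adjoin.finrank hint, hfrq]
  set g := minpoly K ζ with hg
  set gL := g.map (algebraMap K Lf) with hgL
  have hgmon : g.Monic := minpoly.monic hint
  have hgLmon : gL.Monic := hgmon.map _
  have hgLdeg : gL.natDegree = q := by rw [hgL, natDegree_map, hgdeg]
  have hdvd1 : g ∣ (X ^ p - C 1 : K[X]) := minpoly.dvd K ζ (by simp [hζp])
  have hdvdL : gL ∣ (X ^ p - C 1 : Lf[X]) := by
    have h3 := Polynomial.map_dvd (algebraMap K Lf) hdvd1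
    simpa using h3
  have hprim : IsPrimitiveRoot ζ p := by rw [← hζo]; exact IsPrimitiveRoot.orderOf ζ
  have hXp_ne : (X ^ p - C 1 : Lf[X]) ≠ 0 := X_pow_sub_C_ne_zero hp.pos 1
  have hsplXp : Splits (X ^ p - C 1 : Lf[X]) := by
    rw [splits_iff_card_roots]
    have h4 : (X ^ p - C 1 : Lf[X]).roots = nthRoots p (1 : Lf) := rfl
    rw [h4, hprim.card_nthRoots_one, natDegree_X_pow_sub_C]
  have hsplg : Splits gL := hsplXp.of_dvd hXp_ne hdvdL
  have hgprod : gL = (gL.roots.map fun a => X - C a).prod :=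
    hsplg.eq_prod_roots_of_monic hgLmon
  have hroots_mem : ∀ r ∈ gL.roots, r ∈ Rsf Lf l d := by
    intro r hr
    rw [mem_roots hgLmon.ne_zero] at hr
    have h5 : (X ^ p - C 1 : Lf[X]).eval r = 0 := eval_eq_zero_of_dvd_of_eval_eq_zero hdvdL hr
    have hrp : r ^ p = 1 := by
      rw [eval_sub, eval_pow, eval_X, eval_C, sub_eq_zero] at h5
      exact h5
    exact hroot_mem r hrp
  have hgLcoef : ∀ i, gL.coeff i ∈ Rsf Lf l d := by
    intro i
    rw [hgprod]
    exact coeff_prod_mem _ _ hroots_mem i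
  set K' := (algebraMap K Lf).fieldRange with hK'
  set E' := Rsf Lf l d ⊓ K' with hE'
  have hgLcoefE : ∀ i, gL.coeff i ∈ E' := by
    intro i
    refine ⟨hgLcoef i, ?_⟩
    rw [hgL, coeff_map]
    exact ⟨g.coeff i, rfl⟩
  have hE'sub : (E' : Set Lf) ⊆ (Rsf Lf l d : Set Lf) := fun x hx => hx.1
  have hE'fin : (E' : Set Lf).Finite := (Rsf_finite hl.two_le hd0).subset hE'sub
  haveI : Finite ↥E' := hE'fin.to_subtype
  haveI : Fintype ↥E' := Fintype.ofFinite _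
  haveI : CharP ↥E' l := ((E'.subtype).charP_iff Subtype.val_injective l).mpr ‹CharP Lf l›
  obtain ⟨tp, _, hcardE'⟩ := FiniteField.card ↥E' l
  set t : ℕ := ↑tp with htdef
  have ht0 : t ≠ 0 := tp.pos.ne'
  -- integrality of ζ over E'
  have hintE : IsIntegral ↥E' ζ :=
    ⟨X ^ p - C 1, monic_X_pow_sub_C _ hp.ne_zero, by simp [hζp]⟩
  -- natDegree of minpoly over E' equals q
  have hcoeff_range : ∀ i, gL.coeff i ∈ Set.range (algebraMap ↥E' Lf) := by
    intro i
    exact ⟨⟨gL.coeff i, hgLcoefE i⟩, rfl⟩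
  have hlift : gL ∈ Polynomial.lifts (algebraMap ↥E' Lf) :=
    (Polynomial.lifts_iff_coeff_lifts gL).mpr hcoeff_range
  obtain ⟨g', hg'map, hg'deg, hg'mon⟩ := Polynomial.lifts_and_degree_eq_and_monic hlift hgLmon
  have hevalgL : eval ζ gL = 0 := by
    rw [hgL, Polynomial.eval_map, ← aeval_def]
    exact minpoly.aeval K ζ
  have haevalg' : (aeval ζ) g' = 0 := by
    rw [aeval_def, ← Polynomial.eval_map, hg'map]
    exact hevalgL
  have hminE_le : (minpoly ↥E' ζ).natDegree ≤ q := by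
    have h6 := minpoly.min ↥E' ζ hg'mon haevalg'
    have h7 : (minpoly ↥E' ζ).natDegree ≤ g'.natDegree :=
      natDegree_le_natDegree h6
    have h8 : g'.natDegree = q := by
      have := natDegree_eq_of_degree_eq hg'deg
      rw [this, hgLdeg]
    omega
  have hminE_ge : q ≤ (minpoly ↥E' ζ).natDegree := by
    set h := minpoly ↥E' ζ with hh
    have hhmon : h.Monic := minpoly.monic hintE
    set hLf := h.map (algebraMap ↥E' Lf) with hhL
    have hhLmon : hLf.Monic := hhmon.map _
    have hlift2 : hLf ∈ Polynomial.lifts (algebraMap K Lf) := by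
      rw [Polynomial.lifts_iff_coeff_lifts]
      intro n
      rw [hhL, coeff_map]
      have : ((h.coeff n : Lf)) ∈ K' := (h.coeff n).2.2
      obtain ⟨y, hy⟩ := this
      exact ⟨y, hy⟩
    obtain ⟨hK, hKmap, hKdeg, hKmon⟩ := Polynomial.lifts_and_degree_eq_and_monic hlift2 hhLmon
    have haevalK : (aeval ζ) hK = 0 := by
      rw [aeval_def, ← Polynomial.eval_map, hKmap, hhL, Polynomial.eval_map, ← aeval_def]
      exact minpoly.aeval ↥E' ζ
    have h9 := minpoly.min K ζ hKmon haevalK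
    have h10 : g.natDegree ≤ hK.natDegree := natDegree_le_natDegree h9
    have h11 : hK.natDegree = h.natDegree := by
      have e1 := natDegree_eq_of_degree_eq hKdeg
      rw [e1, hhL, natDegree_map]
    omega
  have hminEq : (minpoly ↥E' ζ).natDegree = q := le_antisymm hminE_le hminE_ge
  -- the intermediate field E'⟮ζ⟯ over E'
  have hT : ∀ x : ↥E', algebraMap ↥E' Lf x ∈ Rsf Lf l d := fun x => x.2.1
  set T : IntermediateField ↥E' Lf := Subfield.toIntermediateField (Rsf Lf l d) hT with hTdef
  set M : IntermediateField ↥E' Lf := IntermediateField.adjoin ↥E' {ζ} with hM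
  have hMT : M ≤ T := by
    rw [hM]
    rw [IntermediateField.adjoin_le_iff]
    intro x hx
    rw [Set.mem_singleton_iff] at hx
    subst hx
    exact hζd
  have hMsub : (M : Set Lf) ⊆ (Rsf Lf l d : Set Lf) := fun x hx => hMT hx
  have hMfin : (M : Set Lf).Finite := (Rsf_finite hl.two_le hd0).subset hMsub
  haveI : Finite ↥M := hMfin.to_subtype
  haveI : Fintype ↥M := Fintype.ofFinite _
  have hMrank : Module.finrank ↥E' ↥M = q := by
    have h20 : Module.finrank ↥E' ↥(IntermediateField.adjoin ↥E' {ζ}) = q := by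
      rw [IntermediateField.adjoin.finrank hintE]
      exact hminEq
    exact h20
  have hcardM : Fintype.card ↥M = Fintype.card ↥E' ^ q := by
    rw [← hMrank]
    exact Module.card_eq_pow_finrank
  -- card M = l ^ d
  haveI : CharP ↥M l :=
    ((M.toSubfield.subtype).charP_iff Subtype.val_injective l).mpr ‹CharP Lf l›
  obtain ⟨ep, _, hcardM2⟩ := FiniteField.card ↥M l
  have hζM : ζ ∈ M := IntermediateField.mem_adjoin_simple_self ↥E' ζ
  set ζM : ↥M := ⟨ζ, hζM⟩ with hζMdef
  have hordM : orderOf ζM = p := by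
    rw [← hζo]
    exact (orderOf_injective (M.toSubfield.subtype.toMonoidHom) Subtype.val_injective ζM).symm
  have hζM0 : ζM ≠ 0 := by
    intro h0
    have : ζ = 0 := congrArg Subtype.val h0
    rw [this] at hζp
    simp [zero_pow hp.ne_zero] at hζp
  have hpM : p ∣ Fintype.card ↥M - 1 := by
    rw [← hordM]
    exact orderOf_dvd_of_pow_eq_one (FiniteField.pow_card_sub_one_eq_one ζM hζM0)
  have hde : d ∣ (ep : ℕ) := by
    have hple : p ∣ l ^ (ep : ℕ) - 1 := by rw [← hcardM2]; exact hpM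
    have : ((l : ZMod p)) ^ (ep : ℕ) = 1 := (zmod_pow_one_iff hl.one_le).mpr hple
    exact orderOf_dvd_of_pow_eq_one this
  have hcardM_ge : l ^ d ≤ Fintype.card ↥M := by
    rw [hcardM2]
    exact Nat.pow_le_pow_right hl.pos (Nat.le_of_dvd ep.pos hde)
  have hcardM_le : Fintype.card ↥M ≤ l ^ d := by
    have h12 : (M : Set Lf).ncard ≤ (Rsf Lf l d : Set Lf).ncard :=
      Set.ncard_le_ncard hMsub (Rsf_finite hl.two_le hd0)
    have h13 : (M : Set Lf).ncard = Fintype.card ↥M := by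
      rw [← Nat.card_coe_set_eq, Nat.card_eq_fintype_card]
      congr 1
    have h14 := Rsf_ncard_le (L := Lf) (l := l) hl.two_le hd0
    omega
  have hcardM_eq : Fintype.card ↥M = l ^ d := le_antisymm hcardM_le hcardM_ge
  have hdtq : d = t * q := by
    have h15 : l ^ d = (l ^ t) ^ q := by
      rw [← hcardE', ← hcardM_eq, hcardM]
    rw [← pow_mul] at h15
    exact Nat.pow_right_injective hl.two_le h15
  -- E' = Rsf t as sets
  have hE'_sub_Rt : (E' : Set Lf) ⊆ (Rsf Lf l t : Set Lf) := by
    intro x hx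
    rw [SetLike.mem_coe, mem_Rsf]
    have h16 : (⟨x, hx⟩ : ↥E') ^ (l ^ t) = ⟨x, hx⟩ := by
      rw [← hcardE']
      exact FiniteField.pow_card _
    have := congrArg Subtype.val h16
    simpa using this
  have hcardE'2 : (E' : Set Lf).ncard = l ^ t := by
    rw [← Nat.card_coe_set_eq, Nat.card_eq_fintype_card, ← hcardE']
    congr 1
  have hRt_eq : (Rsf Lf l t : Set Lf) = (E' : Set Lf) := by
    refine (Set.eq_of_subset_of_ncard_le hE'_sub_Rt ?_ (Rsf_finite hl.two_le ht0)).symm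
    rw [hcardE'2]
    exact Rsf_ncard_le hl.two_le ht0
  refine ⟨t, ht0, hdtq, ?_, ?_, ?_⟩
  · intro x hx
    rw [hRt_eq] at hx
    exact hx.2
  · rw [hRt_eq, hcardE'2]
  · intro x hx
    rw [hRt_eq]
    exact ⟨hx.1, hx.2⟩

end Key


section Final

variable {K : Type*} [Field K] {Lf : Type*} [Field Lf] [Algebra K Lf]

lemma final {l q : ℕ} (hl : l.Prime) [CharP Lf l] [ExpChar Lf l]
    (hq : q.Prime) {d d' t t' : ℕ}
    (hd : d = t * q) (hd' : d' = t' * q) (ht : t ≠ 0) (ht' : t' ≠ 0)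
    (hval : padicValNat q d < padicValNat q d')
    (hsub' : (Rsf Lf l t' : Set Lf) ⊆ Set.range (algebraMap K Lf))
    (hcard' : (Rsf Lf l t' : Set Lf).ncard = l ^ t')
    (hmax : (Rsf Lf l d : Set Lf) ∩ Set.range (algebraMap K Lf) ⊆ (Rsf Lf l t : Set Lf)) :
    False := by
  haveI : Fact q.Prime := ⟨hq⟩
  have hq1 : 1 < q := hq.one_lt
  have hvq : padicValNat q q = 1 := padicValNat.self hq1
  have hvd : padicValNat q d = padicValNat q t + 1 := by
    rw [hd, padicValNat.mul ht hq.pos.ne', hvq]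
  have hvd' : padicValNat q d' = padicValNat q t' + 1 := by
    rw [hd', padicValNat.mul ht' hq.pos.ne', hvq]
  set a := padicValNat q d with ha
  have ha1 : 1 ≤ a := by omega
  have hqa_t' : q ^ a ∣ t' := by
    have h1 : q ^ padicValNat q t' ∣ t' := pow_padicValNat_dvd
    have h2 : a ≤ padicValNat q t' := by omega
    exact dvd_trans (pow_dvd_pow q h2) h1
  have hqa0 : q ^ a ≠ 0 := pow_ne_zero _ hq.pos.ne'
  have hcard_qa : (Rsf Lf l (q ^ a) : Set Lf).ncard = l ^ q ^ a :=
    Rsf_ncard_eq_of_dvd hl.two_le hqa0 ht' hqa_t' hcard'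
  have hsub_qa : (Rsf Lf l (q ^ a) : Set Lf) ⊆ Set.range (algebraMap K Lf) :=
    fun x hx => hsub' (Rsf_le_Rsf hqa_t' hx)
  have hqad : q ^ a ∣ d := by rw [ha]; exact pow_padicValNat_dvd
  have hsub2 : (Rsf Lf l (q ^ a) : Set Lf) ⊆ (Rsf Lf l (q ^ (a - 1)) : Set Lf) := by
    intro x hx
    have hxd : x ∈ Rsf Lf l d := Rsf_le_Rsf hqad hx
    have hxt : x ∈ Rsf Lf l t := hmax ⟨hxd, hsub_qa hx⟩
    have hg : x ^ l ^ (Nat.gcd (q ^ a) t) = x :=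
      pow_pow_gcd (mem_Rsf.mp hx) (mem_Rsf.mp hxt)
    have hgd : Nat.gcd (q ^ a) t ∣ q ^ (a - 1) := by
      have h3 : Nat.gcd (q ^ a) t ∣ q ^ a := Nat.gcd_dvd_left _ _
      obtain ⟨j, hj, hje⟩ := (Nat.dvd_prime_pow hq).mp h3
      have hjle : j ≤ a - 1 := by
        by_contra hcontra
        have hja : j = a := by omega
        have h4 : q ^ a ∣ t := by
          rw [← hja, ← hje]
          exact Nat.gcd_dvd_right _ _
        have h5 : ¬ q ^ (padicValNat q t + 1) ∣ t := pow_succ_padicValNat_not_dvd ht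
        have h6 : padicValNat q t + 1 = a := by omega
        rw [h6] at h5
        exact h5 h4
      rw [hje]
      exact pow_dvd_pow q hjle
    rw [SetLike.mem_coe, mem_Rsf]
    exact pow_pow_dvd hgd hg
  have hfin := Rsf_finite (L := Lf) (l := l) hl.two_le (pow_ne_zero (a - 1) hq.pos.ne')
  have hle2 := Set.ncard_le_ncard hsub2 hfin
  have hub := Rsf_ncard_le (L := Lf) (l := l) hl.two_le (pow_ne_zero (a - 1) hq.pos.ne')
  rw [hcard_qa] at hle2
  have hlt : q ^ (a - 1) < q ^ a := Nat.pow_lt_pow_right hq1 (by omega)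
  have hfinal := Nat.pow_lt_pow_right hl.one_lt hlt
  omega

lemma exists_zeta {q p : ℕ} (hq : q.Prime) (hp : p.Prime) (hpq : p ≠ q)
    (hdeg : Module.finrank K Lf = q) {c : Lf} (hc : c ∉ Set.range (algebraMap K Lf))
    (hcp : c ^ p ∈ Set.range (algebraMap K Lf)) :
    ∃ ζ : Lf, orderOf ζ = p ∧ ζ ∉ Set.range (algebraMap K Lf) := by
  haveI : FiniteDimensional K Lf := Module.finite_of_finrank_pos (by rw [hdeg]; exact hq.pos)
  obtain ⟨aK, haK⟩ := hcp
  by_cases hex : ∃ e : K, e ^ p = aK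
  · obtain ⟨e, he⟩ := hex
    have he0 : e ≠ 0 := by
      rintro rfl
      have h1 : aK = 0 := by rw [← he]; simp [zero_pow hp.ne_zero]
      rw [h1, map_zero] at haK
      have h2 : c = 0 := pow_eq_zero_iff hp.ne_zero |>.mp haK.symm
      exact hc ⟨0, by rw [h2, map_zero]⟩
    have hmape0 : algebraMap K Lf e ≠ 0 := by
      rw [_root_.map_ne_zero]
      exact he0
    set ζ := c / algebraMap K Lf e with hζdef
    have hcp0 : c ^ p ≠ 0 := by
      rw [← haK, _root_.map_ne_zero, ← he]
      exact pow_ne_zero _ he0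
    have hζp : ζ ^ p = 1 := by
      rw [hζdef, div_pow, ← map_pow, he, haK, div_self hcp0]
    have hζ1 : ζ ≠ 1 := by
      intro h
      rw [hζdef, div_eq_one_iff_eq hmape0] at h
      exact hc ⟨e, h.symm⟩
    have hord : orderOf ζ = p := by
      have h7 : orderOf ζ ∣ p := orderOf_dvd_of_pow_eq_one hζp
      rcases hp.eq_one_or_self_of_dvd _ h7 with h8 | h8
      · exact absurd (orderOf_eq_one_iff.mp h8) hζ1
      · exact h8
    refine ⟨ζ, hord, ?_⟩
    rintro ⟨u, hu⟩
    refine hc ⟨u * e, ?_⟩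
    rw [map_mul, hu, hζdef, div_mul_cancel₀ c hmape0]
  · push_neg at hex
    have hirr : Irreducible (X ^ p - C aK) := X_pow_sub_C_irreducible_of_prime hp hex
    have hmon : (X ^ p - C aK).Monic := monic_X_pow_sub_C _ hp.ne_zero
    have haev : (aeval c) (X ^ p - C aK) = 0 := by
      rw [map_sub, aeval_X_pow, aeval_C, haK, sub_self]
    have hminc : minpoly K c = X ^ p - C aK :=
      (minpoly.eq_of_irreducible_of_monic hirr haev hmon).symm
    have hdegc : (minpoly K c).natDegree = p := by rw [hminc, natDegree_X_pow_sub_C]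
    have hint : IsIntegral K c := IsIntegral.of_finite K c
    have hfr : Module.finrank K K⟮c⟯ * Module.finrank K⟮c⟯ Lf = q := by
      rw [Module.finrank_mul_finrank, hdeg]
    have hpq2 : p ∣ q := by
      rw [← hdegc, ← IntermediateField.adjoin.finrank hint]
      exact Dvd.intro _ hfr
    exact absurd ((Nat.prime_dvd_prime_iff_eq hp hq).mp hpq2) hpq

end Final

end Stmt6Aux


/-- Let `l` be a prime and `K` a field of characteristic `l`. Let `L ⊇ K` be a field
extension of prime degree `q`. Let `p₁ ≠ p₂` be primes distinct from `l` and `q`, with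
`v_q(ord_{p₁}(l)) ≠ v_q(ord_{p₂}(l))`. If `θ ∈ L` satisfies `θ^{p₁·p₂} ∈ K`, then
`θ^{p₁} ∈ K` or `θ^{p₂} ∈ K`. -/
theorem stmt_6 {K L : Type*} [Field K] [Field L] [Algebra K L]
    (l q p₁ p₂ : ℕ) (hl : l.Prime) [CharP K l]
    (hq : q.Prime) (hp₁ : p₁.Prime) (hp₂ : p₂.Prime) (hpp : p₁ ≠ p₂)
    (hp₁l : p₁ ≠ l) (hp₂l : p₂ ≠ l) (hp₁q : p₁ ≠ q) (hp₂q : p₂ ≠ q)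
    (hdeg : Module.finrank K L = q)
    (hval : padicValNat q (orderOf ((l : ZMod p₁))) ≠
      padicValNat q (orderOf ((l : ZMod p₂))))
    (θ : L) (hθ : θ ^ (p₁ * p₂) ∈ Set.range (algebraMap K L)) :
    θ ^ p₁ ∈ Set.range (algebraMap K L) ∨ θ ^ p₂ ∈ Set.range (algebraMap K L) := by
  classical
  haveI : CharP L l := charP_of_injective_algebraMap (algebraMap K L).injective l
  haveI : ExpChar L l := ExpChar.prime hl
  by_contra hcon
  push_neg at hcon
  obtain ⟨hc1, hc2⟩ := hcon
  have hz2 : ∃ ζ : L, orderOf ζ = p₂ ∧ ζ ∉ Set.range (algebraMap K L) := by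
    apply Stmt6Aux.exists_zeta hq hp₂ hp₂q hdeg hc1
    rw [← pow_mul]
    exact hθ
  have hz1 : ∃ ζ : L, orderOf ζ = p₁ ∧ ζ ∉ Set.range (algebraMap K L) := by
    apply Stmt6Aux.exists_zeta hq hp₁ hp₁q hdeg hc2
    rw [← pow_mul, mul_comm p₂ p₁]
    exact hθ
  obtain ⟨ζ₁, ho1, hn1⟩ := hz1
  obtain ⟨ζ₂, ho2, hn2⟩ := hz2
  obtain ⟨t₁, ht₁0, hd₁, hsub₁, hcard₁, hmax₁⟩ :=
    Stmt6Aux.key hl hq hp₁ hp₁l hp₁q hdeg ζ₁ ho1 hn1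
  obtain ⟨t₂, ht₂0, hd₂, hsub₂, hcard₂, hmax₂⟩ :=
    Stmt6Aux.key hl hq hp₂ hp₂l hp₂q hdeg ζ₂ ho2 hn2
  rcases lt_or_gt_of_ne hval with h | h
  · exact Stmt6Aux.final hl hq hd₁ hd₂ ht₁0 ht₂0 h hsub₂ hcard₂ hmax₁
  · exact Stmt6Aux.final hl hq hd₂ hd₁ ht₂0 ht₁0 h hsub₁ hcard₁ hmax₂
end

section
/- Let l be a prime number and let K be a field of characteristic l. Let q be a prime number and let D be a central division algebra of degree q over K, i.e., a division ring equipped with a K-algebra structure such that dim_K D = q² and the center of D equals the image of K. Let u ∈ D and let n be a positive integer such that u^n lies in the image of K in D. Let p₁ ≠ p₂ be two different prime numbers dividing n, both distinct from l and from q, such that v_q(ord_{p₁}(l)) ≠ v_q(ord_{p₂}(l)). Then u^{n/p₁} lies in the image of K in D, or u^{n/p₂} lies in the image of K in D. -/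
open Polynomial

/-- `l^a - 1 ∣ l^b - 1 ↔ a ∣ b` for `l ≥ 2`, `a ≥ 1`. -/
lemma aux_pow_sub_one_dvd_iff {l : ℕ} (hl : 2 ≤ l) (a b : ℕ) (ha : 0 < a) :
    l ^ a - 1 ∣ l ^ b - 1 ↔ a ∣ b := by
  constructor
  · intro h
    set r := b % a with hr
    have hb : b = a * (b / a) + r := (Nat.div_add_mod b a).symm
    have hdvd1 : l ^ a - 1 ∣ l ^ (a * (b / a)) - 1 := by
      rw [pow_mul]
      simpa using Nat.sub_dvd_pow_sub_pow (l ^ a) 1 (b / a)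
    have hdvd2 : l ^ a - 1 ∣ l ^ b - l ^ r := by
      have : l ^ b - l ^ r = l ^ r * (l ^ (a * (b / a)) - 1) := by
        rw [Nat.mul_sub, mul_one, ← pow_add]
        congr 1
        rw [add_comm]
        exact congrArg (l ^ ·) hb
      rw [this]
      exact Dvd.dvd.mul_left hdvd1 _
    have hle1 : 1 ≤ l ^ r := Nat.one_le_pow _ _ (by omega)
    have hle2 : l ^ r ≤ l ^ b := Nat.pow_le_pow_right (by omega) (Nat.mod_le b a)
    have heq : (l ^ b - 1) - (l ^ b - l ^ r) = l ^ r - 1 := by omega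
    have hdvd3 : l ^ a - 1 ∣ l ^ r - 1 := heq ▸ Nat.dvd_sub h hdvd2
    have hrlt : r < a := Nat.mod_lt _ ha
    have hlt : l ^ r - 1 < l ^ a - 1 := by
      have := Nat.pow_lt_pow_right (by omega : 1 < l) hrlt
      omega
    have : l ^ r - 1 = 0 := by
      by_contra hne
      exact absurd (Nat.le_of_dvd (Nat.pos_of_ne_zero hne) hdvd3) (by omega)
    have hr0 : r = 0 := by
      by_contra h0
      have h2 : l ≤ l ^ r := Nat.le_self_pow h0 l
      omega
    exact Nat.dvd_of_mod_eq_zero hr0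
  · rintro ⟨c, rfl⟩
    rw [pow_mul]
    simpa using Nat.sub_dvd_pow_sub_pow (l ^ a) 1 c

/-- If `z` is fixed by `x ↦ x^N` then it is fixed by `x ↦ x^(N^c)`. -/
lemma aux_pow_pow_fix {E : Type*} [Monoid E] {z : E} {N : ℕ} (h : z ^ N = z) (c : ℕ) :
    z ^ N ^ c = z := by
  induction c with
  | zero => simpa using rfl
  | succ c ih => rw [pow_succ, pow_mul, ih, h]

lemma aux_pow_fix_of_dvd {E : Type*} [Monoid E] {z : E} {l a e : ℕ} (h : z ^ l ^ a = z)
    (hae : a ∣ e) : z ^ l ^ e = z := by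
  obtain ⟨c, rfl⟩ := hae
  rw [pow_mul]
  exact aux_pow_pow_fix h c

/-- Downward closure: if `K` has an element of order `l^a - 1` and `b ∣ a`, it has one of order
`l^b - 1`. -/
lemma aux_Qdown {K : Type*} [Monoid K] {l a b : ℕ} (hl : 2 ≤ l) (ha : 0 < a) (hba : b ∣ a)
    (h : ∃ y : K, orderOf y = l ^ a - 1) : ∃ y : K, orderOf y = l ^ b - 1 := by
  obtain ⟨y, hy⟩ := h
  have hb : 0 < b := by
    rcases Nat.eq_zero_or_pos b with h0 | h0
    · subst h0; exact absurd hba (by simpa using (by omega : ¬ a = 0))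
    · exact h0
  have hdvd : l ^ b - 1 ∣ l ^ a - 1 := (aux_pow_sub_one_dvd_iff hl b a hb).mpr hba
  have hne : l ^ a - 1 ≠ 0 := by
    have := Nat.one_lt_pow (by omega : a ≠ 0) (by omega : 1 < l)
    omega
  have hbpos : 0 < l ^ b - 1 := by
    have := Nat.one_lt_pow (by omega : b ≠ 0) (by omega : 1 < l)
    omega
  have hqpos : 0 < (l ^ a - 1) / (l ^ b - 1) :=
    Nat.div_pos (Nat.le_of_dvd (by omega) hdvd) hbpos
  refine ⟨y ^ ((l ^ a - 1) / (l ^ b - 1)), ?_⟩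
  rw [orderOf_pow' y (by omega), hy]
  have hd : (l ^ a - 1) / (l ^ b - 1) ∣ l ^ a - 1 := Nat.div_dvd_of_dvd hdvd
  rw [Nat.gcd_eq_right hd]
  exact Nat.div_div_self hdvd hne

/-- Transfer of minpoly degree along a compatible homomorphism of base fields. -/
lemma aux_minpoly_natDegree_le {K₁ K₂ E : Type*} [Field K₁] [Field K₂] [Ring E] [IsDomain E]
    [Algebra K₁ E] [Algebra K₂ E] (φ : K₁ →+* K₂)
    (hcomp : (algebraMap K₂ E).comp φ = algebraMap K₁ E)
    (θ : E) (hint : IsIntegral K₁ θ) :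
    (minpoly K₂ θ).natDegree ≤ (minpoly K₁ θ).natDegree := by
  have hmonic : ((minpoly K₁ θ).map φ).Monic := (minpoly.monic hint).map φ
  have haev : Polynomial.aeval θ ((minpoly K₁ θ).map φ) = 0 := by
    rw [Polynomial.aeval_def, Polynomial.eval₂_map, hcomp, ← Polynomial.aeval_def,
      minpoly.aeval]
  have hle := minpoly.min K₂ θ hmonic haev
  have := Polynomial.natDegree_le_natDegree hle
  rwa [Polynomial.natDegree_map] at this

section DivisionAlgebra

variable {K D : Type*} [Field K] [DivisionRing D] [Algebra K D]

/-- In a central division algebra of prime degree `q`, every element outside the center has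
minimal polynomial of degree exactly `q`. -/
lemma aux_deg_eq_q {q : ℕ} (hq : q.Prime)
    (hdim : Module.finrank K D = q ^ 2)
    (hcenter : (Subring.center D : Set D) = Set.range (algebraMap K D))
    (z : D) (hz : z ∉ Set.range (algebraMap K D)) :
    (minpoly K z).natDegree = q := by
  have hfd : FiniteDimensional K D := FiniteDimensional.of_finrank_pos
    (by rw [hdim]; exact pow_pos hq.pos 2)
  have hint : IsIntegral K z := IsIntegral.of_finite K z
  have hf0 : minpoly K z ≠ 0 := minpoly.ne_zero hint
  haveI : Fact (Irreducible (minpoly K z)) := ⟨minpoly.irreducible hint⟩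
  set f := minpoly K z with hfdef
  have hker : ∀ g ∈ Ideal.span {f}, (Polynomial.aeval z).toRingHom g = 0 := by
    intro g hg
    rcases Ideal.mem_span_singleton.mp hg with ⟨c, rfl⟩
    show Polynomial.aeval z (f * c) = 0
    rw [map_mul, minpoly.aeval, zero_mul]
  let π : AdjoinRoot f →+* D :=
    Ideal.Quotient.lift (Ideal.span {f}) (Polynomial.aeval z).toRingHom hker
  have hπmk : ∀ g : K[X], π (AdjoinRoot.mk f g) = Polynomial.aeval z g := fun g =>
    Ideal.Quotient.lift_mk _ _ _
  have hπalg : ∀ k : K, π (algebraMap K (AdjoinRoot f) k) = algebraMap K D k := by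
    intro k
    rw [AdjoinRoot.algebraMap_eq]
    show π (AdjoinRoot.mk f (Polynomial.C k)) = _
    rw [hπmk, Polynomial.aeval_C]
  letI : Module (AdjoinRoot f) D := Module.compHom D π
  have hsmul : ∀ (g : AdjoinRoot f) (d : D), g • d = π g * d := fun _ _ => rfl
  letI : IsScalarTower K (AdjoinRoot f) D := ⟨fun k g d => by
    rw [hsmul, hsmul, Algebra.smul_def k g, map_mul, hπalg, Algebra.smul_def k,
      mul_assoc]⟩
  have hrank : Module.finrank K (AdjoinRoot f) = f.natDegree := by
    rw [(AdjoinRoot.powerBasis hf0).finrank]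
    rfl
  have hmul : f.natDegree * Module.finrank (AdjoinRoot f) D = q ^ 2 := by
    rw [← hrank, Module.finrank_mul_finrank, hdim]
  have hdvd : f.natDegree ∣ q ^ 2 := ⟨_, hmul.symm⟩
  obtain ⟨i, hi, hieq⟩ := (Nat.dvd_prime_pow hq).mp hdvd
  interval_cases i
  · exfalso
    apply hz
    rw [pow_zero] at hieq
    have := minpoly.natDegree_eq_one_iff.mp hieq
    rcases this with ⟨y, hy⟩
    exact ⟨y, hy⟩
  · rw [hieq, pow_one]
  · exfalso
    have hq2 : 0 < q ^ 2 := pow_pos hq.pos 2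
    have h1 : Module.finrank (AdjoinRoot f) D = 1 := by
      apply Nat.eq_of_mul_eq_mul_left hq2
      rw [mul_one]
      rw [hieq] at hmul
      exact hmul
    haveI : FiniteDimensional (AdjoinRoot f) D :=
      FiniteDimensional.of_finrank_pos (by omega)
    have hspan : Submodule.span (AdjoinRoot f) {(1 : D)} = ⊤ :=
      (finrank_eq_one_iff_of_nonzero (1 : D) one_ne_zero).mp h1
    have hsurj : Function.Surjective π := by
      intro d
      have hd : d ∈ Submodule.span (AdjoinRoot f) {(1 : D)} := by
        rw [hspan]; exact Submodule.mem_top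
      rcases Submodule.mem_span_singleton.mp hd with ⟨g, hg⟩
      exact ⟨g, by rw [← hg, hsmul, mul_one]⟩
    apply hz
    rw [← hcenter]
    apply SetLike.mem_coe.mpr
    apply Subring.mem_center_iff.mpr
    intro g
    obtain ⟨g₁, rfl⟩ := hsurj g
    obtain ⟨g₂, hg₂⟩ := hsurj z
    rw [← hg₂, ← map_mul, ← map_mul, mul_comm]

/-- Construction of a noncentral `p`-th root of unity from a noncentral element whose `p`-th
power is central. -/
lemma aux_exists_zeta {q p : ℕ} (hq : q.Prime) (hp : p.Prime) (hpq : p ≠ q)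
    (hdim : Module.finrank K D = q ^ 2)
    (hcenter : (Subring.center D : Set D) = Set.range (algebraMap K D))
    (x : D) (hx : x ∉ Set.range (algebraMap K D)) {a₀ : K}
    (hxa : x ^ p = algebraMap K D a₀) :
    ∃ ζ : D, ζ ^ p = 1 ∧ ζ ∉ Set.range (algebraMap K D) ∧ (minpoly K ζ).natDegree = q := by
  have hfd : FiniteDimensional K D := FiniteDimensional.of_finrank_pos
    (by rw [hdim]; exact pow_pos hq.pos 2)
  have hx0 : x ≠ 0 := by
    intro h; exact hx ⟨0, by rw [map_zero, h]⟩
  have ha0 : a₀ ≠ 0 := by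
    intro h
    apply hx0
    have hxp0 : x ^ p = 0 := by rw [hxa, h, map_zero]
    exact (pow_eq_zero_iff hp.pos.ne').mp hxp0
  have hint : IsIntegral K x := IsIntegral.of_finite K x
  set f := minpoly K x with hfdef
  have hdeg : f.natDegree = q := aux_deg_eq_q hq hdim hcenter x hx
  have hdvdf : f ∣ (X ^ p - C a₀ : K[X]) := by
    apply minpoly.dvd
    rw [map_sub, map_pow, Polynomial.aeval_X, Polynomial.aeval_C, hxa, sub_self]
  have key : ((-1 : K) ^ q * f.coeff 0) ^ p = a₀ ^ q := by
    set L := f.SplittingField with hLdef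
    have hsp : Polynomial.Splits (f.map (algebraMap K L)) := Polynomial.SplittingField.splits f
    have hmonic : f.Monic := minpoly.monic hint
    have hmm : (f.map (algebraMap K L)).Monic := hmonic.map _
    have hcard : (f.map (algebraMap K L)).roots.card = q := by
      rw [← hsp.natDegree_eq_card_roots, Polynomial.natDegree_map, hdeg]
    have hroots : ∀ r ∈ (f.map (algebraMap K L)).roots, r ^ p = algebraMap K L a₀ := by
      intro r hr
      have hr' : Polynomial.eval r (f.map (algebraMap K L)) = 0 :=
        Polynomial.isRoot_of_mem_roots hr
      obtain ⟨c, hc⟩ := hdvdf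
      have h2 : Polynomial.eval r (((X : K[X]) ^ p - C a₀).map (algebraMap K L)) = 0 := by
        rw [hc, Polynomial.map_mul, Polynomial.eval_mul, hr', zero_mul]
      rw [Polynomial.map_sub, Polynomial.map_pow, Polynomial.map_X, Polynomial.map_C,
        Polynomial.eval_sub, Polynomial.eval_pow, Polynomial.eval_X, Polynomial.eval_C,
        sub_eq_zero] at h2
      exact h2
    have hprod : (f.map (algebraMap K L)).coeff 0 =
        (-1 : L) ^ q * (f.map (algebraMap K L)).roots.prod := by
      have h3 := hsp.coeff_zero_eq_prod_roots_of_monic hmm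
      rw [h3, Polynomial.natDegree_map, hdeg]
    have hprodp : (f.map (algebraMap K L)).roots.prod ^ p = algebraMap K L (a₀ ^ q) := by
      have h4 : ((f.map (algebraMap K L)).roots.map (fun r => r ^ p)).prod =
          (f.map (algebraMap K L)).roots.prod ^ p := by
        have := Multiset.prod_map_pow (m := (f.map (algebraMap K L)).roots)
          (f := fun r : L => r) (n := p)
        simpa using this
      rw [← h4]
      have h5 : ((f.map (algebraMap K L)).roots.map (fun r => r ^ p)) =
          Multiset.replicate q (algebraMap K L a₀) := by
        apply Multiset.eq_replicate.mpr
        refine ⟨by rw [Multiset.card_map, hcard], ?_⟩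
        intro b hb
        obtain ⟨r, hr, rfl⟩ := Multiset.mem_map.mp hb
        exact hroots r hr
      rw [h5, Multiset.prod_replicate, ← map_pow]
    have h1 : (algebraMap K L) (((-1 : K) ^ q * f.coeff 0) ^ p) = (algebraMap K L) (a₀ ^ q) := by
      rw [map_pow, map_mul, map_pow, map_neg, map_one, ← Polynomial.coeff_map, hprod,
        ← mul_assoc, ← mul_pow, neg_mul_neg, one_mul, one_pow, one_mul, hprodp]
    exact (algebraMap K L).injective h1
  set c := (-1 : K) ^ q * f.coeff 0 with hcdef
  have hc0 : c ≠ 0 := by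
    intro h
    apply ha0
    have h6 : a₀ ^ q = 0 := by rw [← key, h, zero_pow hp.pos.ne']
    exact (pow_eq_zero_iff hq.pos.ne').mp h6
  set ζ := algebraMap K D c * (x ^ q)⁻¹ with hζdef
  have hxq0 : x ^ q ≠ 0 := pow_ne_zero _ hx0
  have hxpq : x ^ (q * p) = algebraMap K D (a₀ ^ q) := by
    rw [mul_comm, pow_mul, hxa, ← map_pow]
  have hζp : ζ ^ p = 1 := by
    have hcomm : Commute (algebraMap K D c) ((x ^ q)⁻¹) := Algebra.commutes c _
    rw [hζdef, hcomm.mul_pow, ← map_pow, key, inv_pow, ← pow_mul, hxpq, ← map_inv₀,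
      ← map_mul, mul_inv_cancel₀ (pow_ne_zero q ha0), map_one]
  have hζ0 : ζ ≠ 0 := by
    intro h
    have h7 : (1 : D) = 0 := by rw [← hζp, h, zero_pow hp.pos.ne']
    exact one_ne_zero h7
  have hζmul : ζ * x ^ q = algebraMap K D c := by
    rw [hζdef, mul_assoc, inv_mul_cancel₀ hxq0, mul_one]
  have hζr : ζ ∉ Set.range (algebraMap K D) := by
    rintro ⟨w, hw⟩
    have hw0 : w ≠ 0 := by intro h; apply hζ0; rw [← hw, h, map_zero]
    have hwD : algebraMap K D w ≠ 0 := fun h0 =>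
      hw0 ((algebraMap K D).injective (by rw [h0, map_zero]))
    have hxqr : x ^ q = algebraMap K D (w⁻¹ * c) := by
      have h8 : algebraMap K D w * x ^ q = algebraMap K D c := by rw [hw]; exact hζmul
      calc x ^ q = (algebraMap K D w)⁻¹ * (algebraMap K D w * x ^ q) := by
            rw [← mul_assoc, inv_mul_cancel₀ hwD, one_mul]
        _ = algebraMap K D (w⁻¹ * c) := by
            rw [h8, map_mul (algebraMap K D) w⁻¹ c, map_inv₀]
    have hcop : Nat.Coprime p q := (Nat.coprime_primes hp hq).mpr hpq
    have hbez : (p : ℤ) * Nat.gcdA p q + (q : ℤ) * Nat.gcdB p q = 1 := by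
      have h9 := Nat.gcd_eq_gcd_ab p q
      rw [hcop] at h9
      exact_mod_cast h9.symm
    apply hx
    refine ⟨a₀ ^ (Nat.gcdA p q) * (w⁻¹ * c) ^ (Nat.gcdB p q), ?_⟩
    calc algebraMap K D (a₀ ^ Nat.gcdA p q * (w⁻¹ * c) ^ Nat.gcdB p q)
        = (x ^ p) ^ Nat.gcdA p q * (x ^ q) ^ Nat.gcdB p q := by
          rw [map_mul, map_zpow₀, map_zpow₀, hxa, hxqr]
      _ = x ^ ((p : ℤ) * Nat.gcdA p q) * x ^ ((q : ℤ) * Nat.gcdB p q) := by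
          rw [zpow_mul, zpow_mul, zpow_natCast, zpow_natCast]
      _ = x ^ ((p : ℤ) * Nat.gcdA p q + (q : ℤ) * Nat.gcdB p q) := (zpow_add₀ hx0 _ _).symm
      _ = x := by rw [hbez, zpow_one]
  exact ⟨ζ, hζp, hζr, aux_deg_eq_q hq hdim hcenter ζ hζr⟩

end DivisionAlgebra

set_option maxHeartbeats 2000000 in
set_option synthInstance.maxHeartbeats 1000000 in
/-- The key finite-field-theoretic lemma. -/
lemma aux_finite_side {K : Type*} [Field K] {l q p : ℕ} (hl : l.Prime) [CharP K l]
    (hq : q.Prime) (hp : p.Prime) (hpl : p ≠ l)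
    {E : Type*} [Field E] [Algebra K E] (θ : E) (hθ : orderOf θ = p)
    (hdeg : (minpoly K θ).natDegree = q) :
    0 < padicValNat q (orderOf ((l : ZMod p))) ∧
    (∃ y : K, orderOf y = l ^ q ^ (padicValNat q (orderOf ((l : ZMod p))) - 1) - 1) ∧
    ¬(∃ y : K, orderOf y = l ^ q ^ (padicValNat q (orderOf ((l : ZMod p)))) - 1) := by
  classical
  haveI : Fact p.Prime := ⟨hp⟩
  haveI : Fact q.Prime := ⟨hq⟩
  haveI : CharP E l := charP_of_injective_algebraMap (algebraMap K E).injective l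
  haveI : ExpChar E l := ExpChar.prime hl
  have hl2 : 2 ≤ l := hl.two_le
  set e := orderOf ((l : ZMod p)) with hedef
  have hlp0 : (l : ZMod p) ≠ 0 := by
    intro h0
    have hpd : p ∣ l := (ZMod.natCast_eq_zero_iff l p).mp h0
    exact hpl ((Nat.prime_dvd_prime_iff_eq hp hl).mp hpd)
  have hfin : IsOfFinOrder ((l : ZMod p)) := by
    apply isOfFinOrder_iff_pow_eq_one.mpr
    exact ⟨p - 1, by have := hp.two_le; omega, ZMod.pow_card_sub_one_eq_one hlp0⟩
  have he : 0 < e := hfin.orderOf_pos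
  have hdvd_iff : ∀ d : ℕ, (p ∣ l ^ d - 1 ↔ e ∣ d) := by
    intro d
    have h1 : ((l : ZMod p)) ^ d = (((l ^ d - 1 : ℕ) : ZMod p)) + 1 := by
      have hle : 1 ≤ l ^ d := Nat.one_le_pow _ _ (by omega)
      have h2 : ((l ^ d : ℕ) : ZMod p) = (((l ^ d - 1 : ℕ) : ZMod p)) + 1 := by
        conv_lhs => rw [show l ^ d = (l ^ d - 1) + 1 by omega]
        rw [Nat.cast_add, Nat.cast_one]
      rw [← h2]
      push_cast
      ring
    rw [hedef, orderOf_dvd_iff_pow_eq_one, h1, add_eq_right,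
      ZMod.natCast_eq_zero_iff]
  have hθp : θ ^ p = 1 := by rw [← hθ]; exact pow_orderOf_eq_one θ
  have hθ0 : θ ≠ 0 := by
    intro h0
    rw [h0, zero_pow hp.pos.ne'] at hθp
    exact zero_ne_one hθp
  have hfix : ∀ z : E, z ^ p = 1 → z ^ l ^ e = z := by
    intro z hz
    obtain ⟨m, hm⟩ := (hdvd_iff e).mpr dvd_rfl
    have h2 : l ^ e = p * m + 1 := by
      have : 1 ≤ l ^ e := Nat.one_le_pow _ _ (by omega)
      omega
    rw [h2, pow_succ, pow_mul, hz, one_pow, one_mul]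
  have hθe : θ ^ l ^ e = θ := hfix θ hθp
  -- subfields
  set Se : Subfield E := RingHom.eqLocusField (iterateFrobenius E l e) (RingHom.id E)
    with hSedef
  have hmemSe : ∀ z : E, z ∈ Se ↔ z ^ l ^ e = z := by
    intro z
    constructor
    · intro hz
      have : iterateFrobenius E l e z = RingHom.id E z := hz
      rwa [iterateFrobenius_def, RingHom.id_apply] at this
    · intro hz
      show iterateFrobenius E l e z = RingHom.id E z
      rwa [iterateFrobenius_def, RingHom.id_apply]
  set Kf : Subfield E := (algebraMap K E).fieldRange with hKfdef
  set k : Subfield E := Kf ⊓ Se with hkdef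
  -- integrality
  have hintK : IsIntegral K θ := ⟨X ^ p - C 1, monic_X_pow_sub_C 1 hp.pos.ne',
    by show (Polynomial.aeval θ) ((X : K[X]) ^ p - C 1) = 0
       rw [map_sub, map_pow, Polynomial.aeval_X, Polynomial.aeval_C, map_one, hθp, sub_self]⟩
  have hintKf : IsIntegral Kf θ := ⟨X ^ p - C 1, monic_X_pow_sub_C 1 hp.pos.ne',
    by show (Polynomial.aeval θ) ((X : Kf[X]) ^ p - C 1) = 0
       rw [map_sub, map_pow, Polynomial.aeval_X, Polynomial.aeval_C, map_one, hθp, sub_self]⟩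
  have hintk : IsIntegral k θ := ⟨X ^ p - C 1, monic_X_pow_sub_C 1 hp.pos.ne',
    by show (Polynomial.aeval θ) ((X : k[X]) ^ p - C 1) = 0
       rw [map_sub, map_pow, Polynomial.aeval_X, Polynomial.aeval_C, map_one, hθp, sub_self]⟩
  -- transfer K → Kf
  have hdegKf : (minpoly Kf θ).natDegree = q := by
    have hφcomp : (algebraMap Kf E).comp ((algebraMap K E).rangeRestrictField) =
        algebraMap K E :=
      RingHom.ext fun x => RingHom.coe_rangeRestrictField (algebraMap K E) x
    have hsurj : Function.Surjective ((algebraMap K E).rangeRestrictField) := by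
      rintro ⟨y, hy⟩
      obtain ⟨x, hx⟩ := RingHom.mem_fieldRange.mp hy
      exact ⟨x, Subtype.ext (by
        rw [RingHom.coe_rangeRestrictField]
        exact hx)⟩
    have hinj : Function.Injective ((algebraMap K E).rangeRestrictField) :=
      ((algebraMap K E).rangeRestrictField).injective
    set ψe := RingEquiv.ofBijective _ ⟨hinj, hsurj⟩ with hψdef
    have hψcomp : (algebraMap K E).comp (ψe.symm : Kf →+* K) = algebraMap Kf E := by
      apply RingHom.ext
      intro y
      have h1 : (algebraMap K E).rangeRestrictField (ψe.symm y) = y := by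
        have := ψe.apply_symm_apply y
        exact this
      calc (algebraMap K E) (ψe.symm y)
          = ((algebraMap K E).rangeRestrictField (ψe.symm y) : E) :=
            (RingHom.coe_rangeRestrictField (algebraMap K E) _).symm
        _ = (algebraMap Kf E) y := by rw [h1]; rfl
    apply le_antisymm
    · have h2 := aux_minpoly_natDegree_le ((algebraMap K E).rangeRestrictField) hφcomp θ hintK
      rwa [hdeg] at h2
    · have h3 := aux_minpoly_natDegree_le (ψe.symm : Kf →+* K) hψcomp θ hintKf
      rw [hdeg] at h3
      exact h3
  -- the coefficients of (minpoly Kf θ) mapped to E lie in k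
  have hHmonic : ((minpoly Kf θ).map (algebraMap Kf E)).Monic := (minpoly.monic hintKf).map _
  have hcoeffs : ∀ i, ((minpoly Kf θ).map (algebraMap Kf E)).coeff i ∈ k := by
    have hH : ((minpoly Kf θ).map (algebraMap Kf E)) ∣ ((X : E[X]) ^ p - 1) := by
      have h1 : minpoly Kf θ ∣ ((X : Kf[X]) ^ p - C 1) := by
        apply minpoly.dvd
        show (Polynomial.aeval θ) ((X : Kf[X]) ^ p - C 1) = 0
        rw [map_sub, map_pow, Polynomial.aeval_X, Polynomial.aeval_C, map_one, hθp, sub_self]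
      have h2 := Polynomial.map_dvd (algebraMap Kf E) h1
      rwa [Polynomial.map_sub, Polynomial.map_pow, Polynomial.map_X, Polynomial.map_C,
        map_one] at h2
    have hprim : IsPrimitiveRoot θ p := ⟨hθp, fun m hm => hθ ▸ orderOf_dvd_of_pow_eq_one hm⟩
    have hXmon : ((X : E[X]) ^ p - 1).Monic := by
      have := Polynomial.monic_X_pow_sub_C (1 : E) hp.pos.ne'
      rwa [map_one] at this
    have hXsplits : Polynomial.Splits ((X : E[X]) ^ p - 1) := by
      rw [Polynomial.X_pow_sub_one_eq_prod hp.pos hprim]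
      apply Polynomial.Splits.prod
      intro i _
      exact Polynomial.Splits.X_sub_C _
    have hHsplits : Polynomial.Splits ((minpoly Kf θ).map (algebraMap Kf E)) :=
      hXsplits.of_dvd hXmon.ne_zero hH
    have hroots1 : ∀ r ∈ ((minpoly Kf θ).map (algebraMap Kf E)).roots, r ^ l ^ e = r := by
      intro r hr
      apply hfix
      have hr' := Polynomial.isRoot_of_mem_roots hr
      have h3 : Polynomial.eval r ((X : E[X]) ^ p - 1) = 0 :=
        Polynomial.eval_eq_zero_of_dvd_of_eval_eq_zero hH hr'
      rw [Polynomial.eval_sub, Polynomial.eval_pow, Polynomial.eval_X, Polynomial.eval_one,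
        sub_eq_zero] at h3
      exact h3
    have hHfix : ((minpoly Kf θ).map (algebraMap Kf E)).map (iterateFrobenius E l e) =
        (minpoly Kf θ).map (algebraMap Kf E) := by
      conv_lhs => rw [hHsplits.eq_prod_roots_of_monic hHmonic]
      conv_rhs => rw [hHsplits.eq_prod_roots_of_monic hHmonic]
      rw [Polynomial.map_multiset_prod, Multiset.map_map]
      congr 1
      apply Multiset.map_congr rfl
      intro r hr
      rw [Function.comp_apply, Polynomial.map_sub, Polynomial.map_X, Polynomial.map_C,
        iterateFrobenius_def, hroots1 r hr]
    intro i
    rw [hkdef, Subfield.mem_inf]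
    constructor
    · rw [Polynomial.coeff_map]
      exact SetLike.coe_mem _
    · rw [hmemSe]
      have h4 := congrArg (fun P : E[X] => P.coeff i) hHfix
      simp only [Polynomial.coeff_map, iterateFrobenius_def] at h4
      rw [Polynomial.coeff_map]
      exact h4
  -- degree of minpoly over k
  have hdegk : (minpoly k θ).natDegree = q := by
    have hle1 : (minpoly Kf θ).natDegree ≤ (minpoly k θ).natDegree := by
      apply aux_minpoly_natDegree_le (Subfield.inclusion (inf_le_left : k ≤ Kf))
      · exact RingHom.ext fun x => rfl
      · exact hintk
    have hHdeg : ((minpoly Kf θ).map (algebraMap Kf E)).natDegree = q := by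
      rw [Polynomial.natDegree_map, hdegKf]
    have hPcoeff : ∀ j, (∑ i ∈ Finset.range (q + 1),
        Polynomial.C (⟨((minpoly Kf θ).map (algebraMap Kf E)).coeff i, hcoeffs i⟩ : k) *
          (X : k[X]) ^ i).coeff j =
        if j ≤ q then (⟨((minpoly Kf θ).map (algebraMap Kf E)).coeff j, hcoeffs j⟩ : k)
        else 0 := by
      intro j
      rw [Polynomial.finset_sum_coeff]
      simp only [Polynomial.coeff_C_mul, Polynomial.coeff_X_pow]
      by_cases hj : j ≤ q
      · rw [if_pos hj, Finset.sum_eq_single j]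
        · rw [if_pos rfl, mul_one]
        · intro b _ hbj
          rw [if_neg (Ne.symm hbj), mul_zero]
        · intro hjn
          exact absurd (Finset.mem_range.mpr (by omega)) hjn
      · rw [if_neg hj, Finset.sum_eq_zero]
        intro b hb
        have hb' := Finset.mem_range.mp hb
        rw [if_neg (by omega), mul_zero]
    set P : k[X] := ∑ i ∈ Finset.range (q + 1),
      Polynomial.C (⟨((minpoly Kf θ).map (algebraMap Kf E)).coeff i, hcoeffs i⟩ : k) *
        (X : k[X]) ^ i with hPdef
    have hPmap : P.map k.subtype = (minpoly Kf θ).map (algebraMap Kf E) := by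
      apply Polynomial.ext
      intro j
      rw [Polynomial.coeff_map, hPcoeff]
      by_cases hj : j ≤ q
      · rw [if_pos hj]
        rfl
      · rw [if_neg hj, map_zero]
        symm
        apply Polynomial.coeff_eq_zero_of_natDegree_lt
        omega
    have hPdegle : P.natDegree ≤ q := by
      apply Polynomial.natDegree_le_iff_coeff_eq_zero.mpr
      intro N hN
      rw [hPcoeff, if_neg (by omega)]
    have hPmonic : P.Monic := by
      apply Polynomial.monic_of_natDegree_le_of_coeff_eq_one q hPdegle
      rw [hPcoeff, if_pos le_rfl]
      apply Subtype.ext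
      show ((minpoly Kf θ).map (algebraMap Kf E)).coeff q = 1
      have := hHmonic
      rw [Polynomial.Monic, Polynomial.leadingCoeff, hHdeg] at this
      exact this
    have haevP : (Polynomial.aeval θ) P = 0 := by
      rw [Polynomial.aeval_def, ← Polynomial.eval_map]
      have hmapeq : P.map (algebraMap k E) = (minpoly Kf θ).map (algebraMap Kf E) := hPmap
      rw [hmapeq, Polynomial.eval_map, ← Polynomial.aeval_def, minpoly.aeval]
    have hle2 : (minpoly k θ).natDegree ≤ q := by
      have h5 := minpoly.min k θ hPmonic haevP
      have h6 := Polynomial.natDegree_le_natDegree h5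
      omega
    omega
  -- k is finite
  have hP0 : ((X : E[X]) ^ l ^ e - X) ≠ 0 := by
    have hne1 : l ^ e ≠ 1 := by
      have : 2 ≤ l ^ e := le_trans hl2 (Nat.le_self_pow (by omega) l)
      omega
    have hco : ((X : E[X]) ^ l ^ e - X).coeff (l ^ e) = 1 := by
      rw [Polynomial.coeff_sub, Polynomial.coeff_X_pow, if_pos rfl, Polynomial.coeff_X,
        if_neg (by omega), sub_zero]
    intro h0
    rw [h0, Polynomial.coeff_zero] at hco
    exact zero_ne_one hco
  have hSesub : (Se : Set E) ⊆ {z : E | Polynomial.IsRoot ((X : E[X]) ^ l ^ e - X) z} := by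
    intro z hz
    have hz' : z ^ l ^ e = z := (hmemSe z).mp hz
    show Polynomial.eval z ((X : E[X]) ^ l ^ e - X) = 0
    rw [Polynomial.eval_sub, Polynomial.eval_pow, Polynomial.eval_X, hz', sub_self]
  have hSefin : ((Se : Set E)).Finite :=
    Set.Finite.subset (Polynomial.finite_setOf_isRoot hP0) hSesub
  have hSecard : ((Se : Set E)).ncard ≤ l ^ e := by
    have h1 : ((Se : Set E)).ncard ≤
        ({z : E | Polynomial.IsRoot ((X : E[X]) ^ l ^ e - X) z}).ncard :=
      Set.ncard_le_ncard hSesub (Polynomial.finite_setOf_isRoot hP0)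
    have h2 : {z : E | Polynomial.IsRoot ((X : E[X]) ^ l ^ e - X) z} =
        (((X : E[X]) ^ l ^ e - X).roots.toFinset : Set E) := by
      ext z
      simp only [Set.mem_setOf_eq, Finset.coe_sort_coe, Multiset.mem_toFinset,
        Finset.mem_coe, Polynomial.mem_roots, hP0, ne_eq, not_false_iff, true_and]
    have h3 : (((X : E[X]) ^ l ^ e - X).roots.toFinset : Set E).ncard =
        ((X : E[X]) ^ l ^ e - X).roots.toFinset.card := Set.ncard_coe_finset _
    have h4 : ((X : E[X]) ^ l ^ e - X).roots.toFinset.card ≤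
        ((X : E[X]) ^ l ^ e - X).roots.card := Multiset.toFinset_card_le _
    have h5 : ((X : E[X]) ^ l ^ e - X).roots.card ≤
        ((X : E[X]) ^ l ^ e - X).natDegree := Polynomial.card_roots' _
    have h6 : ((X : E[X]) ^ l ^ e - X).natDegree ≤ l ^ e := by
      have h7 := Polynomial.natDegree_sub_le ((X : E[X]) ^ l ^ e) (X : E[X])
      rw [Polynomial.natDegree_X_pow, Polynomial.natDegree_X] at h7
      have : 2 ≤ l ^ e := le_trans hl2 (Nat.le_self_pow (by omega) l)
      omega
    rw [h2, h3] at h1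
    omega
  have hkfin : ((k : Set E)).Finite := by
    apply hSefin.subset
    intro z hz
    exact (Subfield.mem_inf.mp hz).2
  haveI : Finite (k : Set E) := hkfin
  haveI : Finite k := hkfin
  haveI : Fintype k := Fintype.ofFinite _
  haveI : CharP k l := by
    constructor
    intro n
    rw [← CharP.cast_eq_zero_iff E l n]
    constructor
    · intro h
      rw [← map_natCast k.subtype n, h, map_zero]
    · intro h
      apply k.subtype.injective
      rw [map_natCast, h, map_zero]
  obtain ⟨t', hlp', hcardk⟩ := FiniteField.card k l
  set t : ℕ := (t' : ℕ) with htdef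
  have ht : 0 < t := t'.pos
  -- e = t * q
  have hetq : e = t * q := by
    haveI : FiniteDimensional k (IntermediateField.adjoin k {θ}) :=
      IntermediateField.adjoin.finiteDimensional hintk
    have hrank : Module.finrank k (IntermediateField.adjoin k {θ}) = q := by
      rw [IntermediateField.adjoin.finrank hintk, hdegk]
    haveI : Finite (IntermediateField.adjoin k {θ}) :=
      Module.finite_of_finite (R := k) (M := IntermediateField.adjoin k {θ})
    haveI : Fintype (IntermediateField.adjoin k {θ}) := Fintype.ofFinite _
    have hcard' : Fintype.card (IntermediateField.adjoin k {θ}) = l ^ (t * q) := by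
      rw [Module.card_eq_pow_finrank (K := k) (V := (IntermediateField.adjoin k {θ})),
        hcardk, hrank, ← pow_mul]
    have hθmem : θ ∈ IntermediateField.adjoin k {θ} :=
      IntermediateField.mem_adjoin_simple_self k θ
    have hp_dvd : p ∣ l ^ (t * q) - 1 := by
      have hθ'0 : (⟨θ, hθmem⟩ : IntermediateField.adjoin k {θ}) ≠ 0 := by
        intro h0
        exact hθ0 (congrArg Subtype.val h0)
      have h5 := FiniteField.pow_card_sub_one_eq_one _ hθ'0
      rw [hcard'] at h5
      have h6 : θ ^ (l ^ (t * q) - 1) = 1 := by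
        have h7 := congrArg (Subtype.val) h5
        push_cast at h7
        exact h7
      rw [← hθ]
      exact orderOf_dvd_of_pow_eq_one h6
    have he1 : e ∣ t * q := (hdvd_iff _).mp hp_dvd
    have hkSe : ∀ c : k, algebraMap k E c ∈ Se := fun c => (Subfield.mem_inf.mp c.2).2
    have hadj_le : IntermediateField.adjoin k {θ} ≤ Se.toIntermediateField hkSe := by
      apply IntermediateField.adjoin_le_iff.mpr
      intro z hz
      rw [Set.mem_singleton_iff] at hz
      subst hz
      exact (hmemSe z).mpr hθe
    have hsetsub : ((IntermediateField.adjoin k {θ} : IntermediateField k E) : Set E) ⊆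
        (Se : Set E) := fun z hz => hadj_le hz
    have hcard_le : l ^ (t * q) ≤ l ^ e := by
      have h8 : Nat.card (IntermediateField.adjoin k {θ}) = l ^ (t * q) := by
        rw [Nat.card_eq_fintype_card, hcard']
      have h9 : ((IntermediateField.adjoin k {θ} : IntermediateField k E) : Set E).ncard ≤
          ((Se : Set E)).ncard := Set.ncard_le_ncard hsetsub hSefin
      have h10 : Nat.card (IntermediateField.adjoin k {θ}) =
          ((IntermediateField.adjoin k {θ} : IntermediateField k E) : Set E).ncard :=
        Nat.card_coe_set_eq _
      omega
    have h11 : t * q ≤ e := (Nat.pow_le_pow_iff_right (by omega)).mp hcard_le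
    have h12 : e ≤ t * q := Nat.le_of_dvd (Nat.mul_pos ht hq.pos) he1
    omega
  -- conclusion
  have hval : padicValNat q e = padicValNat q t + 1 := by
    rw [hetq, padicValNat.mul (by omega) hq.pos.ne', padicValNat.self hq.one_lt]
  have hQt : ∃ y : K, orderOf y = l ^ t - 1 := by
    obtain ⟨g, hg⟩ := IsCyclic.exists_generator (α := kˣ)
    have hordg : orderOf g = l ^ t - 1 := by
      rw [orderOf_eq_card_of_forall_mem_zpowers hg, Nat.card_units,
        Nat.card_eq_fintype_card, hcardk]
    have hmem : ((g : k) : E) ∈ Kf := (Subfield.mem_inf.mp (SetLike.coe_mem (g : k))).1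
    obtain ⟨y, hy⟩ := RingHom.mem_fieldRange.mp hmem
    refine ⟨y, ?_⟩
    have h1 : orderOf y = orderOf (algebraMap K E y) :=
      (orderOf_injective (algebraMap K E).toMonoidHom (algebraMap K E).injective y).symm
    rw [h1, hy]
    have h2 : orderOf ((g : k) : E) = orderOf (g : k) :=
      orderOf_injective k.subtype.toMonoidHom k.subtype.injective (g : k)
    rw [h2, orderOf_units, hordg]
  refine ⟨by rw [hval]; exact Nat.succ_pos _, ?_, ?_⟩
  · apply aux_Qdown hl2 ht _ hQt
    rw [hval]
    simpa using pow_padicValNat_dvd (p := q) (n := t)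
  · rintro ⟨y, hy⟩
    set v := padicValNat q e with hvdef
    have hqv1 : 1 ≤ q ^ v := Nat.one_le_pow _ _ hq.pos
    have hlqv : 2 ≤ l ^ q ^ v := le_trans hl2 (Nat.le_self_pow (by omega) l)
    have hy0 : y ≠ 0 := by
      intro h0
      rw [h0] at hy
      have hnf : ¬ IsOfFinOrder (0 : K) := by
        intro hf
        obtain ⟨m, hm, hm1⟩ := isOfFinOrder_iff_pow_eq_one.mp hf
        rw [zero_pow (by omega)] at hm1
        exact zero_ne_one hm1
      rw [orderOf_eq_zero hnf] at hy
      omega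
    have hy1 : y ^ l ^ q ^ v = y := by
      have h1 : y ^ (l ^ q ^ v - 1) = 1 := by rw [← hy]; exact pow_orderOf_eq_one y
      have h2 : l ^ q ^ v = (l ^ q ^ v - 1) + 1 := by omega
      rw [h2, pow_succ, h1, one_mul]
    have hqv_dvd : q ^ v ∣ e := pow_padicValNat_dvd
    have hye : y ^ l ^ e = y := aux_pow_fix_of_dvd hy1 hqv_dvd
    have hmemk : algebraMap K E y ∈ k := by
      rw [hkdef, Subfield.mem_inf]
      refine ⟨RingHom.mem_fieldRange.mpr ⟨y, rfl⟩, (hmemSe _).mpr ?_⟩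
      rw [← map_pow, hye]
    have hymap0 : (⟨algebraMap K E y, hmemk⟩ : k) ≠ 0 := by
      intro h0
      apply hy0
      apply (algebraMap K E).injective
      rw [map_zero]
      exact congrArg Subtype.val h0
    have h5 := FiniteField.pow_card_sub_one_eq_one _ hymap0
    rw [hcardk] at h5
    have h6 : (algebraMap K E y) ^ (l ^ t - 1) = 1 := by
      have h7 := congrArg (Subtype.val) h5
      push_cast at h7
      exact h7
    have h7 : y ^ (l ^ t - 1) = 1 := by
      apply (algebraMap K E).injective
      rw [map_pow, map_one]
      exact h6
    have h8 : l ^ q ^ v - 1 ∣ l ^ t - 1 := by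
      rw [← hy]
      exact orderOf_dvd_of_pow_eq_one h7
    have h9 : q ^ v ∣ t := (aux_pow_sub_one_dvd_iff hl2 _ _ (pow_pos hq.pos _)).mp h8
    have h10 : ¬ q ^ (padicValNat q t + 1) ∣ t := pow_succ_padicValNat_not_dvd (by omega)
    rw [← hval] at h10
    exact h10 h9

/-- Let `l` be a prime and `K` a field of characteristic `l`. Let `q` be a prime and `D` a
central division algebra of degree `q` over `K`. Let `u ∈ D` and `n` a positive integer with
`u^n ∈ K`. Let `p₁ ≠ p₂` be primes dividing `n`, distinct from `l` and `q`, with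
`v_q(ord_{p₁}(l)) ≠ v_q(ord_{p₂}(l))`. Then `u^{n/p₁} ∈ K` or `u^{n/p₂} ∈ K`. -/
theorem stmt_7 {K D : Type*} [Field K] [DivisionRing D] [Algebra K D]
    (l q n p₁ p₂ : ℕ) (hl : l.Prime) [CharP K l] (hq : q.Prime)
    (hdim : Module.finrank K D = q ^ 2)
    (hcenter : (Subring.center D : Set D) = Set.range (algebraMap K D))
    (hn : 0 < n)
    (hp₁ : p₁.Prime) (hp₂ : p₂.Prime) (hpp : p₁ ≠ p₂)
    (hd₁ : p₁ ∣ n) (hd₂ : p₂ ∣ n)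
    (hp₁l : p₁ ≠ l) (hp₂l : p₂ ≠ l) (hp₁q : p₁ ≠ q) (hp₂q : p₂ ≠ q)
    (hval : padicValNat q (orderOf ((l : ZMod p₁))) ≠
      padicValNat q (orderOf ((l : ZMod p₂))))
    (u : D) (hu : u ^ n ∈ Set.range (algebraMap K D)) :
    u ^ (n / p₁) ∈ Set.range (algebraMap K D) ∨
      u ^ (n / p₂) ∈ Set.range (algebraMap K D) := by
  by_contra hcon
  push_neg at hcon
  obtain ⟨h₁, h₂⟩ := hcon
  obtain ⟨a₀, ha₀⟩ := hu
  have hfd : FiniteDimensional K D := FiniteDimensional.of_finrank_pos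
    (by rw [hdim]; exact pow_pos hq.pos 2)
  have key : ∀ p' : ℕ, p'.Prime → p' ∣ n → p' ≠ l → p' ≠ q →
      u ^ (n / p') ∉ Set.range (algebraMap K D) →
      0 < padicValNat q (orderOf ((l : ZMod p'))) ∧
      (∃ y : K, orderOf y = l ^ q ^ (padicValNat q (orderOf ((l : ZMod p'))) - 1) - 1) ∧
      ¬(∃ y : K, orderOf y = l ^ q ^ (padicValNat q (orderOf ((l : ZMod p')))) - 1) := by
    intro p' hp' hdvd hp'l hp'q hx
    have hpow : (u ^ (n / p')) ^ p' = algebraMap K D a₀ := by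
      rw [← pow_mul, Nat.div_mul_cancel hdvd, ha₀]
    obtain ⟨ζ, hζp, hζr, hζdeg⟩ := aux_exists_zeta hq hp' hp'q hdim hcenter _ hx hpow
    have hint : IsIntegral K ζ := IsIntegral.of_finite K ζ
    haveI : Fact (Irreducible (minpoly K ζ)) := ⟨minpoly.irreducible hint⟩
    let E := AdjoinRoot (minpoly K ζ)
    let θ : E := AdjoinRoot.root _
    have hminθ : minpoly K θ = minpoly K ζ := by
      rw [show θ = AdjoinRoot.root (minpoly K ζ) from rfl,
        AdjoinRoot.minpoly_root (minpoly.ne_zero hint), (minpoly.monic hint).leadingCoeff,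
        inv_one, map_one, mul_one]
    have hθp : θ ^ p' = 1 := by
      have hdvd1 : minpoly K ζ ∣ (X ^ p' - 1 : K[X]) := by
        apply minpoly.dvd
        simp [hζp]
      have : (Polynomial.aeval θ) (X ^ p' - 1 : K[X]) = 0 := by
        rw [show θ = AdjoinRoot.root (minpoly K ζ) from rfl, AdjoinRoot.aeval_eq,
          AdjoinRoot.mk_eq_zero]
        exact hdvd1
      simpa [sub_eq_zero] using this
    have hθ1 : θ ≠ 1 := by
      intro h1
      have : (minpoly K θ).natDegree = 1 := by
        apply minpoly.natDegree_eq_one_iff.mpr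
        exact ⟨1, by rw [map_one, h1]⟩
      rw [hminθ, hζdeg] at this
      exact hq.one_lt.ne' this
    haveI : Fact p'.Prime := ⟨hp'⟩
    have hordθ : orderOf θ = p' := orderOf_eq_prime hθp hθ1
    exact aux_finite_side hl hq hp' hp'l θ hordθ (by rw [hminθ]; exact hζdeg)
  obtain ⟨hv₁, hQ₁, hnQ₁⟩ := key p₁ hp₁ hd₁ hp₁l hp₁q h₁
  obtain ⟨hv₂, hQ₂, hnQ₂⟩ := key p₂ hp₂ hd₂ hp₂l hp₂q h₂
  rcases lt_or_gt_of_ne hval with h | h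
  · exact hnQ₁ (aux_Qdown hl.two_le (pow_pos hq.pos _)
      (pow_dvd_pow q (by omega)) hQ₂)
  · exact hnQ₂ (aux_Qdown hl.two_le (pow_pos hq.pos _)
      (pow_dvd_pow q (by omega)) hQ₁)
end

section
/- Let l be a prime number and let p be an odd prime number with p ≠ l. Let r = ord_p(l) be the multiplicative order of l modulo p and let s = v_p(l^r − 1). Let n be a positive integer and let F be a finite field with l^n elements. Then for every non-negative integer a, if ζ is a primitive p^{s+a}-th root of unity in a field extension E of F, the degree of the extension F(ζ)/F equals (r·p^a) / gcd(n, r·p^a). -/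
open Polynomial

private lemma zmod_pow_eq_one_iff (M x k : ℕ) (hx : 0 < x) :
    ((x : ZMod M)) ^ k = 1 ↔ M ∣ x ^ k - 1 := by
  have h1 : 1 ≤ x ^ k := Nat.one_le_pow _ _ hx
  have h2 : (x : ZMod M) ^ k = ((x ^ k - 1 : ℕ) : ZMod M) + 1 := by
    have : ((x ^ k : ℕ) : ZMod M) = ((x ^ k - 1 : ℕ) : ZMod M) + 1 := by
      rw [← Nat.cast_one (R := ZMod M), ← Nat.cast_add, Nat.sub_add_cancel h1]
    rw [← this]; push_cast; ring
  rw [h2, add_eq_right, ZMod.natCast_eq_zero_iff]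

/-- Order of `l` mod `p^(s+a)` is `r * p^a`. -/
private lemma order_lift (l p : ℕ) (hl : l.Prime) (hp : p.Prime) (hodd : Odd p) (hpl : p ≠ l)
    (r s : ℕ) (hr : r = orderOf ((l : ZMod p)))
    (hs : s = padicValNat p (l ^ r - 1)) (a : ℕ) :
    orderOf ((l : ZMod (p ^ (s + a)))) = r * p ^ a := by
  haveI : Fact p.Prime := ⟨hp⟩
  have hlpos : 0 < l := hl.pos
  have hpd : ¬ p ∣ l := fun h => hpl ((Nat.prime_dvd_prime_iff_eq hp hl).mp h)
  have hl0 : (l : ZMod p) ≠ 0 := fun h => hpd ((ZMod.natCast_eq_zero_iff l p).mp h)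
  have hp2 : 2 ≤ p := hp.two_le
  have hrd : r ∣ p - 1 := by
    rw [hr]; exact orderOf_dvd_of_pow_eq_one (ZMod.pow_card_sub_one_eq_one hl0)
  have hrpos : 0 < r := by
    rw [hr]
    have : IsOfFinOrder ((l : ZMod p)) :=
      isOfFinOrder_iff_pow_eq_one.mpr ⟨p - 1, by omega, ZMod.pow_card_sub_one_eq_one hl0⟩
    exact this.orderOf_pos
  have hpr : ¬ p ∣ r := by
    intro h
    have := Nat.le_of_dvd hrpos h
    have := Nat.le_of_dvd (by omega) hrd
    omega
  have hcop : Nat.Coprime r p := (Nat.coprime_comm.mp ((hp.coprime_iff_not_dvd).mpr hpr))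
  -- p ∣ l^r - 1
  have hplr1 : p ∣ l ^ r - 1 := by
    rw [← zmod_pow_eq_one_iff p l r hlpos, hr]
    exact pow_orderOf_eq_one _
  have hlr1pos : 0 < l ^ r - 1 := by
    have : 2 ≤ l := hl.two_le
    have : 2 ≤ l ^ r := le_trans this (Nat.le_self_pow hrpos.ne' l)
    omega
  have hplr : ¬ p ∣ l ^ r := fun h => hpd (hp.dvd_of_dvd_pow h)
  have hs1 : 1 ≤ s := by
    rw [hs]
    rcases (padicValNat_dvd_iff 1 (l ^ r - 1)).mp (by simpa using hplr1) with h0 | h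
    · omega
    · exact h
  have hposb : ∀ b : ℕ, 0 < l ^ (r * p ^ b) - 1 := by
    intro b
    have h2 : 2 ≤ l := hl.two_le
    have hb : 0 < r * p ^ b := Nat.mul_pos hrpos (pow_pos hp.pos b)
    have : 2 ≤ l ^ (r * p ^ b) := le_trans h2 (Nat.le_self_pow hb.ne' l)
    omega
  -- LTE: v_p (l ^ (r * p^b) - 1) = s + b
  have hval : ∀ b : ℕ, padicValNat p (l ^ (r * p ^ b) - 1) = s + b := by
    intro b
    have hE := Nat.emultiplicity_pow_sub_pow hp hodd (x := l ^ r) (y := 1)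
      (by simpa using hplr1) hplr (p ^ b)
    rw [one_pow, ← pow_mul] at hE
    have hpos2 := hposb b
    rw [← padicValNat_eq_emultiplicity hpos2.ne', ← padicValNat_eq_emultiplicity hlr1pos.ne',
      emultiplicity_pow_self hp.pos.ne' hp.prime.not_unit b] at hE
    have hE2 : padicValNat p (l ^ (r * p ^ b) - 1) = padicValNat p (l ^ r - 1) + b := by
      exact_mod_cast hE
    rw [hE2, hs]
  apply orderOf_eq_of_pow_and_pow_div_prime (Nat.mul_pos hrpos (pow_pos hp.pos a))
  · rw [zmod_pow_eq_one_iff _ l _ hlpos]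
    exact dvd_trans (pow_dvd_pow p (le_of_eq (hval a).symm)) pow_padicValNat_dvd
  · intro q hq hqd heq
    rw [zmod_pow_eq_one_iff _ l _ hlpos] at heq
    by_cases hqp : q = p
    · subst hqp
      have ha : a ≠ 0 := by
        rintro rfl
        exact hpr (by simpa using hqd)
      obtain ⟨a', rfl⟩ : ∃ a', a = a' + 1 := ⟨a - 1, by omega⟩
      have hdiv : r * q ^ (a' + 1) / q = r * q ^ a' := by
        rw [pow_succ, ← mul_assoc, Nat.mul_div_cancel _ hq.pos]
      rw [hdiv] at heq
      have hle : s + (a' + 1) ≤ padicValNat q (l ^ (r * q ^ a') - 1) := by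
        rcases (padicValNat_dvd_iff (s + (a' + 1)) (l ^ (r * q ^ a') - 1)).mp heq with h0 | h
        · exact absurd h0 (hposb a').ne'
        · exact h
      rw [hval a'] at hle
      omega
    · have hqr : q ∣ r := by
        have hcq : Nat.Coprime q (p ^ a) := ((Nat.coprime_primes hq hp).mpr hqp).pow_right a
        exact hcq.dvd_of_dvd_mul_right hqd
      obtain ⟨c, rfl⟩ := hqr
      have hc : 0 < c := by
        rcases Nat.eq_zero_or_pos c with h | h
        · subst h; simp at hrpos
        · exact h
      have hdiv : q * c * p ^ a / q = c * p ^ a := by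
        rw [mul_assoc, Nat.mul_div_cancel_left _ hq.pos]
      rw [hdiv] at heq
      have hp1 : p ∣ l ^ (c * p ^ a) - 1 :=
        dvd_trans (dvd_pow_self p (by omega : s + a ≠ 0)) heq
      have hone : (l : ZMod p) ^ (c * p ^ a) = 1 := by
        rw [zmod_pow_eq_one_iff p l _ hlpos]; exact hp1
      have hrdvd : q * c ∣ c * p ^ a := by
        rw [hr]; exact orderOf_dvd_of_pow_eq_one hone
      have hfin : q * c ∣ c := (hcop.pow_right a).dvd_of_dvd_mul_right hrdvd
      have := Nat.le_of_dvd hc hfin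
      have hq2 := hq.two_le
      nlinarith

private lemma finrank_adjoin_primitive_root {F E : Type*} [Field F] [Field E] [Algebra F E]
    [Fintype F] (m : ℕ) (hm : 0 < m) (ζ : E) (hζ : IsPrimitiveRoot ζ m) :
    Module.finrank F (IntermediateField.adjoin F {ζ}) =
      orderOf ((Fintype.card F : ZMod m)) := by
  have hq2 : 1 < Fintype.card F := Fintype.one_lt_card
  set q := Fintype.card F with hq
  have hint : IsIntegral F ζ := by
    refine ⟨X ^ m - C 1, Polynomial.monic_X_pow_sub_C 1 hm.ne', ?_⟩
    simp [hζ.pow_eq_one]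
  haveI : FiniteDimensional F (IntermediateField.adjoin F {ζ}) :=
    IntermediateField.adjoin.finiteDimensional hint
  haveI : Finite (IntermediateField.adjoin F {ζ}) := Module.finite_of_finite F
  haveI : Fintype (IntermediateField.adjoin F {ζ}) := Fintype.ofFinite _
  set K := IntermediateField.adjoin F {ζ} with hK
  set d := Module.finrank F K with hd
  have hdpos : 0 < d := Module.finrank_pos
  have hcardK : Fintype.card K = q ^ d := Module.card_eq_pow_finrank
  -- ζ as element of K
  have hζmem : ζ ∈ K := IntermediateField.subset_adjoin F {ζ} rfl
  set ζ' : K := ⟨ζ, hζmem⟩ with hζ'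
  have hζ'prim : IsPrimitiveRoot ζ' m := by
    apply IsPrimitiveRoot.of_map_of_injective (f := algebraMap K E)
    · exact hζ
    · exact (algebraMap K E).injective
  have hζ'ne : ζ' ≠ 0 := by
    intro h
    have := hζ'prim.pow_eq_one
    rw [h] at this
    simp [zero_pow hm.ne'] at this
  -- m ∣ q ^ d - 1
  classical
  have hmdvd : m ∣ q ^ d - 1 := by
    have hu : orderOf (Units.mk0 ζ' hζ'ne) = m := by
      rw [← orderOf_units, Units.val_mk0, ← hζ'prim.eq_orderOf]
    have := orderOf_dvd_card (x := Units.mk0 ζ' hζ'ne)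
    rw [hu, Fintype.card_units, hcardK] at this
    exact this
  have hxd : ((q : ZMod m)) ^ d = 1 := by
    rw [zmod_pow_eq_one_iff m q d (by omega)]
    exact hmdvd
  set e := orderOf ((q : ZMod m)) with he
  have hepos : 0 < e :=
    (isOfFinOrder_iff_pow_eq_one.mpr ⟨d, hdpos, hxd⟩).orderOf_pos
  have hed : e ∣ d := orderOf_dvd_of_pow_eq_one hxd
  -- m ∣ q ^ e - 1 and ζ ^ (q ^ e) = ζ
  have hmqe : m ∣ q ^ e - 1 := by
    rw [← zmod_pow_eq_one_iff m q e (by omega)]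
    exact pow_orderOf_eq_one _
  have hζfix : ζ ^ q ^ e = ζ := by
    have h1 : ζ ^ (q ^ e - 1) = 1 := (hζ.pow_eq_one_iff_dvd _).mpr hmqe
    have h2 : q ^ e = (q ^ e - 1) + 1 := by
      have : 1 ≤ q ^ e := Nat.one_le_pow _ _ (by omega)
      omega
    rw [h2, pow_add, h1, one_mul, pow_one]
  -- characteristic
  set c := ringChar F with hc
  haveI : CharP F c := ringChar.charP F
  have hcp : c.Prime := CharP.char_is_prime F c
  haveI : Fact c.Prime := ⟨hcp⟩
  haveI : CharP E c := charP_of_injective_algebraMap (algebraMap F E).injective c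
  obtain ⟨k, -, hqc⟩ := FiniteField.card F c
  have hqe : q ^ e = c ^ ((k : ℕ) * e) := by rw [hq, hqc, ← pow_mul]
  -- every element of K is fixed by x ↦ x ^ (q ^ e)
  have key : ∀ x ∈ IntermediateField.adjoin F {ζ}, x ^ q ^ e = x := by
    intro x hx
    refine IntermediateField.adjoin_induction F (fun y hy => ?_) (fun y => ?_)
      (fun y z _ _ hy hz => ?_) (fun y _ hy => ?_) (fun y z _ _ hy hz => ?_) hx
    · rw [Set.mem_singleton_iff] at hy; rw [hy]; exact hζfix
    · rw [← map_pow, FiniteField.pow_card_pow]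
    · rw [hqe, add_pow_char_pow, ← hqe, hy, hz]
    · rw [inv_pow, hy]
    · rw [mul_pow, hy, hz]
  -- counting roots of X ^ (q ^ e) - X over K
  have hqe2 : 2 ≤ q ^ e := le_trans hq2 (Nat.le_self_pow hepos.ne' q)
  set P : Polynomial K := X ^ q ^ e - X with hP
  have hPne : P ≠ 0 := by
    intro h
    have h2 : (X : Polynomial K) ^ q ^ e = X := by
      rwa [hP, sub_eq_zero] at h
    have := congrArg natDegree h2
    rw [natDegree_X_pow, natDegree_X] at this
    omega
  have hroot : ∀ x : K, x ∈ P.roots := by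
    intro x
    rw [mem_roots hPne]
    have hx : (x : E) ^ q ^ e = (x : E) := key x x.2
    have hx' : x ^ q ^ e = x := by
      apply (algebraMap K E).injective
      push_cast
      exact hx
    simp [hP, IsRoot, hx']
  have hcard_le : Fintype.card K ≤ q ^ e := by
    calc Fintype.card K = Finset.univ.card (α := K) := rfl
      _ ≤ P.roots.toFinset.card := Finset.card_le_card
            (fun x _ => Multiset.mem_toFinset.mpr (hroot x))
      _ ≤ Multiset.card P.roots := P.roots.toFinset_card_le
      _ ≤ P.natDegree := card_roots' P
      _ ≤ q ^ e := by
          rw [hP]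
          refine le_trans (natDegree_sub_le _ _) ?_
          simp only [natDegree_X_pow, natDegree_X, max_le_iff]
          omega
  have hde : d ≤ e := by
    rw [hcardK] at hcard_le
    exact (Nat.pow_le_pow_iff_right hq2).mp hcard_le
  exact Nat.le_antisymm hde (Nat.le_of_dvd hdpos hed) |>.symm ▸ rfl

/-- Let `l` be a prime and `p` an odd prime with `p ≠ l`. Let `r = ord_p(l)` and
`s = v_p(l^r − 1)`. Let `F` be a finite field with `l^n` elements. Then for every `a ≥ 0`,
if `ζ` is a primitive `p^{s+a}`-th root of unity in a field extension `E` of `F`, then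
`[F(ζ) : F] = (r·p^a) / gcd(n, r·p^a)`. -/
theorem stmt_10 {F E : Type*} [Field F] [Field E] [Algebra F E] [Fintype F]
    (l p : ℕ) (hl : l.Prime) (hp : p.Prime) (hodd : Odd p) (hpl : p ≠ l)
    (r s : ℕ) (hr : r = orderOf ((l : ZMod p)))
    (hs : s = padicValNat p (l ^ r - 1))
    (n : ℕ) (hn : 0 < n) (hF : Fintype.card F = l ^ n)
    (a : ℕ) (ζ : E) (hζ : IsPrimitiveRoot ζ (p ^ (s + a))) :
    Module.finrank F (IntermediateField.adjoin F {ζ}) =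
      (r * p ^ a) / Nat.gcd n (r * p ^ a) := by
  have hm : 0 < p ^ (s + a) := pow_pos hp.pos _
  rw [finrank_adjoin_primitive_root (p ^ (s + a)) hm ζ hζ, hF]
  set m := p ^ (s + a) with hmdef
  haveI : NeZero m := ⟨hm.ne'⟩
  have hco : l.Coprime m :=
    ((Nat.coprime_primes hl hp).mpr (fun h => hpl h.symm)).pow_right _
  set u : (ZMod m)ˣ := ZMod.unitOfCoprime l hco with hu
  have huv : (u : ZMod m) = (l : ZMod m) := ZMod.coe_unitOfCoprime l hco
  have horder_u : orderOf u = r * p ^ a := by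
    rw [← orderOf_units, huv]
    exact order_lift l p hl hp hodd hpl r s hr hs a
  have h1 : ((l ^ n : ℕ) : ZMod m) = ((u ^ n : (ZMod m)ˣ) : ZMod m) := by
    rw [Units.val_pow_eq_pow_val, huv, Nat.cast_pow]
  rw [h1, orderOf_units, orderOf_pow, horder_u, Nat.gcd_comm]
end

section
/- Let l be a prime number and let K be a field of characteristic l that is algebraic over its prime field F_l. Let D be a division ring equipped with a K-algebra structure that is finite-dimensional over K and whose center equals the image of K. Then dim_K D = 1, i.e., D coincides with K. (Equivalently, there is no non-trivial finite-dimensional central division algebra, and hence no non-trivial Severi–Brauer variety, over a field contained in an algebraic closure of F_l.) -/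
open Polynomial Pointwise

set_option maxHeartbeats 1000000


lemma aux_pow_eq_self {D : Type*} [DivisionRing D] (l : ℕ) [Fact l.Prime]
    [Algebra (ZMod l) D] [Algebra.IsIntegral (ZMod l) D] (x : D) :
    ∃ q : ℕ, 1 < q ∧ (∃ n : ℕ, q = l ^ n) ∧ x ^ q = x := by
  set A : Subalgebra (ZMod l) D := Algebra.adjoin (ZMod l) {x} with hAdef
  haveI : Module.Finite (ZMod l) A :=
    Module.Finite.iff_fg.mpr (Algebra.IsIntegral.isIntegral (R := ZMod l) x).fg_adjoin_singleton
  haveI : Finite A := Module.finite_of_finite (ZMod l)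
  haveI : Fintype A := Fintype.ofFinite A
  letI : Field A := (Finite.isDomain_to_isField A).toField
  haveI : CharP A l :=
    charP_of_injective_ringHom (algebraMap (ZMod l) A).injective l
  obtain ⟨n, -, hcard⟩ := FiniteField.card A l
  have hx : x ∈ A := Algebra.subset_adjoin rfl
  have h := FiniteField.pow_card (⟨x, hx⟩ : A)
  refine ⟨Fintype.card A, Fintype.one_lt_card, ⟨n, hcard⟩, ?_⟩
  have := congrArg (Subtype.val) h
  rwa [SubmonoidClass.coe_pow] at this


lemma aux_commute_adjoin {D : Type*} [DivisionRing D] (l : ℕ) [Fact l.Prime] [Algebra (ZMod l) D]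
    (a c : D) (hc : c ∈ (Algebra.adjoin (ZMod l) {a} : Subalgebra (ZMod l) D)) : Commute a c := by
  refine Algebra.adjoin_induction ?_ ?_ ?_ ?_ hc
  · rintro x rfl; exact Commute.refl _
  · intro r
    obtain ⟨n, rfl⟩ := ZMod.natCast_rightInverse.surjective r
    rw [map_natCast]
    exact (Nat.cast_commute n a).symm
  · intro x y _ _ ihx ihy; exact ihx.add_right ihy
  · intro x y _ _ ihx ihy; exact ihx.mul_right ihy

lemma aux_eigen {D : Type*} [DivisionRing D] (l : ℕ) [Fact l.Prime]
    [Algebra (ZMod l) D] [Algebra.IsIntegral (ZMod l) D] (a : D)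
    (ha : a ∉ Subring.center D) :
    ∃ c ∈ (Algebra.adjoin (ZMod l) {a} : Subalgebra (ZMod l) D), c ≠ 0 ∧
      ∃ b : D, b ≠ 0 ∧ a * b - b * a = c * b := by
  set A : Subalgebra (ZMod l) D := Algebra.adjoin (ZMod l) {a} with hAdef
  haveI : Module.Finite (ZMod l) A :=
    Module.Finite.iff_fg.mpr (Algebra.IsIntegral.isIntegral (R := ZMod l) a).fg_adjoin_singleton
  haveI : Finite A := Module.finite_of_finite (ZMod l)
  haveI : Fintype A := Fintype.ofFinite A
  letI : Field A := (Finite.isDomain_to_isField A).toField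
  haveI : CharP A l := charP_of_injective_ringHom (algebraMap (ZMod l) A).injective l
  obtain ⟨n, -, hcard⟩ := FiniteField.card A l
  have haA : a ∈ A := Algebra.subset_adjoin rfl
  have hapow : a ^ Fintype.card A = a := by
    have := congrArg (Subtype.val) (FiniteField.pow_card (⟨a, haA⟩ : A))
    rwa [SubmonoidClass.coe_pow] at this
  set q := Fintype.card A with hq
  -- the A-module structure on D by left multiplication
  letI : Module A D := Module.compHom D (Subalgebra.val A).toRingHom
  have hsmul : ∀ (c : A) (x : D), c • x = (c : D) * x := fun _ _ => rfl
  have hcomm : ∀ c : A, Commute a (c : D) := fun c => aux_commute_adjoin l a c c.2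
  -- left and right multiplication operators, A-linear
  set L : Module.End A D :=
    { toFun := fun x => a * x
      map_add' := fun x y => mul_add a x y
      map_smul' := fun c x => by
        show a * ((c : D) * x) = (c : D) * (a * x)
        simp only [← mul_assoc, (hcomm c).eq] } with hL
  set R : Module.End A D :=
    { toFun := fun x => x * a
      map_add' := fun x y => add_mul x y a
      map_smul' := fun c x => by
        show ((c : D) * x) * a = (c : D) * (x * a)
        simp only [mul_assoc] } with hR
  have hLR : Commute L R := by
    ext x; show a * (x * a) = (a * x) * a; rw [mul_assoc]
  haveI : CharP (Module.End A D) l := Module.charP_end ⟨1, (Submodule.eq_bot_iff _).mpr fun r hr => by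
    have hr' : (r : D) * 1 = 0 := (Ideal.mem_torsionOf_iff (1 : D) r).mp hr
    have : (r : D) = 0 := by simpa using hr'
    exact Subtype.ext this⟩
  haveI : ExpChar (Module.End A D) l := ExpChar.prime Fact.out
  set δ : Module.End A D := L - R with hδ
  have hLpow : ∀ (m : ℕ) (x : D), (L ^ m) x = a ^ m * x := by
    intro m; induction m with
    | zero => intro x; simp
    | succ m ih => intro x; rw [pow_succ, Module.End.mul_apply, ih, hL]; show a^m * (a * x) = _
                   rw [← mul_assoc, ← pow_succ]
  have hRpow : ∀ (m : ℕ) (x : D), (R ^ m) x = x * a ^ m := by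
    intro m; induction m with
    | zero => intro x; simp
    | succ m ih => intro x; rw [pow_succ, Module.End.mul_apply, ih, hR]; show (x * a) * a^m = _
                   rw [mul_assoc, ← pow_succ']
  have hδq : δ ^ q = δ := by
    rw [hδ, hcard, sub_pow_expChar_pow_of_commute l n hLR]
    ext x
    rw [LinearMap.sub_apply, LinearMap.sub_apply, hLpow, hRpow, ← hcard, hq, hapow]
    rfl
  have hδne : δ ≠ 0 := by
    rw [Subring.mem_center_iff] at ha
    push_neg at ha
    obtain ⟨g, hg⟩ := ha
    intro h0
    have : δ g = 0 := by rw [h0]; rfl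
    have : a * g - g * a = 0 := this
    exact hg (by rw [sub_eq_zero] at this; exact this.symm)
  letI : SMulCommClass A A D := ⟨fun c c' x => by
    simp only [hsmul, ← mul_assoc]
    congr 1
    rw [← Subalgebra.coe_mul, ← Subalgebra.coe_mul, mul_comm]⟩
  letI : IsScalarTower A A D := ⟨fun c c' x => by
    simp only [smul_eq_mul, hsmul, Subalgebra.coe_mul, mul_assoc]⟩
  letI : Algebra A (Module.End A D) := @Module.End.instAlgebra A A D _ _ _ _ _
    (by exact ‹SMulCommClass A A D›) _ (by exact ‹IsScalarTower A A D›)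
  -- commutative subalgebra containing δ
  set E' : Subalgebra A (Module.End A D) := Algebra.adjoin A {δ} with hE'
  letI : CommRing E' := Algebra.adjoinCommRingOfComm A (by rintro x rfl y rfl; rfl)
  set δ' : E' := ⟨δ, Algebra.subset_adjoin rfl⟩ with hδ'
  have hδ'q : δ' ^ q = δ' := by
    apply Subtype.ext
    rw [SubmonoidClass.coe_pow]
    exact hδq
  have hq1 : 1 < q := Fintype.one_lt_card
  -- polynomial identity
  have hmonic : (X ^ q - X : A[X]).Monic := by
    refine monic_X_pow_sub (degree_X_le.trans_lt ?_)
    exact_mod_cast hq1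
  have hpoly : ∏ c : A, (X - C c) = (X ^ q - X : A[X]) := by
    have hdeg : (X ^ q - X : A[X]).natDegree = q :=
      FiniteField.X_pow_card_sub_X_natDegree_eq A hq1
    have hroots : (X ^ q - X : A[X]).roots = Finset.univ.val :=
      FiniteField.roots_X_pow_card_sub_X A
    have hcardroots : Multiset.card (X ^ q - X : A[X]).roots = (X ^ q - X : A[X]).natDegree := by
      rw [hroots, hdeg]; exact Finset.card_univ
    have := C_leadingCoeff_mul_prod_multiset_X_sub_C hcardroots
    rw [hmonic.leadingCoeff, map_one, one_mul, hroots] at this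
    rw [← this]
    rfl
  -- evaluate at δ'
  have hprodzero : (∏ c : A, (δ' - algebraMap A E' c)) = 0 := by
    have h0 : aeval δ' (X ^ q - X : A[X]) = 0 := by
      rw [map_sub, aeval_X_pow, aeval_X, hδ'q, sub_self]
    rw [← h0, ← hpoly, map_prod]
    congr 1
    ext c
    rw [map_sub, aeval_X, aeval_C]
  classical
  set P' : E' := ∏ c ∈ Finset.univ.erase (0:A), (δ' - algebraMap A E' c) with hP'
  have hsplit : P' * δ' = 0 := by
    have h := Finset.prod_erase_mul Finset.univ
      (fun c : A => δ' - algebraMap A E' c) (Finset.mem_univ (0:A))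
    rw [hprodzero] at h
    simp only [map_zero, sub_zero] at h
    exact h
  have hPδ : (P' : Module.End A D) * δ = 0 := by
    have h := congrArg (Subtype.val) hsplit
    rwa [MulMemClass.coe_mul, ZeroMemClass.coe_zero] at h
  have hex : ∃ c ∈ Finset.univ.erase (0:A),
      ¬ Function.Injective ⇑((δ' - algebraMap A E' c : E') : Module.End A D) := by
    by_contra hall
    push_neg at hall
    have hinj : Function.Injective ⇑((P' : E') : Module.End A D) := by
      rw [hP']
      refine Finset.prod_induction _
        (fun g : E' => Function.Injective ⇑((g : E') : Module.End A D)) ?_ ?_ hall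
      · intro f g hf hg
        have hco : ⇑((f * g : E') : Module.End A D)
            = ⇑((f : E') : Module.End A D) ∘ ⇑((g : E') : Module.End A D) := rfl
        rw [hco]
        exact hf.comp hg
      · show Function.Injective ⇑((1 : E') : Module.End A D)
        exact Function.injective_id
    apply hδne
    ext x
    have hx : ((P' : E') : Module.End A D) (δ x) = ((P' : E') : Module.End A D) 0 := by
      rw [map_zero]
      have := congrArg (fun (f : Module.End A D) => f x) hPδ
      simpa using this
    simpa using hinj hx
  obtain ⟨c, hcmem, hcninj⟩ := hex
  have hc0 : c ≠ 0 := Finset.ne_of_mem_erase hcmem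
  have hcoe : ((δ' - algebraMap A E' c : E') : Module.End A D)
      = δ - algebraMap A (Module.End A D) c := by
    rw [AddSubgroupClass.coe_sub]
    congr 1
  rw [hcoe, ← LinearMap.ker_eq_bot] at hcninj
  obtain ⟨b, hbker, hbne⟩ := Submodule.ne_bot_iff _ |>.mp hcninj
  refine ⟨(c : D), c.2, fun h => hc0 (Subtype.ext h), b, hbne, ?_⟩
  have : δ b - (c : D) * b = 0 := by
    have := hbker
    rw [LinearMap.mem_ker, LinearMap.sub_apply] at this
    exact this
  have hδb : δ b = a * b - b * a := rfl
  rw [hδb] at this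
  exact sub_eq_zero.mp this


lemma aux_central {D : Type*} [DivisionRing D] (l : ℕ) [Fact l.Prime]
    [Algebra (ZMod l) D] [Algebra.IsIntegral (ZMod l) D] (a : D) :
    a ∈ Subring.center D := by
  by_contra ha
  obtain ⟨c, hcA, hc0, b, hb0, heq⟩ := aux_eigen l a ha
  set A : Subalgebra (ZMod l) D := Algebra.adjoin (ZMod l) {a} with hAdef
  haveI : Module.Finite (ZMod l) A :=
    Module.Finite.iff_fg.mpr (Algebra.IsIntegral.isIntegral (R := ZMod l) a).fg_adjoin_singleton
  haveI : Finite A := Module.finite_of_finite (ZMod l)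
  have hba : b * a = (a - c) * b := by
    rw [sub_mul, eq_sub_iff_add_eq, add_comm]
    exact (sub_eq_iff_eq_add.mp heq).symm
  -- conjugation by b as a ring homomorphism
  set f : D →+* D :=
    { toFun := fun x => b * x * b⁻¹
      map_one' := by
        show b * 1 * b⁻¹ = 1
        rw [mul_one, mul_inv_cancel₀ hb0]
      map_mul' := fun x y => by
        show b * (x * y) * b⁻¹ = (b * x * b⁻¹) * (b * y * b⁻¹)
        simp only [mul_assoc, inv_mul_cancel_left₀ hb0]
      map_zero' := by
        show b * 0 * b⁻¹ = 0
        rw [mul_zero, zero_mul]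
      map_add' := fun x y => by
        show b * (x + y) * b⁻¹ = b * x * b⁻¹ + b * y * b⁻¹
        rw [mul_add, add_mul] } with hf
  have hfdef : ∀ x : D, f x = b * x * b⁻¹ := fun _ => rfl
  have hfa : f a = a - c := by
    rw [hfdef, hba, mul_assoc, mul_inv_cancel₀ hb0, mul_one]
  have hfA : ∀ x ∈ A, f x ∈ A := by
    intro x hx
    refine Algebra.adjoin_induction ?_ ?_ ?_ ?_ hx
    · rintro y rfl
      rw [hfa]
      exact sub_mem (Algebra.subset_adjoin rfl) hcA
    · intro r
      obtain ⟨n, rfl⟩ := ZMod.natCast_rightInverse.surjective r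
      have hcomm : Commute ((algebraMap (ZMod l) D) (n : ZMod l)) b := by
        rw [map_natCast]
        exact Nat.cast_commute n b
      rw [hfdef, ← hcomm.eq, mul_assoc, mul_inv_cancel₀ hb0, mul_one]
      exact Subalgebra.algebraMap_mem A _
    · intro x y _ _ ihx ihy
      rw [map_add]
      exact add_mem ihx ihy
    · intro x y _ _ ihx ihy
      rw [map_mul]
      exact mul_mem ihx ihy
  have hfiter : ∀ (j : ℕ), ∀ x ∈ A, f^[j] x ∈ A := by
    intro j
    induction j with
    | zero => intro x hx; simpa using hx
    | succ j ih =>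
      intro x hx
      rw [Function.iterate_succ_apply]
      exact ih _ (hfA x hx)
  have hfinj : Function.Injective f := by
    intro x y hxy
    rw [hfdef, hfdef] at hxy
    exact mul_left_cancel₀ hb0 (mul_right_cancel₀ (inv_ne_zero hb0) hxy)
  -- pigeonhole: some iterate of f is the identity on A
  obtain ⟨m, hm1, hfm⟩ : ∃ m : ℕ, 1 ≤ m ∧ ∀ x ∈ A, f^[m] x = x := by
    classical
    obtain ⟨i, j, hij, hmapeq⟩ := Finite.exists_ne_map_eq_of_infinite
      (fun k : ℕ => (fun x : A => (⟨f^[k] ↑x, hfiter k ↑x x.2⟩ : A)))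
    rcases hij.lt_or_gt with h | h
    · refine ⟨j - i, by omega, fun x hx => ?_⟩
      have h1 : f^[i] (f^[j - i] x) = f^[i] x := by
        rw [← Function.iterate_add_apply]
        have : i + (j - i) = j := by omega
        rw [this]
        exact (congrArg Subtype.val (congrFun hmapeq.symm ⟨x, hx⟩))
      exact (hfinj.iterate i) h1
    · refine ⟨i - j, by omega, fun x hx => ?_⟩
      have h1 : f^[j] (f^[i - j] x) = f^[j] x := by
        rw [← Function.iterate_add_apply]
        have : j + (i - j) = i := by omega
        rw [this]
        exact (congrArg Subtype.val (congrFun hmapeq ⟨x, hx⟩))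
      exact (hfinj.iterate j) h1
  -- b has finite multiplicative order
  obtain ⟨q', hq'1, -, hbq⟩ := aux_pow_eq_self l b
  have hbe : b ^ (q' - 1) = 1 := by
    have h1 : b ^ (q' - 1) * b = 1 * b := by
      rw [one_mul, ← pow_succ]
      have : q' - 1 + 1 = q' := by omega
      rw [this, hbq]
    exact mul_right_cancel₀ hb0 h1
  set e := q' - 1 with he
  have he1 : 1 ≤ e := by omega
  set N := 2 * Nat.lcm m e with hN
  have hlcm : 0 < Nat.lcm m e := Nat.lcm_pos (by omega) (by omega)
  have hN2 : 2 ≤ N := by omega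
  have hbN : b ^ N = 1 := by
    obtain ⟨t, ht⟩ : e ∣ N := (Nat.dvd_lcm_right m e).trans (Dvd.intro_left 2 rfl)
    rw [ht, pow_mul, hbe, one_pow]
  have hfixiter : ∀ (t : ℕ), ∀ x ∈ A, (f^[m])^[t] x = x := by
    intro t
    induction t with
    | zero => intro x _; rfl
    | succ t ih =>
      intro x hx
      rw [Function.iterate_succ_apply, hfm x hx]
      exact ih x hx
  have hfN : ∀ x ∈ A, f^[N] x = x := by
    obtain ⟨t, ht⟩ : m ∣ N := (Nat.dvd_lcm_left m e).trans (Dvd.intro_left 2 rfl)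
    intro x hx
    rw [ht, Function.iterate_mul]
    exact hfixiter t x hx
  have hbpow : ∀ (j : ℕ) (x : D), b ^ j * x = f^[j] x * b ^ j := by
    intro j
    induction j with
    | zero => intro x; simp
    | succ j ih =>
      intro x
      rw [pow_succ', mul_assoc, ih x, Function.iterate_succ_apply', hfdef,
        mul_assoc, mul_assoc, ← mul_assoc b⁻¹, inv_mul_cancel₀ hb0, one_mul, ← mul_assoc]
  -- the finite set spanning a finite subring containing a and b
  set s : Set D := Set.range (fun p : A × Fin N => (p.1 : D) * b ^ (p.2 : ℕ)) with hs
  have hsfin : s.Finite := Set.finite_range _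
  have hone : (1 : D) ∈ s := ⟨(1, ⟨0, by omega⟩), by simp⟩
  have has : a ∈ s := ⟨(⟨a, Algebra.subset_adjoin rfl⟩, ⟨0, by omega⟩), by simp⟩
  have hbs : b ∈ s := ⟨(1, ⟨1, by omega⟩), by simp⟩
  have hmuls : ∀ x ∈ s, ∀ y ∈ s, x * y ∈ s := by
    rintro _ ⟨⟨c₁, i⟩, rfl⟩ _ ⟨⟨c₂, j⟩, rfl⟩
    refine ⟨(c₁ * ⟨f^[(i : ℕ)] ↑c₂, hfiter (i : ℕ) _ c₂.2⟩,
      ⟨((i : ℕ) + (j : ℕ)) % N, Nat.mod_lt _ (by omega)⟩), ?_⟩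
    show (↑c₁ * f^[(i : ℕ)] ↑c₂) * b ^ (((i : ℕ) + (j : ℕ)) % N)
      = (↑c₁ * b ^ (i : ℕ)) * (↑c₂ * b ^ (j : ℕ))
    have hmod : b ^ (((i : ℕ) + (j : ℕ)) % N) = b ^ ((i : ℕ) + (j : ℕ)) := by
      conv_rhs => rw [← Nat.div_add_mod ((i : ℕ) + (j : ℕ)) N]
      rw [pow_add, pow_mul, hbN, one_pow, one_mul]
    rw [hmod, pow_add, mul_assoc, mul_assoc, ← mul_assoc (b ^ (i : ℕ)), hbpow (i : ℕ) ↑c₂,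
      mul_assoc]
  set T : Submodule (ZMod l) D := Submodule.span (ZMod l) s with hT
  have hss : s * s ⊆ s := by
    rintro z hz
    rw [Set.mem_mul] at hz
    obtain ⟨u, hu, v, hv, rfl⟩ := hz
    exact hmuls u hu v hv
  have hTmul : ∀ x ∈ T, ∀ y ∈ T, x * y ∈ T := by
    intro x hx y hy
    have h1 := Submodule.mul_mem_mul hx hy
    rw [Submodule.span_mul_span] at h1
    exact Submodule.span_mono hss h1
  set SR : Subring D :=
    { carrier := T
      mul_mem' := fun hx hy => hTmul _ hx _ hy
      one_mem' := Submodule.subset_span hone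
      add_mem' := fun hx hy => T.add_mem hx hy
      zero_mem' := T.zero_mem
      neg_mem' := fun hx => T.neg_mem hx } with hSR
  haveI : Module.Finite (ZMod l) T := Module.Finite.span_of_finite _ hsfin
  haveI : Finite T := Module.finite_of_finite (ZMod l)
  haveI : Finite SR := Finite.of_injective
    (fun x : SR => (⟨x.1, x.2⟩ : T)) (fun x y hxy => Subtype.ext (Subtype.ext_iff.mp hxy))
  have hfield := Finite.isDomain_to_isField SR
  have hcommab := hfield.mul_comm
    ⟨a, Submodule.subset_span has⟩ ⟨b, Submodule.subset_span hbs⟩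
  have hab : a * b = b * a := Subtype.ext_iff.mp hcommab
  have : c * b = 0 := by rw [← heq, hab, sub_self]
  exact mul_ne_zero hc0 hb0 this

/-- Let `l` be a prime and `K` a field of characteristic `l` that is algebraic over its prime
field `F_l`. Let `D` be a finite-dimensional central division algebra over `K`. Then
`dim_K D = 1`, i.e., `D` coincides with `K`. -/
theorem stmt_11 {K D : Type*} [Field K] [DivisionRing D] [Algebra K D]
    (l : ℕ) [Fact l.Prime] [CharP K l]
    [Algebra (ZMod l) K] [Algebra.IsAlgebraic (ZMod l) K]
    [FiniteDimensional K D]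
    (hcenter : (Subring.center D : Set D) = Set.range (algebraMap K D)) :
    Module.finrank K D = 1 := by
  letI : Algebra (ZMod l) D := RingHom.toAlgebra'
    ((algebraMap K D).comp (algebraMap (ZMod l) K)) (by
      intro r x
      obtain ⟨n, rfl⟩ := ZMod.natCast_rightInverse.surjective r
      rw [map_natCast]
      exact (Nat.cast_commute n x).eq)
  haveI : IsScalarTower (ZMod l) K D := IsScalarTower.of_algebraMap_eq fun x => rfl
  haveI : Algebra.IsIntegral (ZMod l) K := Algebra.isAlgebraic_iff_isIntegral.mp inferInstance
  haveI : Algebra.IsIntegral K D := Algebra.IsIntegral.of_finite K D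
  haveI : Algebra.IsIntegral (ZMod l) D := Algebra.IsIntegral.trans K
  have hcentral : ∀ x : D, x ∈ Subring.center D := fun x => aux_central l x
  have hbot : (⊥ : Subalgebra K D) = ⊤ := by
    rw [eq_top_iff]
    intro x _
    rw [Algebra.mem_bot]
    have hx2 : x ∈ (Subring.center D : Set D) := hcentral x
    rw [hcenter] at hx2
    exact hx2
  exact Subalgebra.bot_eq_top_iff_finrank_eq_one.mp hbot
end

section
/- Let q and l be two distinct prime numbers and let k be a positive integer. Then the set A_{q,k} of prime numbers p such that p does not divide l and v_q(ord_p(l)) = k is infinite. -/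
open Finset

private lemma geom_nat (a n : ℕ) (ha : 1 ≤ a) :
    (a - 1) * ∑ i ∈ range n, a ^ i = a ^ n - 1 := by
  have h1 : 1 ≤ a ^ n := Nat.one_le_pow _ _ ha
  zify [ha, h1]
  rw [mul_comm]
  exact geom_sum_mul _ _

private lemma key_13 (q l : ℕ) (hq : q.Prime) (hl : l.Prime) (hql : q ≠ l)
    (k : ℕ) (hk : 0 < k) (N : ℕ) :
    ∃ p, N < p ∧ p.Prime ∧ ¬ p ∣ l ∧
      padicValNat q (orderOf ((l : ZMod p))) = k := by
  have hq2 := hq.two_le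
  have hl2 := hl.two_le
  set x := l ^ q ^ k with hxdef
  have hx2 : 2 ≤ x := le_trans hl2 (Nat.le_self_pow (by positivity) l)
  have hxq : q < x := by
    calc q < 2 ^ q := Nat.lt_two_pow_self
    _ ≤ l ^ q := Nat.pow_le_pow_left hl2 q
    _ ≤ l ^ q ^ k := Nat.pow_le_pow_right (by omega) (Nat.le_self_pow (by omega) q)
  obtain ⟨m, hmge, hm⟩ := Nat.exists_infinite_primes (x + N + 1)
  have hmx : x < m := by omega
  have hmN : N < m := by omega
  have hmq : q < m := lt_trans hxq hmx
  set s := q ^ (k - 1) * m with hsdef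
  set a := l ^ s with hadef
  have hax : x ≤ a := by
    apply Nat.pow_le_pow_right (by omega)
    calc q ^ k = q ^ (k - 1) * q := by rw [← pow_succ]; congr 1; omega
    _ ≤ q ^ (k - 1) * m := Nat.mul_le_mul_left _ (le_of_lt hmq)
  set F := ∑ i ∈ range q, a ^ i with hFdef
  set T := ∑ i ∈ range m, x ^ i with hTdef
  have ha1 : 1 ≤ a := by omega
  have haq : a ^ q = x ^ m := by
    rw [hadef, hxdef, ← pow_mul, ← pow_mul, hsdef]
    congr 1
    have : q ^ (k - 1) * q = q ^ k := by rw [← pow_succ]; congr 1; omega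
    calc q ^ (k - 1) * m * q = q ^ (k - 1) * q * m := by ring
    _ = q ^ k * m := by rw [this]
  have hgeomF : (a - 1) * F = a ^ q - 1 := geom_nat a q ha1
  have hgeomT : (x - 1) * T = x ^ m - 1 := geom_nat x m (by omega)
  have hFdvd : F ∣ x ^ m - 1 := by rw [← haq, ← hgeomF]; exact dvd_mul_left _ _
  have hFgt : x - 1 < F := by
    have haF : a ≤ F := by
      have h1 : a ^ 1 ≤ F :=
        Finset.single_le_sum (f := fun i => a ^ i) (fun i _ => by positivity)
          (Finset.mem_range.mpr (by omega))
      simpa using h1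
    omega
  have hmain : ∃ p, p.Prime ∧ p ∣ F ∧ ¬ p ∣ x - 1 := by
    by_contra hcon
    push_neg at hcon
    have hcop : Nat.Coprime F T := by
      by_contra hg
      obtain ⟨r, hr, hrg⟩ := Nat.exists_prime_and_dvd hg
      have hrF : r ∣ F := hrg.trans (Nat.gcd_dvd_left _ _)
      have hrT : r ∣ T := hrg.trans (Nat.gcd_dvd_right _ _)
      have hrx := hcon r hr hrF
      haveI := Fact.mk hr
      have hx1 : ((x : ℕ) : ZMod r) = 1 := by
        have h0 : ((x - 1 : ℕ) : ZMod r) = 0 :=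
          (ZMod.natCast_eq_zero_iff _ _).mpr hrx
        rw [Nat.cast_sub (by omega)] at h0
        rw [sub_eq_zero] at h0
        simpa using h0
      have hTm : ((T : ℕ) : ZMod r) = (m : ZMod r) := by
        rw [hTdef]
        push_cast
        simp [hx1]
      have hm0 : ((m : ℕ) : ZMod r) = 0 := by
        rw [← hTm]
        exact (ZMod.natCast_eq_zero_iff _ _).mpr hrT
      have hrm : r ∣ m := (ZMod.natCast_eq_zero_iff _ _).mp hm0
      have hreq : r = m := (Nat.prime_dvd_prime_iff_eq hr hm).mp hrm
      have : r ≤ x - 1 := Nat.le_of_dvd (by omega) hrx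
      omega
    have hFx : F ∣ x - 1 := by
      apply hcop.dvd_of_dvd_mul_right
      rw [hgeomT]
      exact hFdvd
    have := Nat.le_of_dvd (by omega) hFx
    omega
  obtain ⟨p, hp, hpF, hpx⟩ := hmain
  haveI := Fact.mk hp
  have hspos : 0 < s := by
    rw [hsdef]; exact Nat.mul_pos (pow_pos (by omega) _) (by omega)
  have hL : (l : ZMod p) ≠ 0 := by
    intro h0
    have hFcast : ((F : ℕ) : ZMod p) = 0 := (ZMod.natCast_eq_zero_iff _ _).mpr hpF
    rw [hFdef, hadef] at hFcast
    push_cast at hFcast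
    rw [h0, zero_pow (by omega), zero_geom_sum] at hFcast
    simp only [if_neg (by omega : ¬ q = 0)] at hFcast
    exact one_ne_zero hFcast
  set d := orderOf ((l : ZMod p)) with hddef
  have hpow1 : ((l : ZMod p)) ^ (q ^ k * m) = 1 := by
    have hdvd : p ∣ x ^ m - 1 := hpF.trans hFdvd
    have h0 : ((x ^ m - 1 : ℕ) : ZMod p) = 0 :=
      (ZMod.natCast_eq_zero_iff _ _).mpr hdvd
    rw [Nat.cast_sub (Nat.one_le_pow _ _ (by omega)), sub_eq_zero] at h0
    rw [hxdef] at h0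
    push_cast at h0
    rw [← pow_mul] at h0
    exact h0.symm ▸ h0
  have hd1 : d ∣ q ^ k * m := orderOf_dvd_of_pow_eq_one hpow1
  have hdp : d ∣ p - 1 := ZMod.orderOf_dvd_card_sub_one hL
  have hdlep : d ≤ p - 1 := Nat.le_of_dvd (by have := hp.two_le; omega) hdp
  have hd2 : ¬ d ∣ q ^ (k - 1) * m := by
    intro hds
    have hals : ((l : ZMod p)) ^ s = 1 := by
      rw [hsdef]
      exact orderOf_dvd_iff_pow_eq_one.mp hds
    have hFq : ((F : ℕ) : ZMod p) = (q : ZMod p) := by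
      rw [hFdef, hadef]
      push_cast
      rw [hals]
      simp
    have hq0 : ((q : ℕ) : ZMod p) = 0 := by
      rw [← hFq]
      exact (ZMod.natCast_eq_zero_iff _ _).mpr hpF
    have hpq : p = q :=
      (Nat.prime_dvd_prime_iff_eq hp hq).mp ((ZMod.natCast_eq_zero_iff _ _).mp hq0)
    have hdpos : 0 < d := by
      rcases Nat.eq_zero_or_pos d with h | h
      · exfalso
        rw [h] at hdp
        have := Nat.eq_zero_of_zero_dvd hdp
        have := hp.two_le
        omega
      · exact h
    have hndq : ¬ q ∣ d := by
      intro h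
      have hqd : q ≤ d := Nat.le_of_dvd hdpos h
      have := hp.two_le
      omega
    have hcopdq : Nat.Coprime d (q ^ (k - 1)) :=
      Nat.Coprime.pow_right _ ((hq.coprime_iff_not_dvd.mpr hndq).symm)
    have hdm : d ∣ m := hcopdq.dvd_of_dvd_mul_left hds
    rcases (Nat.dvd_prime hm).mp hdm with hd1' | hdm'
    · have hl1 : (l : ZMod p) = 1 := orderOf_eq_one_iff.mp (by rw [← hddef]; exact hd1')
      have hpl1 : p ∣ l - 1 := by
        have h0 : ((l - 1 : ℕ) : ZMod p) = 0 := by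
          rw [Nat.cast_sub (by omega), Nat.cast_one, hl1, sub_self]
        exact (ZMod.natCast_eq_zero_iff _ _).mp h0
      have hlx : l - 1 ∣ x - 1 := by
        rw [hxdef]
        have h := Nat.sub_dvd_pow_sub_pow l 1 (q ^ k)
        simpa using h
      exact hpx (hpl1.trans hlx)
    · omega
  obtain ⟨u, v, hu, hv, huv⟩ := exists_dvd_and_dvd_of_dvd_mul hd1
  obtain ⟨j, hjk, rfl⟩ := (Nat.dvd_prime_pow hq).mp hu
  rcases (Nat.dvd_prime hm).mp hv with hv1 | hvm
  · exfalso
    rw [hv1, mul_one] at huv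
    have hjeq : j = k := by
      by_contra hne
      exact hd2 (by
        rw [huv]
        exact dvd_mul_of_dvd_left (pow_dvd_pow q (by omega)) m)
    have hdqk : d ∣ q ^ k := by rw [huv, hjeq]
    have hpow : ((l : ZMod p)) ^ (q ^ k) = 1 := by
      rw [hddef] at hdqk
      exact orderOf_dvd_iff_pow_eq_one.mp hdqk
    have hxp : ((x : ℕ) : ZMod p) = 1 := by
      rw [hxdef]; push_cast; exact hpow
    apply hpx
    have h0 : ((x - 1 : ℕ) : ZMod p) = 0 := by
      rw [Nat.cast_sub (by omega), Nat.cast_one, hxp, sub_self]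
    exact (ZMod.natCast_eq_zero_iff _ _).mp h0
  · rw [hvm] at huv
    have hjeq : j = k := by
      by_contra hne
      exact hd2 (by
        rw [huv]
        exact mul_dvd_mul (pow_dvd_pow q (by omega)) dvd_rfl)
    rw [hjeq] at huv
    refine ⟨p, ?_, hp, ?_, ?_⟩
    · have hmd : m ≤ d := by
        calc m ≤ q ^ k * m := Nat.le_mul_of_pos_left m (pow_pos (by omega) _)
        _ = d := huv.symm
      have := hp.two_le
      omega
    · intro hdvd
      exact hL ((ZMod.natCast_eq_zero_iff _ _).mpr hdvd)
    · haveI := Fact.mk hq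
      rw [← hddef, huv, padicValNat.mul (pow_pos (by omega : 0 < q) k).ne' (by omega : m ≠ 0),
        padicValNat.prime_pow,
        padicValNat.eq_zero_of_not_dvd (fun h => by
          have := (Nat.prime_dvd_prime_iff_eq hq hm).mp h
          omega)]
      omega

/-- Let `q ≠ l` be two prime numbers and `k` a positive integer. Then the set `A_{q,k}` of
primes `p` with `p ∤ l` and `v_q(ord_p(l)) = k` is infinite. -/
theorem stmt_13 (q l : ℕ) (hq : q.Prime) (hl : l.Prime) (hql : q ≠ l)
    (k : ℕ) (hk : 0 < k) :
    {p : ℕ | p.Prime ∧ ¬ p ∣ l ∧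
      padicValNat q (orderOf ((l : ZMod p))) = k}.Infinite := by
  apply Set.infinite_of_forall_exists_gt
  intro N
  obtain ⟨p, hNp, hp, hpl, hval⟩ := key_13 q l hq hl hql k hk N
  exact ⟨p, ⟨hp, hpl, hval⟩, hNp⟩
end
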